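/- arXiv:1602.02175 — 5 statements merged into one kernel-verified Lean document; each statement's English description precedes it below -/
import Mathlib

section
/- For all integers 2 ≤ k ≤ n, the number of parking functions of length n whose largest missing value is k equals (n!/k!)·((k+1)^{k-1} − k^{k-1}). -/
open Finset

/-- A parking function of length `n`: an `n`-tuple of positive integers such that
for every `i ∈ {1,…,n}`, at least `i` of the entries are `≤ i`. -/
def IsParkingFunction (n : ℕ) (f : Fin n → ℕ) : Prop :=
  (∀ i, 1 ≤ f i) ∧
  ∀ i : Fin n, (i : ℕ) + 1 ≤ (Finset.univ.filter fun j => f j ≤ (i : ℕ) + 1).card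

lemma pf_pos {n : ℕ} {f : Fin n → ℕ} (hf : IsParkingFunction n f) : ∀ j, 1 ≤ f j :=
  hf.1

lemma filter_full {n : ℕ} (P : Fin n → Prop) [DecidablePred P]
    (h : n ≤ (univ.filter P).card) : ∀ j, P j := by
  intro j
  have hle : (univ.filter P).card ≤ n := by
    simpa using (card_filter_le univ P)
  have heq : (univ.filter P) = univ := by
    apply Finset.eq_univ_of_card
    simp only [Fintype.card_fin]
    omega
  have hj : j ∈ univ.filter P := by rw [heq]; exact mem_univ j
  exact (mem_filter.mp hj).2

lemma pf_iff {n : ℕ} (f : Fin n → ℕ) :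
    IsParkingFunction n f ↔
      ∀ t, t ≤ n → t ≤ (univ.filter fun j => 1 ≤ f j ∧ f j ≤ t).card := by
  constructor
  · rintro ⟨h1, h2⟩ t ht
    rcases Nat.eq_zero_or_pos t with rfl | htpos
    · simp
    have heq : (univ.filter fun j => 1 ≤ f j ∧ f j ≤ t)
        = (univ.filter fun j : Fin n => f j ≤ t) := by
      apply filter_congr; intro j _; simp [h1 j]
    rw [heq]
    have := h2 ⟨t - 1, by omega⟩
    simpa [Nat.sub_add_cancel htpos] using this
  · intro h
    rcases Nat.eq_zero_or_pos n with rfl | hn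
    · exact ⟨fun i => i.elim0, fun i => i.elim0⟩
    have hall : ∀ j, 1 ≤ f j ∧ f j ≤ n := filter_full _ (h n le_rfl)
    refine ⟨fun j => (hall j).1, fun i => ?_⟩
    have h3 := h ((i : ℕ) + 1) (by omega)
    have heq : (univ.filter fun j => 1 ≤ f j ∧ f j ≤ (i : ℕ) + 1)
        = (univ.filter fun j : Fin n => f j ≤ (i : ℕ) + 1) := by
      apply filter_congr; intro j _; simp [(hall j).1]
    rw [heq] at h3
    exact h3

lemma pf_le {n : ℕ} {f : Fin n → ℕ} (hf : IsParkingFunction n f) : ∀ j, f j ≤ n :=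
  fun j => (filter_full _ ((pf_iff f).mp hf n le_rfl) j).2

/-- Cycle lemma. -/
lemma cycle_lemma (p : ℕ) (hp : 0 < p) (S : ℕ → ℤ) (hS : ∀ m, S (m + p) = S m - 1) :
    ∃! d, d < p ∧ ∀ t, 0 < t → t < p → S d ≤ S (d + t) := by
  have hex : ∃ d, d < p ∧ ∀ m < p, S d ≤ S m := by
    obtain ⟨d, hd, hmin⟩ := Finset.exists_min_image (range p) S ⟨0, mem_range.mpr hp⟩
    exact ⟨d, mem_range.mp hd, fun m hm => hmin m (mem_range.mpr hm)⟩
  classical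
  obtain ⟨hdp, hmin⟩ := Nat.find_spec hex
  have hfm : ∀ r, r < Nat.find hex → ¬(r < p ∧ ∀ m < p, S r ≤ S m) :=
    fun r hr => Nat.find_min hex hr
  set d := Nat.find hex with hdd
  clear_value d
  clear hdd
  have hdsat : ∀ t, 0 < t → t < p → S d ≤ S (d + t) := by
    intro t ht htp
    by_cases hc : d + t < p
    · exact hmin _ hc
    · have hr : d + t - p < d := by omega
      have hrp : d + t - p < p := by omega
      have hnot := hfm _ hr
      push_neg at hnot
      obtain ⟨m, hm, hms⟩ := hnot hrp
      have h1 : S d ≤ S m := hmin m hm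
      have h2 : S (d + t) = S (d + t - p) - 1 := by
        have h3 := hS (d + t - p)
        rwa [Nat.sub_add_cancel (le_of_not_gt hc)] at h3
      omega
  have key : ∀ a b : ℕ, a < b → b < p →
      (∀ t, 0 < t → t < p → S a ≤ S (a + t)) →
      (∀ t, 0 < t → t < p → S b ≤ S (b + t)) → False := by
    intro a b hab hbp ha hb
    have h1 : S a ≤ S b := by
      have := ha (b - a) (by omega) (by omega)
      rwa [show a + (b - a) = b by omega] at this
    have h2 : S b ≤ S (a + p) := by
      have := hb (a + p - b) (by omega) (by omega)
      rwa [show b + (a + p - b) = a + p by omega] at this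
    rw [hS a] at h2
    omega
  refine ⟨d, ⟨hdp, hdsat⟩, ?_⟩
  rintro d' ⟨hd'p, hd'⟩
  by_contra hne
  rcases Nat.lt_or_ge d' d with hlt | hge
  · exact key d' d hlt hdp hd' hdsat
  · exact key d d' (by omega) hd'p hdsat hd'

section Pollak
variable (n : ℕ)

/-- number of entries of `a` with value `v`. -/
def Mcnt (a : Fin n → ZMod (n+1)) (v : ℕ) : ℕ := (univ.filter fun j => (a j).val = v).card

/-- partial sums minus `m`. -/
def Ssum (a : Fin n → ZMod (n+1)) (m : ℕ) : ℤ :=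
  (∑ v ∈ range m, Mcnt n a (v % (n+1)) : ℕ) - m

variable (a : Fin n → ZMod (n+1))

lemma sum_Mcnt : ∑ v ∈ range (n+1), Mcnt n a v = n := by
  have h := Finset.card_eq_sum_card_fiberwise
    (f := fun j => (a j).val) (s := univ) (t := range (n+1))
    (fun j _ => mem_range.mpr (ZMod.val_lt _))
  rw [Finset.card_univ, Fintype.card_fin] at h
  exact (Finset.sum_congr rfl fun v _ => rfl).trans h.symm

lemma Ssum_succ (m : ℕ) : Ssum n a (m + 1) = Ssum n a m + Mcnt n a (m % (n+1)) - 1 := by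
  simp only [Ssum, Finset.sum_range_succ]
  push_cast
  ring

lemma Ssum_period (m : ℕ) : Ssum n a (m + (n+1)) = Ssum n a m - 1 := by
  induction m with
  | zero =>
    simp only [Ssum, Nat.zero_add, Finset.range_zero, Finset.sum_empty]
    have h1 : ∑ v ∈ range (n+1), Mcnt n a (v % (n+1)) = ∑ v ∈ range (n+1), Mcnt n a v := by
      apply Finset.sum_congr rfl
      intro v hv
      rw [Nat.mod_eq_of_lt (mem_range.mp hv)]
    rw [h1, sum_Mcnt]
    push_cast
    ring
  | succ m ih =>
    have h1 : m + 1 + (n+1) = (m + (n+1)) + 1 := by omega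
    rw [h1, Ssum_succ, ih, Ssum_succ]
    rw [Nat.add_mod_right m (n+1)]
    ring

lemma Ssum_window (d t : ℕ) :
    (∑ i ∈ range t, (Mcnt n a ((d + i) % (n+1)) : ℤ)) = Ssum n a (d + t) - Ssum n a d + t := by
  induction t with
  | zero => simp
  | succ t ih =>
    rw [Finset.sum_range_succ, ih, show d + (t + 1) = (d + t) + 1 by omega, Ssum_succ]
    push_cast
    ring

lemma count_shift (c : ZMod (n+1)) (t : ℕ) (ht : 1 ≤ t) (htn : t ≤ n) :
    (univ.filter fun j => 1 ≤ (a j + c).val ∧ (a j + c).val ≤ t).card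
      = ∑ w ∈ Icc 1 t, Mcnt n a (((w : ZMod (n+1)) - c).val) := by
  classical
  rw [Finset.card_eq_sum_card_fiberwise
    (f := fun j => (a j + c).val) (t := Icc 1 t)
    (fun j hj => by simpa using (mem_filter.mp hj).2)]
  apply Finset.sum_congr rfl
  intro w hw
  rw [Finset.filter_filter]
  have hiff : ∀ j : Fin n, ((1 ≤ (a j + c).val ∧ (a j + c).val ≤ t) ∧ (a j + c).val = w)
      ↔ (a j).val = (((w : ZMod (n+1)) - c).val) := by
    intro j
    obtain ⟨hw1, hw2⟩ := mem_Icc.mp hw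
    constructor
    · rintro ⟨-, h⟩
      have h2 : a j + c = (w : ZMod (n+1)) := by
        calc a j + c = (((a j + c).val : ℕ) : ZMod (n+1)) := by
              rw [ZMod.natCast_val, ZMod.cast_id]
          _ = (w : ZMod (n+1)) := by rw [h]
      rw [show a j = (w : ZMod (n+1)) - c by rw [← h2]; ring]
    · intro h
      have haj : a j = (w : ZMod (n+1)) - c := by
        have h2 := congrArg (fun x : ℕ => (x : ZMod (n+1))) h
        simpa [ZMod.natCast_val, ZMod.cast_id] using h2
      have hval : (a j + c).val = w := by
        rw [haj, sub_add_cancel, ZMod.val_natCast, Nat.mod_eq_of_lt (by omega)]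
      exact ⟨⟨by omega, by omega⟩, hval⟩
  have : (univ.filter fun j => (1 ≤ (a j + c).val ∧ (a j + c).val ≤ t) ∧ (a j + c).val = w)
      = (univ.filter fun j => (a j).val = (((w : ZMod (n+1)) - c).val)) := by
    apply filter_congr
    intro j _
    simpa using hiff j
  rw [this]
  rfl

lemma pf_shift_iff (d : ℕ) :
    IsParkingFunction n (fun j => (a j + (1 - (d : ZMod (n+1)))).val) ↔
      ∀ t, 0 < t → t < n + 1 → Ssum n a d ≤ Ssum n a (d + t) := by
  rw [pf_iff]
  have key : ∀ t, 1 ≤ t → t ≤ n →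
      ((univ.filter fun j => 1 ≤ (a j + (1 - (d : ZMod (n+1)))).val ∧
          (a j + (1 - (d : ZMod (n+1)))).val ≤ t).card : ℤ)
        = Ssum n a (d + t) - Ssum n a d + t := by
    intro t ht htn
    rw [count_shift n a _ t ht htn]
    rw [← Ssum_window]
    push_cast
    apply Finset.sum_nbij' (i := fun w => w - 1) (j := fun u => u + 1)
    · intro w hw; simp at hw ⊢; omega
    · intro u hu; simp at hu ⊢; omega
    · intro w hw; simp at hw ⊢; omega
    · intro u hu; simp
    · intro w hw
      simp only [mem_Icc] at hw
      congr 2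
      have h3 : ((w : ZMod (n+1))) - (1 - (d : ZMod (n+1)))
          = (((d + (w - 1) : ℕ)) : ZMod (n+1)) := by
        push_cast [Nat.cast_sub hw.1]
        ring
      rw [h3, ZMod.val_natCast]
  constructor
  · intro h t ht htp
    have h1 := h t (by omega)
    have hk := key t (by omega) (by omega)
    omega
  · intro h t htn
    rcases Nat.eq_zero_or_pos t with rfl | htpos
    · simp
    have h1 := h t htpos (by omega)
    have hk := key t (by omega) htn
    omega

lemma exists_unique_shift :
    ∃! c : ZMod (n+1), IsParkingFunction n (fun j => (a j + c).val) := by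
  obtain ⟨d, ⟨hdp, hd⟩, huniq⟩ :=
    cycle_lemma (n+1) (by omega) (Ssum n a) (Ssum_period n a)
  refine ⟨1 - (d : ZMod (n+1)), (pf_shift_iff n a d).mpr hd, ?_⟩
  intro c hc
  have hc' : c = 1 - ((((1 : ZMod (n+1)) - c).val : ℕ) : ZMod (n+1)) := by
    rw [ZMod.natCast_val, ZMod.cast_id]
    ring
  rw [hc'] at hc
  have h1 := (pf_shift_iff n a ((1 - c).val)).mp hc
  have hd'd : ((1 : ZMod (n+1)) - c).val = d := huniq _ ⟨ZMod.val_lt _, h1⟩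
  rw [hc', hd'd]

end Pollak

theorem pf_card_mul (n : ℕ) :
    Nat.card {f : Fin n → ℕ // IsParkingFunction n f} * (n+1) = (n+1)^n := by
  classical
  set PF' := {a : Fin n → ZMod (n+1) // IsParkingFunction n (fun j => (a j).val)} with hPF'
  have hbij : Function.Bijective
      (fun x : PF' × ZMod (n+1) => (fun j => x.1.1 j + x.2 : Fin n → ZMod (n+1))) := by
    constructor
    · rintro ⟨⟨f, hf⟩, c⟩ ⟨⟨f', hf'⟩, c'⟩ h
      simp only at h
      set g : Fin n → ZMod (n+1) := fun j => f j + c with hg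
      have hg' : (fun j => f' j + c') = g := h.symm
      have h1 : IsParkingFunction n (fun j => (g j + (-c)).val) := by
        have : (fun j => (g j + (-c)).val) = fun j => (f j).val := by
          funext j; congr 1; rw [hg]; ring
        rw [this]; exact hf
      have h2 : IsParkingFunction n (fun j => (g j + (-c')).val) := by
        have : (fun j => (g j + (-c')).val) = fun j => (f' j).val := by
          funext j; congr 1; rw [← hg']; ring
        rw [this]; exact hf'
      obtain ⟨c₀, -, huniq⟩ := exists_unique_shift n g
      have hcc : (-c : ZMod (n+1)) = -c' := (huniq _ h1).trans (huniq _ h2).symm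
      have hcc' : c = c' := by
        have := congrArg Neg.neg hcc; simpa using this
      subst hcc'
      have hff : f = f' := by
        funext j
        have h5 := congrFun h j
        exact add_right_cancel h5
      simp [hff]
    · intro g
      obtain ⟨c, hc, -⟩ := exists_unique_shift n g
      refine ⟨⟨⟨fun j => g j + c, hc⟩, -c⟩, ?_⟩
      funext j
      simp
  have e1 : PF' × ZMod (n+1) ≃ (Fin n → ZMod (n+1)) := Equiv.ofBijective _ hbij
  have e2 : PF' ≃ {f : Fin n → ℕ // IsParkingFunction n f} := by
    refine ⟨fun a => ⟨fun j => (a.1 j).val, a.2⟩,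
      fun f => ⟨fun j => ((f.1 j : ℕ) : ZMod (n+1)), ?_⟩, ?_, ?_⟩
    · have hv : (fun j => ((f.1 j : ℕ) : ZMod (n+1)).val) = f.1 := by
        funext j
        exact ZMod.val_cast_of_lt (by have := pf_le f.2 j; omega)
      rw [hv]; exact f.2
    · rintro ⟨a, ha⟩
      apply Subtype.ext
      funext j
      simp [ZMod.natCast_val, ZMod.cast_id]
    · rintro ⟨f, hf⟩
      apply Subtype.ext
      funext j
      exact ZMod.val_cast_of_lt (Nat.lt_succ_of_le (pf_le hf j))
  have h1 : Nat.card (PF' × ZMod (n+1)) = Nat.card (Fin n → ZMod (n+1)) :=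
    Nat.card_congr e1
  rw [Nat.card_prod] at h1
  rw [Nat.card_congr e2] at h1
  have h2 : Nat.card (ZMod (n+1)) = n + 1 := by
    rw [Nat.card_eq_fintype_card, ZMod.card]
  have h3 : Nat.card (Fin n → ZMod (n+1)) = (n+1)^n := by
    rw [Nat.card_eq_fintype_card, Fintype.card_fun, ZMod.card, Fintype.card_fin]
  rw [h2, h3] at h1
  exact h1

theorem card_pf (n : ℕ) (hn : 1 ≤ n) :
    Nat.card {f : Fin n → ℕ // IsParkingFunction n f} = (n+1)^(n-1) := by
  have h := pf_card_mul n
  have h2 : (n+1)^n = (n+1)^(n-1) * (n+1) := by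
    rw [← pow_succ]
    congr 1
    omega
  rw [h2] at h
  exact Nat.eq_of_mul_eq_mul_right (by omega) h

lemma unique_max {k : ℕ} {f : Fin k → ℕ} (hf : IsParkingFunction k f)
    {i i' : Fin k} (hi : f i = k) (hi' : f i' = k) : i = i' := by
  classical
  match k, f, hf, i, i' with
  | 0, f, hf, i, i' => exact i.elim0
  | 1, f, hf, i, i' => omega
  | (m+2), f, hf, i, i' =>
    by_contra hne
    have h := (pf_iff f).mp hf (m+1) (by omega)
    have hsub : (univ.filter fun j => 1 ≤ f j ∧ f j ≤ m+1) ⊆ univ \ {i, i'} := by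
      intro j hj
      simp only [mem_filter, mem_univ, true_and] at hj
      simp only [mem_sdiff, mem_univ, true_and, mem_insert, mem_singleton]
      push_neg
      constructor
      · rintro rfl; omega
      · rintro rfl; omega
    have hcard := Finset.card_le_card hsub
    rw [Finset.card_sdiff_of_subset (by intro x _; exact mem_univ x)] at hcard
    rw [Finset.card_univ, Fintype.card_fin] at hcard
    rw [Finset.card_insert_of_notMem (by simpa using hne), Finset.card_singleton] at hcard
    omega

lemma card_filter_succAbove {k : ℕ} (i₀ : Fin (k+1)) (P : Fin (k+1) → Prop)
    [DecidablePred P] :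
    (univ.filter fun j : Fin k => P (i₀.succAbove j)).card
      = (univ.filter fun j : Fin (k+1) => P j ∧ j ≠ i₀).card := by
  apply Finset.card_bij (i := fun j _ => i₀.succAbove j)
  · intro j hj
    simp only [mem_filter, mem_univ, true_and] at hj ⊢
    exact ⟨hj, Fin.succAbove_ne i₀ j⟩
  · intro j1 _ j2 _ h
    exact Fin.succAbove_right_injective h
  · intro j' hj'
    simp only [mem_filter, mem_univ, true_and] at hj'
    obtain ⟨z, hz⟩ := Fin.exists_succAbove_eq hj'.2
    exact ⟨z, by simp only [mem_filter, mem_univ, true_and]; rw [hz]; exact hj'.1, hz⟩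

lemma pf_delete {k : ℕ} {f : Fin (k+1) → ℕ} (hf : IsParkingFunction (k+1) f)
    {i₀ : Fin (k+1)} (hfi₀ : f i₀ = k+1) :
    IsParkingFunction k (f ∘ i₀.succAbove) := by
  classical
  rw [pf_iff]
  intro t ht
  have h1 := (pf_iff f).mp hf t (by omega)
  have h2 : (univ.filter fun j : Fin k => 1 ≤ (f ∘ i₀.succAbove) j ∧ (f ∘ i₀.succAbove) j ≤ t)
      = (univ.filter fun j : Fin k =>
          (fun j' => 1 ≤ f j' ∧ f j' ≤ t) (i₀.succAbove j)) := rfl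
  rw [h2, card_filter_succAbove i₀ (fun j' => 1 ≤ f j' ∧ f j' ≤ t)]
  have heq : (univ.filter fun j : Fin (k+1) => (1 ≤ f j ∧ f j ≤ t) ∧ j ≠ i₀)
      = (univ.filter fun j : Fin (k+1) => 1 ≤ f j ∧ f j ≤ t) := by
    apply filter_congr
    intro j _
    constructor
    · exact fun h => h.1
    · intro h
      refine ⟨h, fun hji => ?_⟩
      rw [hji, hfi₀] at h
      omega
  rw [heq]
  exact h1

lemma pf_insert {k : ℕ} (i₀ : Fin (k+1)) {g : Fin k → ℕ} (hg : IsParkingFunction k g) :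
    IsParkingFunction (k+1) (i₀.insertNth (k+1) g : Fin (k+1) → ℕ) := by
  classical
  set F : Fin (k+1) → ℕ := i₀.insertNth (k+1) g with hF
  rw [pf_iff]
  intro t ht
  rcases Nat.lt_or_ge t (k+1) with htk | htk
  · have h1 := (pf_iff g).mp hg t (by omega)
    have h2 : (univ.filter fun j : Fin k => 1 ≤ g j ∧ g j ≤ t).card
        = (univ.filter fun j : Fin k =>
            (fun j' => 1 ≤ F j' ∧ F j' ≤ t) (i₀.succAbove j)).card := by
      congr 1
      apply filter_congr
      intro j _
      rw [hF]
      simp only [Fin.insertNth_apply_succAbove]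
    rw [h2, card_filter_succAbove i₀ (fun j' => 1 ≤ F j' ∧ F j' ≤ t)] at h1
    refine h1.trans (Finset.card_le_card ?_)
    intro j hj
    simp only [mem_filter, mem_univ, true_and] at hj ⊢
    exact hj.1
  · have ht' : t = k + 1 := by omega
    subst ht'
    have hu : (univ.filter fun j : Fin (k+1) => 1 ≤ F j ∧ F j ≤ k+1) = univ := by
      apply Finset.eq_univ_of_forall
      intro j
      simp only [mem_filter, mem_univ, true_and]
      rcases eq_or_ne j i₀ with rfl | hne
      · rw [hF, Fin.insertNth_apply_same]; omega
      · obtain ⟨z, hz⟩ := Fin.exists_succAbove_eq hne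
        rw [← hz, hF, Fin.insertNth_apply_succAbove]
        have hle := pf_le hg z
        have hpos := pf_pos hg z
        omega
    rw [hu, Finset.card_univ, Fintype.card_fin]

theorem card_pf_contains (k : ℕ) :
    Nat.card {f : Fin (k+1) → ℕ // IsParkingFunction (k+1) f ∧ ∃ i, f i = k+1}
      = (k+1) * Nat.card {g : Fin k → ℕ // IsParkingFunction k g} := by
  classical
  have huniq : ∀ (f : Fin (k+1) → ℕ), IsParkingFunction (k+1) f → (∃ i, f i = k+1) →
      ∃! i, f i = k+1 := by
    rintro f hf ⟨i, hi⟩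
    exact ⟨i, hi, fun i' hi' => unique_max hf hi' hi⟩
  set Φ : {f : Fin (k+1) → ℕ // IsParkingFunction (k+1) f ∧ ∃ i, f i = k+1}
      → Fin (k+1) × {g : Fin k → ℕ // IsParkingFunction k g} :=
    fun f =>
      (Fintype.choose _ (huniq f.1 f.2.1 f.2.2),
        ⟨f.1 ∘ (Fintype.choose _ (huniq f.1 f.2.1 f.2.2)).succAbove,
          pf_delete f.2.1 (Fintype.choose_spec _ (huniq f.1 f.2.1 f.2.2))⟩) with hΦ
  have hbij : Function.Bijective Φ := by
    constructor
    · rintro ⟨f, hf, hex⟩ ⟨f', hf', hex'⟩ h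
      rw [hΦ] at h
      simp only [Prod.mk.injEq, Subtype.mk.injEq] at h
      obtain ⟨h1, h2⟩ := h
      set i := Fintype.choose _ (huniq f hf hex) with hi
      set i' := Fintype.choose _ (huniq f' hf' hex') with hi'
      have hfi : f i = k+1 := Fintype.choose_spec _ (huniq f hf hex)
      have hfi' : f' i' = k+1 := Fintype.choose_spec _ (huniq f' hf' hex')
      apply Subtype.ext
      simp only
      funext j
      rcases eq_or_ne j i with rfl | hne
      · rw [hfi, h1, hfi']
      · obtain ⟨z, hz⟩ := Fin.exists_succAbove_eq hne
        have := congrFun h2 z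
        simp only [Function.comp] at this
        rw [← hz, this, h1]
    · rintro ⟨i₀, g, hg⟩
      refine ⟨⟨(i₀.insertNth (k+1) g : Fin (k+1) → ℕ), pf_insert i₀ hg,
        ⟨i₀, Fin.insertNth_apply_same i₀ _ _⟩⟩, ?_⟩
      rw [hΦ]
      simp only
      have honly : ∀ j, (i₀.insertNth (k+1) g : Fin (k+1) → ℕ) j = k+1 → j = i₀ := by
        intro j hj
        by_contra hne
        obtain ⟨z, hz⟩ := Fin.exists_succAbove_eq hne
        rw [← hz, Fin.insertNth_apply_succAbove] at hj
        have := pf_le hg z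
        omega
      have hch : Fintype.choose _ (huniq (i₀.insertNth (k+1) g : Fin (k+1) → ℕ)
          (pf_insert i₀ hg) ⟨i₀, Fin.insertNth_apply_same i₀ _ _⟩) = i₀ :=
        honly _ (Fintype.choose_spec
          (fun a => (i₀.insertNth (k+1) g : Fin (k+1) → ℕ) a = k+1) _)
      refine Prod.ext hch (Subtype.ext ?_)
      simp only
      rw [hch]
      funext j
      simp only [Function.comp, Fin.insertNth_apply_succAbove]
  rw [Nat.card_congr (Equiv.ofBijective Φ hbij), Nat.card_prod,
    Nat.card_eq_fintype_card (α := Fin (k+1)), Fintype.card_fin]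

lemma pf_sub_finite (k : ℕ) (Q : (Fin k → ℕ) → Prop) :
    Finite {f : Fin k → ℕ // IsParkingFunction k f ∧ Q f} := by
  apply Finite.of_injective
    (fun f : {f : Fin k → ℕ // IsParkingFunction k f ∧ Q f} =>
      (fun j => (⟨f.1 j, Nat.lt_succ_of_le (pf_le f.2.1 j)⟩ : Fin (k+1))))
  intro f f' h
  apply Subtype.ext
  funext j
  have := congrFun h j
  simpa [Fin.mk.injEq] using this

lemma pf_finite (k : ℕ) : Finite {f : Fin k → ℕ // IsParkingFunction k f} := by
  have := pf_sub_finite k (fun _ => True)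
  exact Finite.of_injective
    (fun f : {f : Fin k → ℕ // IsParkingFunction k f} =>
      (⟨f.1, f.2, trivial⟩ : {f : Fin k → ℕ // IsParkingFunction k f ∧ True}))
    (by intro f f' h
        have h2 := congrArg
          (fun x : {f : Fin k → ℕ // IsParkingFunction k f ∧ True} => x.1) h
        exact Subtype.ext h2)

lemma card_split (k : ℕ) (Q : (Fin k → ℕ) → Prop) :
    Nat.card {f : Fin k → ℕ // IsParkingFunction k f}
      = Nat.card {f : Fin k → ℕ // IsParkingFunction k f ∧ Q f}
        + Nat.card {f : Fin k → ℕ // IsParkingFunction k f ∧ ¬ Q f} := by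
  classical
  have e : {f : Fin k → ℕ // IsParkingFunction k f}
      ≃ {f : Fin k → ℕ // IsParkingFunction k f ∧ Q f}
        ⊕ {f : Fin k → ℕ // IsParkingFunction k f ∧ ¬ Q f} := by
    refine
      { toFun := fun f => if h : Q f.1 then Sum.inl ⟨f.1, f.2, h⟩ else Sum.inr ⟨f.1, f.2, h⟩
        invFun := fun x => Sum.elim (fun f => ⟨f.1, f.2.1⟩) (fun f => ⟨f.1, f.2.1⟩) x
        left_inv := ?_
        right_inv := ?_ }
    · intro f
      by_cases h : Q f.1 <;> simp [h]
    · rintro (⟨f, hf, hq⟩ | ⟨f, hf, hq⟩) <;> simp [hq]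
  rw [Nat.card_congr e]
  have := pf_sub_finite k Q
  have := pf_sub_finite k (fun f => ¬ Q f)
  exact Nat.card_sum

theorem card_pf_avoid (k : ℕ) (hk : 2 ≤ k) :
    Nat.card {f : Fin k → ℕ // IsParkingFunction k f ∧ ∀ i, f i ≠ k}
      = (k+1)^(k-1) - k^(k-1) := by
  obtain ⟨m, rfl⟩ : ∃ m, k = m + 1 := ⟨k - 1, by omega⟩
  have hm : 1 ≤ m := by omega
  have h1 : Nat.card {f : Fin (m+1) → ℕ // IsParkingFunction (m+1) f ∧ ∃ i, f i = m+1}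
      = (m+1)^m := by
    rw [card_pf_contains m, card_pf m hm]
    rw [← pow_succ']
    congr 1
    omega
  have h2 := card_split (m+1) (fun f => ∃ i, f i = m+1)
  have h3 : {f : Fin (m+1) → ℕ // IsParkingFunction (m+1) f ∧ ¬ ∃ i, f i = m+1}
      ≃ {f : Fin (m+1) → ℕ // IsParkingFunction (m+1) f ∧ ∀ i, f i ≠ m+1} := by
    apply Equiv.subtypeEquivRight
    intro f
    simp [not_exists]
  have h4 := Nat.card_congr h3
  have h5 := card_pf (m+1) (Nat.succ_le_succ (Nat.zero_le m))
  clear h3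
  simp only [Nat.add_sub_cancel] at h5 ⊢
  set A := Nat.card {f : Fin (m+1) → ℕ // IsParkingFunction (m+1) f} with hA
  set B := Nat.card {f : Fin (m+1) → ℕ // IsParkingFunction (m+1) f ∧ ∃ i, f i = m+1} with hB
  set C := Nat.card {f : Fin (m+1) → ℕ // IsParkingFunction (m+1) f ∧ ¬ ∃ i, f i = m+1} with hC
  set D := Nat.card {f : Fin (m+1) → ℕ // IsParkingFunction (m+1) f ∧ ∀ i, f i ≠ m+1} with hD
  clear_value A B C D
  clear hA hB hC hD
  omega


/-- `f ∈ PF_{n,k}`: a parking function of length `n` in which the value `k` does not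
occur but each of the values `k+1,…,n` does occur (`k` is the largest missing value). -/
def IsPFnk (n k : ℕ) (f : Fin n → ℕ) : Prop :=
  IsParkingFunction n f ∧ (∀ i, f i ≠ k) ∧ ∀ m, k < m → m ≤ n → ∃ i, f i = m

/-- each value in `(k, n]` occurs exactly once -/
lemma pfnk_unique {n k : ℕ} {f : Fin n → ℕ} (hf : IsPFnk n k f)
    {m : ℕ} (hm1 : k < m) (hm2 : m ≤ n) : ∃! i, f i = m := by
  classical
  obtain ⟨i, hi⟩ := hf.2.2 m hm1 hm2
  refine ⟨i, hi, fun i' hi' => ?_⟩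
  by_contra hne
  have hex : ∀ v : {v // v ∈ Icc (m+1) n}, ∃ j, f j = v.1 := fun v =>
    hf.2.2 v.1 (by have := mem_Icc.mp v.2; omega) (by have := mem_Icc.mp v.2; omega)
  choose W hW using hex
  set s1 : Finset (Fin n) := univ.filter (fun j => 1 ≤ f j ∧ f j ≤ m-1) with hs1
  set s2 : Finset (Fin n) := {i', i} with hs2
  set s3 : Finset (Fin n) := (Icc (m+1) n).attach.image W with hs3
  have hcard1 : m - 1 ≤ s1.card := (pf_iff f).mp hf.1 (m-1) (by omega)
  have hcard2 : s2.card = 2 := by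
    rw [hs2, card_insert_of_notMem (by simpa using hne), card_singleton]
  have hcard3 : s3.card = n - m := by
    rw [hs3, Finset.card_image_of_injOn, Finset.card_attach, Nat.card_Icc]
    · omega
    · intro v _ v' _ hvv
      have h1 : f (W v) = v.1 := hW v
      have h2 : f (W v') = v'.1 := hW v'
      rw [hvv] at h1
      apply Subtype.ext
      exact h1.symm.trans h2
  have hd12 : Disjoint s1 s2 := by
    rw [Finset.disjoint_left]
    intro x hx1 hx2
    rw [hs1, mem_filter] at hx1
    rw [hs2, mem_insert, mem_singleton] at hx2
    rcases hx2 with rfl | rfl <;> omega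
  have hd13 : Disjoint s1 s3 := by
    rw [Finset.disjoint_left]
    intro x hx1 hx3
    rw [hs1, mem_filter] at hx1
    rw [hs3, mem_image] at hx3
    obtain ⟨v, -, hv⟩ := hx3
    have h4 := hW v
    rw [hv] at h4
    have h5 := mem_Icc.mp v.2
    omega
  have hd23 : Disjoint s2 s3 := by
    rw [Finset.disjoint_left]
    intro x hx2 hx3
    rw [hs2, mem_insert, mem_singleton] at hx2
    rw [hs3, mem_image] at hx3
    obtain ⟨v, -, hv⟩ := hx3
    have h5 := hW v
    rw [hv] at h5
    have h6 := mem_Icc.mp v.2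
    rcases hx2 with rfl | rfl <;> omega
  have htot : (s1 ∪ s2 ∪ s3).card = s1.card + s2.card + s3.card := by
    rw [Finset.card_union_of_disjoint, Finset.card_union_of_disjoint hd12]
    rw [Finset.disjoint_union_left]
    exact ⟨hd13, hd23⟩
  have hle : (s1 ∪ s2 ∪ s3).card ≤ n := by
    have := Finset.card_le_card (Finset.subset_univ (s1 ∪ s2 ∪ s3))
    simpa using this
  omega

lemma compl_card {n k : ℕ} (hkn : k ≤ n) (e : Fin (n-k) ↪ Fin n) :
    ((univ.map e)ᶜ : Finset (Fin n)).card = k := by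
  rw [Finset.card_compl, Finset.card_map, Finset.card_univ,
    Fintype.card_fin, Fintype.card_fin]
  omega

lemma card_filter_iso {n k : ℕ} {s : Finset (Fin n)} (hs : s.card = k)
    (P : Fin n → Prop) [DecidablePred P] :
    (univ.filter fun j : Fin k => P ((s.orderIsoOfFin hs j : Fin n))).card
      = (s.filter P).card := by
  apply Finset.card_bij (i := fun j _ => (s.orderIsoOfFin hs j : Fin n))
  · intro j hj
    simp only [mem_filter, mem_univ, true_and] at hj ⊢
    exact ⟨(s.orderIsoOfFin hs j).2, hj⟩
  · intro j1 _ j2 _ h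
    have := Subtype.ext h
    exact (s.orderIsoOfFin hs).injective this
  · intro x hx
    simp only [mem_filter] at hx
    refine ⟨(s.orderIsoOfFin hs).symm ⟨x, hx.1⟩, ?_, ?_⟩
    · simp only [mem_filter, mem_univ, true_and]
      rw [OrderIso.apply_symm_apply]
      exact hx.2
    · rw [OrderIso.apply_symm_apply]

lemma card_filter_emb {α β : Type*} [Fintype α] [Fintype β] [DecidableEq β]
    (e : α ↪ β) (P : β → Prop) [DecidablePred P] :
    (univ.filter fun u => P (e u)).card = ((univ.map e).filter P).card := by
  apply Finset.card_bij (i := fun u _ => e u)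
  · intro u hu
    simp only [mem_filter, mem_univ, true_and, mem_map] at hu ⊢
    exact ⟨⟨u, rfl⟩, hu⟩
  · intro u1 _ u2 _ h
    exact e.injective h
  · intro x hx
    simp only [mem_filter, mem_map] at hx
    obtain ⟨⟨u, -, hu⟩, hP⟩ := hx
    exact ⟨u, by simp only [mem_filter, mem_univ, true_and]; rw [hu]; exact hP, hu⟩

lemma card_filter_val_lt (N c : ℕ) :
    (univ.filter fun u : Fin N => (u : ℕ) < c).card = min N c := by
  rw [← Finset.card_range (min N c)]
  refine Finset.card_bij (fun u _ => (u : ℕ)) ?_ ?_ ?_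
  · intro u hu
    simp only [mem_filter, mem_univ, true_and] at hu
    simp only [mem_range]
    exact lt_min u.2 hu
  · intro u1 _ u2 _ h
    exact Fin.val_injective h
  · intro v hv
    simp only [mem_range, lt_min_iff] at hv
    exact ⟨⟨v, hv.1⟩, by simp [hv.2], rfl⟩

lemma not_compl_ex {n k : ℕ} (e : Fin (n-k) ↪ Fin n) {j : Fin n}
    (h : j ∉ ((univ.map e)ᶜ : Finset (Fin n))) : ∃ t, e t = j := by
  rw [Finset.mem_compl, not_not, Finset.mem_map] at h
  obtain ⟨t, -, ht⟩ := h
  exact ⟨t, ht⟩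

noncomputable def gOf (n k : ℕ) (hkn : k ≤ n) (e : Fin (n-k) ↪ Fin n)
    (f : Fin n → ℕ) : Fin k → ℕ :=
  fun j => f ((((univ.map e)ᶜ : Finset (Fin n)).orderIsoOfFin (compl_card hkn e) j : Fin n))

noncomputable def fOf (n k : ℕ) (hkn : k ≤ n) (e : Fin (n-k) ↪ Fin n)
    (g : Fin k → ℕ) : Fin n → ℕ :=
  fun j => if h : j ∈ ((univ.map e)ᶜ : Finset (Fin n))
    then g ((((univ.map e)ᶜ : Finset (Fin n)).orderIsoOfFin (compl_card hkn e)).symm ⟨j, h⟩)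
    else k + 1 + (Classical.choose (not_compl_ex e h))

lemma fOf_apply_mem {n k : ℕ} (hkn : k ≤ n) (e : Fin (n-k) ↪ Fin n) (g : Fin k → ℕ)
    {j : Fin n} (h : j ∈ ((univ.map e)ᶜ : Finset (Fin n))) :
    fOf n k hkn e g j
      = g ((((univ.map e)ᶜ : Finset (Fin n)).orderIsoOfFin (compl_card hkn e)).symm ⟨j, h⟩) :=
  dif_pos h

lemma fOf_apply_iso {n k : ℕ} (hkn : k ≤ n) (e : Fin (n-k) ↪ Fin n) (g : Fin k → ℕ)
    (j : Fin k) :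
    fOf n k hkn e g ((((univ.map e)ᶜ : Finset (Fin n)).orderIsoOfFin (compl_card hkn e) j : Fin n))
      = g j := by
  set iso := ((univ.map e)ᶜ : Finset (Fin n)).orderIsoOfFin (compl_card hkn e) with hiso
  rw [fOf_apply_mem hkn e g (iso j).2]
  congr 1
  have h1 : (⟨(iso j : Fin n), (iso j).2⟩ : {x // x ∈ ((univ.map e)ᶜ : Finset (Fin n))}) = iso j :=
    Subtype.ext rfl
  rw [h1, OrderIso.symm_apply_apply]

lemma fOf_apply_e {n k : ℕ} (hkn : k ≤ n) (e : Fin (n-k) ↪ Fin n) (g : Fin k → ℕ)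
    (t : Fin (n-k)) : fOf n k hkn e g (e t) = k + 1 + t := by
  have h : e t ∉ ((univ.map e)ᶜ : Finset (Fin n)) := by
    rw [Finset.mem_compl, not_not, Finset.mem_map]
    exact ⟨t, mem_univ t, rfl⟩
  rw [fOf, dif_neg h]
  have hspec := Classical.choose_spec (not_compl_ex e h)
  have : Classical.choose (not_compl_ex e h) = t := e.injective hspec
  rw [this]

lemma gOf_good {n k : ℕ} (hkn : k ≤ n) {f : Fin n → ℕ} (hf : IsPFnk n k f)
    (e : Fin (n-k) ↪ Fin n) (he : ∀ t : Fin (n-k), f (e t) = k + 1 + t) :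
    IsParkingFunction k (gOf n k hkn e f) ∧ ∀ j, gOf n k hkn e f j ≠ k := by
  classical
  constructor
  · rw [pf_iff]
    intro t ht
    have h1 : (univ.filter fun j : Fin k =>
        1 ≤ gOf n k hkn e f j ∧ gOf n k hkn e f j ≤ t).card
        = (((univ.map e)ᶜ : Finset (Fin n)).filter fun x => 1 ≤ f x ∧ f x ≤ t).card :=
      card_filter_iso (compl_card hkn e) (fun x => 1 ≤ f x ∧ f x ≤ t)
    have h2 : (((univ.map e)ᶜ : Finset (Fin n)).filter fun x => 1 ≤ f x ∧ f x ≤ t)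
        = univ.filter fun x => 1 ≤ f x ∧ f x ≤ t := by
      ext x
      simp only [mem_filter, Finset.mem_compl, mem_univ, true_and]
      constructor
      · exact fun h => h.2
      · intro h
        refine ⟨fun hx => ?_, h⟩
        rw [Finset.mem_map] at hx
        obtain ⟨u, -, hu⟩ := hx
        rw [← hu, he u] at h
        omega
    rw [h1, h2]
    exact (pf_iff f).mp hf.1 t (by omega)
  · intro j
    exact hf.2.1 _

lemma fOf_good {n k : ℕ} (hkn : k ≤ n) (e : Fin (n-k) ↪ Fin n) {g : Fin k → ℕ}
    (hg : IsParkingFunction k g) (hgk : ∀ i, g i ≠ k) :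
    IsPFnk n k (fOf n k hkn e g) := by
  classical
  set F := fOf n k hkn e g with hF
  refine ⟨?_, ?_, ?_⟩
  · -- parking function
    rw [pf_iff]
    intro t ht
    have hsplit := Finset.card_filter_add_card_filter_not
      (s := univ.filter fun j => 1 ≤ F j ∧ F j ≤ t)
      (p := fun j => j ∈ ((univ.map e)ᶜ : Finset (Fin n)))
    -- the part inside the complement
    have hA : ((univ.filter fun j => 1 ≤ F j ∧ F j ≤ t).filter
          fun j => j ∈ ((univ.map e)ᶜ : Finset (Fin n))).card
        = (univ.filter fun jk : Fin k => 1 ≤ g jk ∧ g jk ≤ t).card := by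
      have e1 : ((univ.filter fun j => 1 ≤ F j ∧ F j ≤ t).filter
            fun j => j ∈ ((univ.map e)ᶜ : Finset (Fin n)))
          = (((univ.map e)ᶜ : Finset (Fin n)).filter fun j => 1 ≤ F j ∧ F j ≤ t) := by
        ext x
        simp only [mem_filter, mem_univ, true_and]
        tauto
      rw [e1, ← card_filter_iso (compl_card hkn e) (fun x => 1 ≤ F x ∧ F x ≤ t)]
      congr 1
      apply filter_congr
      intro jk _
      rw [hF, fOf_apply_iso hkn e g jk]
    -- the part outside the complement
    have hB : ((univ.filter fun j => 1 ≤ F j ∧ F j ≤ t).filter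
          fun j => ¬ j ∈ ((univ.map e)ᶜ : Finset (Fin n))).card
        = min (n-k) (t-k) := by
      have e1 : ((univ.filter fun j => 1 ≤ F j ∧ F j ≤ t).filter
            fun j => ¬ j ∈ ((univ.map e)ᶜ : Finset (Fin n)))
          = ((univ.map e).filter fun j => 1 ≤ F j ∧ F j ≤ t) := by
        ext x
        simp only [mem_filter, mem_univ, true_and, Finset.mem_compl, not_not]
        tauto
      rw [e1, ← card_filter_emb e (fun x => 1 ≤ F x ∧ F x ≤ t)]
      rw [← card_filter_val_lt (n-k) (t-k)]
      congr 1
      apply filter_congr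
      intro u _
      rw [hF, fOf_apply_e hkn e g u]
      constructor
      · intro h; omega
      · intro h; omega
    rcases le_or_gt t k with htk | htk
    · have h3 := (pf_iff g).mp hg t htk
      omega
    · have h4 : (univ.filter fun jk : Fin k => 1 ≤ g jk ∧ g jk ≤ t) = univ := by
        apply Finset.eq_univ_of_forall
        intro jk
        simp only [mem_filter, mem_univ, true_and]
        have := pf_pos hg jk
        have := pf_le hg jk
        omega
      rw [h4, Finset.card_univ, Fintype.card_fin] at hA
      have h5 : min (n-k) (t-k) = t - k := by omega
      omega
  · -- avoids k
    intro j
    by_cases h : j ∈ ((univ.map e)ᶜ : Finset (Fin n))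
    · rw [hF, fOf_apply_mem hkn e g h]
      exact hgk _
    · obtain ⟨t, rfl⟩ := not_compl_ex e h
      rw [hF, fOf_apply_e hkn e g t]
      omega
  · -- contains all of (k, n]
    intro m hm1 hm2
    refine ⟨e ⟨m - k - 1, by omega⟩, ?_⟩
    rw [hF, fOf_apply_e hkn e g]
    simp only
    omega

theorem card_pfnk_prod (n k : ℕ) (h2 : 2 ≤ k) (hkn : k ≤ n) :
    Nat.card {f : Fin n → ℕ // IsPFnk n k f}
      = Nat.card (Fin (n-k) ↪ Fin n)
        * Nat.card {g : Fin k → ℕ // IsParkingFunction k g ∧ ∀ i, g i ≠ k} := by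
  classical
  have hEuniq : ∀ (f : {f : Fin n → ℕ // IsPFnk n k f}) (t : Fin (n-k)),
      ∃! i, f.1 i = k + 1 + (t : ℕ) := fun f t =>
    pfnk_unique f.2 (by omega) (by have := t.2; omega)
  set E : {f : Fin n → ℕ // IsPFnk n k f} → (Fin (n-k) ↪ Fin n) := fun f =>
    ⟨fun t => Fintype.choose _ (hEuniq f t), by
      intro t t' h
      have h1 : f.1 (Fintype.choose _ (hEuniq f t)) = k + 1 + t :=
        Fintype.choose_spec _ (hEuniq f t)
      have h2 : f.1 (Fintype.choose _ (hEuniq f t')) = k + 1 + t' :=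
        Fintype.choose_spec _ (hEuniq f t')
      have h' : Fintype.choose _ (hEuniq f t) = Fintype.choose _ (hEuniq f t') := h
      rw [h'] at h1
      apply Fin.val_injective
      exact Nat.add_left_cancel (h1.symm.trans h2)⟩ with hE
  have hEspec : ∀ (f : {f : Fin n → ℕ // IsPFnk n k f}) (t : Fin (n-k)),
      f.1 (E f t) = k + 1 + (t : ℕ) := fun f t => Fintype.choose_spec _ (hEuniq f t)
  set Φ : {f : Fin n → ℕ // IsPFnk n k f}
      → (Fin (n-k) ↪ Fin n) × {g : Fin k → ℕ // IsParkingFunction k g ∧ ∀ i, g i ≠ k} :=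
    fun f => (E f, ⟨gOf n k hkn (E f) f.1, gOf_good hkn f.2 (E f) (hEspec f)⟩) with hΦ
  have hbij : Function.Bijective Φ := by
    constructor
    · rintro f f' h
      rw [hΦ] at h
      simp only [Prod.mk.injEq, Subtype.mk.injEq] at h
      obtain ⟨h1, h2⟩ := h
      rw [← h1] at h2
      apply Subtype.ext
      funext j
      by_cases hj : j ∈ ((univ.map (E f))ᶜ : Finset (Fin n))
      · set iso := ((univ.map (E f))ᶜ : Finset (Fin n)).orderIsoOfFin
          (compl_card hkn (E f)) with hiso
        have hval : ∀ (F : {f : Fin n → ℕ // IsPFnk n k f}), (E F = E f) →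
            ∀ (x : Fin n) (hx : x ∈ ((univ.map (E f))ᶜ : Finset (Fin n))),
            gOf n k hkn (E f) F.1 (iso.symm ⟨x, hx⟩) = F.1 x := by
          intro F _ x hx
          rw [gOf]
          congr 1
          have := iso.apply_symm_apply ⟨x, hx⟩
          rw [hiso]
          rw [this]
        have ha := hval f rfl j hj
        have hb := hval f' h1.symm j hj
        rw [← ha, ← hb, h2]
      · obtain ⟨t, ht⟩ := not_compl_ex (E f) hj
        have ha := hEspec f t
        have hb := hEspec f' t
        rw [← h1, ht] at hb
        rw [ht] at ha
        rw [ha, hb]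
    · rintro ⟨e, g, hg, hgk⟩
      refine ⟨⟨fOf n k hkn e g, fOf_good hkn e hg hgk⟩, ?_⟩
      rw [hΦ]
      have hEe : E ⟨fOf n k hkn e g, fOf_good hkn e hg hgk⟩ = e := by
        apply DFunLike.ext
        intro t
        have hu := hEuniq ⟨fOf n k hkn e g, fOf_good hkn e hg hgk⟩ t
        exact hu.unique (hEspec _ t) (fOf_apply_e hkn e g t)
      refine Prod.ext hEe (Subtype.ext ?_)
      simp only
      rw [hEe]
      funext jk
      rw [gOf]
      rw [fOf_apply_iso hkn e g jk]
  rw [Nat.card_congr (Equiv.ofBijective Φ hbij), Nat.card_prod]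

/-- For all integers `2 ≤ k ≤ n`, the number of parking functions of length `n` whose
largest missing value is `k` equals `(n!/k!)·((k+1)^(k-1) − k^(k-1))`. -/
theorem card_PFnk (n k : ℕ) (h2 : 2 ≤ k) (hkn : k ≤ n) :
    Nat.card {f : Fin n → ℕ // IsPFnk n k f} =
      n.factorial / k.factorial * ((k + 1) ^ (k - 1) - k ^ (k - 1)) := by
  rw [card_pfnk_prod n k h2 hkn, card_pf_avoid k h2]
  congr 1
  rw [Nat.card_eq_fintype_card, Fintype.card_embedding_eq, Fintype.card_fin,
    Fintype.card_fin, Nat.descFactorial_eq_div (by omega : n - k ≤ n),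
    show n - (n - k) = k from by omega]
end

section
/- Let n ≥ 2. A noncrossing partition π ∈ NC_{n+1} lies on some maximal chain of NC_{n+1} whose Stanley label sequence omits the value n (equivalently, π is an element of Poset(PF_{n,n})) if and only if neither of the following holds: (i) {n, n+1} is a block of π; (ii) {n+1} is a singleton block of π and 1 and n lie in the same block of π. -/
/-- Noncrossing partitions of `{1,…,m}`, encoded as setoids (equivalence relations) on `ℕ`
whose nontrivial classes are contained in `[1,m]`, ordered by refinement (σ ≤ τ iff every
block of σ is contained in a block of τ), and satisfying the noncrossing condition: there
are no `a < b < c < d` with `a,c` in one block and `b,d` in a different block. -/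
def NCPart (m : ℕ) : Type :=
  {π : Setoid ℕ //
    (∀ a b : ℕ, π.r a b → a ≠ b → 1 ≤ a ∧ a ≤ m ∧ 1 ≤ b ∧ b ≤ m) ∧
    ∀ a b c d : ℕ, a < b → b < c → c < d → π.r a c → π.r b d → π.r a b}

instance (m : ℕ) : PartialOrder (NCPart m) := by unfold NCPart; infer_instance

/-- `B` is a block (equivalence class) of `π`. -/
def IsBlock {m : ℕ} (π : NCPart m) (B : Set ℕ) : Prop :=
  ∃ a, B = {b | π.1.r a b}

/-- The minimum element `0̂` of `NC_m`: all blocks are singletons. -/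
def ncBot (m : ℕ) : NCPart m :=
  ⟨⟨(· = ·), eq_equivalence⟩,
    fun _ _ hab hne => absurd hab hne,
    fun a b c d hab hbc hcd hac _ => by
      have h : a = c := hac
      omega⟩

/-- The maximum element `1̂` of `NC_m`: one block `{1,…,m}`. -/
def ncTop (m : ℕ) : NCPart m :=
  ⟨⟨fun a b => a = b ∨ (1 ≤ a ∧ a ≤ m ∧ 1 ≤ b ∧ b ≤ m),
    ⟨fun _ => Or.inl rfl,
     fun {a b} h => by omega,
     fun {a b c} h1 h2 => by omega⟩⟩,
    fun a b hab hne => by dsimp only at hab; omega,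
    fun a b c d h1 h2 h3 hac hbd => by dsimp only at hac hbd ⊢; omega⟩

/-- `l` is the Stanley label of the covering relation `σ ⋖ τ` in `NC_m`:
`τ` is obtained from `σ` by merging exactly two blocks `B₁, B₂` (all other blocks
unchanged), where `B₁` contains the minimum of the merged block, and `l` is the
largest element of `B₁` that is smaller than every element of `B₂`. -/
def CoverLabel {m : ℕ} (σ τ : NCPart m) (l : ℕ) : Prop :=
  ∃ B₁ B₂ : Set ℕ, IsBlock σ B₁ ∧ IsBlock σ B₂ ∧ B₁ ≠ B₂ ∧
    (∀ a b, τ.1.r a b ↔ (σ.1.r a b ∨ (a ∈ B₁ ∪ B₂ ∧ b ∈ B₁ ∪ B₂))) ∧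
    (∃ a ∈ B₁, ∀ x ∈ B₁ ∪ B₂, a ≤ x) ∧
    l ∈ B₁ ∧ (∀ y ∈ B₂, l < y) ∧ ∀ x ∈ B₁, (∀ y ∈ B₂, x < y) → x ≤ l

/-- `c 0 ⋖ c 1 ⋖ ⋯ ⋖ c n` is a maximal chain of `NC_{n+1}` (from `0̂` to `1̂`) whose
Stanley label sequence `ℓ 0, …, ℓ (n-1)` is a parking function lying in `PF_{n,k}`. -/
def IsPFChain (n k : ℕ) (c : ℕ → NCPart (n + 1)) (ℓ : ℕ → ℕ) : Prop :=
  c 0 = ncBot (n + 1) ∧ c n = ncTop (n + 1) ∧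
  (∀ i < n, CoverLabel (c i) (c (i + 1)) (ℓ i)) ∧
  IsPFnk n k (fun i : Fin n => ℓ (i : ℕ))

/-- `π` lies on some maximal chain of `NC_{n+1}` whose label sequence is in `PF_{n,k}`,
i.e. `π` is an element of `Poset(PF_{n,k})`. -/
def InPosetPF (n k : ℕ) (π : NCPart (n + 1)) : Prop :=
  ∃ c ℓ, IsPFChain n k c ℓ ∧ ∃ i ≤ n, c i = π

/-- `σ ⋖ τ` is a covering relation occurring on some maximal chain of `NC_{n+1}`
whose label sequence is in `PF_{n,k}`. -/
def PFCover (n k : ℕ) (σ τ : NCPart (n + 1)) : Prop :=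
  ∃ c ℓ, IsPFChain n k c ℓ ∧ ∃ i < n, c i = σ ∧ c (i + 1) = τ

/-- The poset `Poset(PF_{n,k})`: its elements are the noncrossing partitions appearing on
some maximal chain of `NC_{n+1}` whose label sequence lies in `PF_{n,k}`, with order
generated by the covering relations occurring on such chains. -/
def PFPoset (n k : ℕ) : Type := {π : NCPart (n + 1) // InPosetPF n k π}

instance (n k : ℕ) : LE (PFPoset n k) :=
  ⟨fun σ τ => Relation.ReflTransGen (PFCover n k) σ.1 τ.1⟩

instance (n k : ℕ) : LT (PFPoset n k) :=
  ⟨fun σ τ => σ ≤ τ ∧ ¬τ ≤ σ⟩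


/-!
If `{n, n+1}` is a block of `π`, the step of the chain below `π` at which `n` and `n+1` first
meet merges `{n}` with `{n+1}`, and its label is `n`. If `{n+1}` is a singleton of `π` and
`1 ∼ n`, the step above `π` at which `n+1` leaves its singleton joins it to a block that, by
noncrossing, contains `n`; again the label is `n`.

Conversely, one descends from `π` to `0̂` by splitting single elements off their blocks and
ascends to `1̂` by merging the block of `1` with `{n+1}` or with the block of the least element
outside it; when neither condition holds, every step can be chosen with a label other than `n`.
The labels of any maximal chain form a parking function (Stanley), so the resulting chain lies
in `PF_{n,n}`.
-/

section Basic

variable {m : ℕ}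

lemma NCPart.bounds_of_rel (π : NCPart m) {a b : ℕ} (h : π.1.r a b) (hne : a ≠ b) :
    1 ≤ a ∧ a ≤ m ∧ 1 ≤ b ∧ b ≤ m :=
  π.2.1 a b h hne

lemma NCPart.rel_of_crossing (π : NCPart m) {a b c d : ℕ} (hab : a < b) (hbc : b < c)
    (hcd : c < d) (hac : π.1.r a c) (hbd : π.1.r b d) : π.1.r a b :=
  π.2.2 a b c d hab hbc hcd hac hbd

lemma NCPart.ext_rel {σ τ : NCPart m} (h : ∀ a b, σ.1.r a b ↔ τ.1.r a b) : σ = τ :=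
  Subtype.ext (Setoid.ext h)

lemma NCPart.le_iff {σ τ : NCPart m} : σ ≤ τ ↔ ∀ a b, σ.1.r a b → τ.1.r a b :=
  Setoid.le_def

lemma NCPart.exists_lt_rel_of_ne_ncBot {π : NCPart m} (h : π ≠ ncBot m) :
    ∃ z y, z < y ∧ π.1.r y z := by
  contrapose! h
  refine NCPart.ext_rel fun a b => ⟨fun hab => ?_, fun hab => (hab : a = b) ▸ π.1.refl' a⟩
  show a = b
  rcases lt_trichotomy a b with hlt | heq | hgt
  · exact absurd (π.1.symm' hab) (h a b hlt)
  · exact heq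
  · exact absurd hab (h b a hgt)

lemma NCPart.exists_not_rel_one_of_ne_ncTop {π : NCPart m} (h : π ≠ ncTop m) :
    ∃ v, 1 ≤ v ∧ v ≤ m ∧ ¬π.1.r 1 v := by
  contrapose! h
  refine NCPart.ext_rel fun a b => ⟨fun hab => ?_, ?_⟩
  · by_cases hne : a = b
    · exact Or.inl hne
    · exact Or.inr (π.bounds_of_rel hab hne)
  · rintro (rfl | ⟨ha₁, ham, hb₁, hbm⟩)
    · exact π.1.refl' a
    · exact π.1.trans' (π.1.symm' (h a ha₁ ham)) (h b hb₁ hbm)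

lemma NCPart.rel_succ_of_rel_one {π : NCPart m} {k a : ℕ} (h1k : π.1.r 1 k)
    (ha : π.1.r a (k + 1)) (ha₁ : 1 ≤ a) (hak : a ≤ k) : π.1.r k (k + 1) := by
  rcases hak.lt_or_eq with hak | rfl
  · have h1a : π.1.r 1 a := by
      rcases ha₁.lt_or_eq with h | rfl
      · exact π.rel_of_crossing h hak (by omega) h1k ha
      · exact π.1.refl' _
    exact π.1.trans' (π.1.symm' h1k) (π.1.trans' h1a ha)
  · exact ha

lemma IsBlock.mem_iff {π : NCPart m} {B : Set ℕ} (hB : IsBlock π B) {x : ℕ} (hx : x ∈ B)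
    (y : ℕ) : y ∈ B ↔ π.1.r x y := by
  obtain ⟨a, rfl⟩ := hB
  exact ⟨fun hy => π.1.trans' (π.1.symm' hx) hy, fun hy => π.1.trans' hx hy⟩

lemma IsBlock.nonempty {π : NCPart m} {B : Set ℕ} (hB : IsBlock π B) : B.Nonempty := by
  obtain ⟨a, rfl⟩ := hB
  exact ⟨a, π.1.refl' a⟩

lemma IsBlock.eq_of_mem {π : NCPart m} {B B' : Set ℕ} (hB : IsBlock π B) (hB' : IsBlock π B')
    {x : ℕ} (hx : x ∈ B) (hx' : x ∈ B') : B = B' :=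
  Set.ext fun y => (hB.mem_iff hx y).trans (hB'.mem_iff hx' y).symm

lemma CoverLabel.le {σ τ : NCPart m} {l : ℕ} (h : CoverLabel σ τ l) : σ ≤ τ := by
  obtain ⟨B₁, B₂, -, -, -, hτ, -⟩ := h
  exact NCPart.le_iff.2 fun a b hab => (hτ a b).2 (Or.inl hab)

lemma CoverLabel.one_le {σ τ : NCPart m} {l : ℕ} (h : CoverLabel σ τ l) : 1 ≤ l := by
  obtain ⟨B₁, B₂, -, h₂, -, hτ, -, hl, hlt, -⟩ := h
  obtain ⟨b, hb⟩ := h₂.nonempty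
  exact (τ.bounds_of_rel ((hτ l b).2 (Or.inr ⟨Or.inl hl, Or.inr hb⟩)) (hlt b hb).ne).1

lemma monotoneOn_of_coverLabel {c : ℕ → NCPart m} {ℓ : ℕ → ℕ} {k : ℕ}
    (hcov : ∀ i < k, CoverLabel (c i) (c (i + 1)) (ℓ i)) : MonotoneOn c (Set.Iic k) :=
  monotoneOn_of_le_succ Set.ordConnected_Iic fun i _ _ hi => by
    rw [Order.succ_eq_add_one, Set.mem_Iic] at *
    exact (hcov i (by omega)).le

lemma exists_coverLabel {σ τ : NCPart m} {B₁ B₂ : Set ℕ} (h₁ : IsBlock σ B₁)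
    (h₂ : IsBlock σ B₂) (hne : B₁ ≠ B₂)
    (hτ : ∀ a b, τ.1.r a b ↔ σ.1.r a b ∨ (a ∈ B₁ ∪ B₂ ∧ b ∈ B₁ ∪ B₂))
    (hlow : ∃ a ∈ B₁, ∀ y ∈ B₂, a < y) :
    ∃ l, CoverLabel σ τ l ∧ l ∈ B₁ ∧ ∀ y ∈ B₂, l < y := by
  obtain ⟨a, ha, haB₂⟩ := hlow
  obtain ⟨b, hb⟩ := h₂.nonempty
  set S := {x ∈ B₁ | ∀ y ∈ B₂, x < y}
  have hS : BddAbove S := ⟨b, fun x hx => (hx.2 b hb).le⟩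
  obtain ⟨hl₁, hl₂⟩ : sSup S ∈ S := Nat.sSup_mem ⟨a, ha, haB₂⟩ hS
  refine ⟨sSup S, ⟨B₁, B₂, h₁, h₂, hne, hτ, ⟨sInf B₁, Nat.sInf_mem ⟨a, ha⟩, ?_⟩, hl₁, hl₂,
    fun x hx hxB₂ => le_csSup hS ⟨hx, hxB₂⟩⟩, hl₁, hl₂⟩
  rintro x (hx | hx)
  · exact Nat.sInf_le hx
  · exact (Nat.sInf_le ha).trans (haB₂ x hx).le

end Basic

lemma exists_not_and_succ_of_le {P : ℕ → Prop} {a b : ℕ} (ha : ¬P a) (hb : P b) (hab : a ≤ b) :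
    ∃ j, a ≤ j ∧ j < b ∧ ¬P j ∧ P (j + 1) := by
  obtain ⟨j, hj, hj₁⟩ := Nat.exists_not_and_succ_of_not_zero_of_exists
    (p := fun j => j + a ≤ b ∧ P (j + a)) (fun h => ha (by simpa using h.2))
    ⟨b - a, by omega, by rwa [Nat.sub_add_cancel hab]⟩
  refine ⟨j + a, by omega, by omega, fun h => hj ⟨by omega, h⟩, ?_⟩
  simpa [Nat.add_right_comm] using hj₁.2

section BlockMins

open scoped Classical

variable {m : ℕ}

def IsBlockMin (π : NCPart m) (x : ℕ) : Prop :=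
  ∀ y < x, ¬π.1.r y x

noncomputable def blockMins (π : NCPart m) (t : ℕ) : Finset ℕ :=
  (Finset.Icc 1 t).filter (IsBlockMin π)

lemma IsBlockMin.le_of_mem {π : NCPart m} {B : Set ℕ} {x y : ℕ} (hx : IsBlockMin π x)
    (hB : IsBlock π B) (hxB : x ∈ B) (hy : y ∈ B) : x ≤ y :=
  not_lt.1 fun hyx => hx y hyx (π.1.symm' ((hB.mem_iff hxB y).1 hy))

lemma card_blockMins_le (π : NCPart m) (t : ℕ) : (blockMins π t).card ≤ t :=
  (Finset.card_filter_le _ _).trans (by simp)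

lemma card_blockMins_ncBot (t : ℕ) : (blockMins (ncBot m) t).card = t := by
  rw [blockMins, Finset.filter_true_of_mem fun x _ y hy hyx => hy.ne hyx]
  simp

lemma card_blockMins_ncTop {t : ℕ} (ht : 1 ≤ t) (htm : t ≤ m) :
    (blockMins (ncTop m) t).card = 1 := by
  rw [Finset.card_eq_one]
  refine ⟨1, Finset.ext fun x => ?_⟩
  simp only [blockMins, Finset.mem_filter, Finset.mem_Icc, Finset.mem_singleton]
  constructor
  · rintro ⟨hx, hmin⟩
    by_contra hx₁
    exact hmin 1 (by omega) (Or.inr (by omega))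
  · rintro rfl
    exact ⟨by omega, fun y hy h => by rcases h with h | h <;> omega⟩

/-- Exactly one block minimum disappears in a cover, the minimum of the second merged block,
which lies above the label. -/
lemma CoverLabel.exists_card_blockMins {σ τ : NCPart m} {l : ℕ} (h : CoverLabel σ τ l) :
    ∃ b, l < b ∧ b ≤ m ∧
      ∀ t, (blockMins σ t).card = (blockMins τ t).card + if b ≤ t then 1 else 0 := by
  obtain ⟨B₁, B₂, h₁, h₂, hne, hτ, ⟨a, ha, hamin⟩, -, hlt, -⟩ := h
  set b := sInf B₂
  have hb : b ∈ B₂ := Nat.sInf_mem h₂.nonempty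
  have hab : a < b := (hamin b (Or.inr hb)).lt_of_ne
    fun e => hne (h₁.eq_of_mem h₂ ha (e ▸ hb))
  have hτab : τ.1.r a b := (hτ a b).2 (Or.inr ⟨Or.inl ha, Or.inr hb⟩)
  have hbm := τ.bounds_of_rel hτab hab.ne
  have hbmin : IsBlockMin σ b := fun y hy hyb =>
    (Nat.sInf_le ((h₂.mem_iff hb y).2 (σ.1.symm' hyb))).not_gt hy
  have hmins : ∀ x, IsBlockMin τ x ↔ IsBlockMin σ x ∧ x ≠ b := by
    refine fun x => ⟨fun hx => ⟨fun y hy hyx => hx y hy ((hτ y x).2 (Or.inl hyx)), ?_⟩, ?_⟩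
    · rintro rfl
      exact hx a hab hτab
    · rintro ⟨hx, hxb⟩ y hy hyx
      rcases (hτ y x).1 hyx with hyx | ⟨hyU, hx₁ | hx₂⟩
      · exact hx y hy hyx
      · have := hx.le_of_mem h₁ hx₁ ha
        have := hamin y hyU
        omega
      · exact hxb (le_antisymm (hx.le_of_mem h₂ hx₂ hb) (Nat.sInf_le hx₂))
  have herase : ∀ t, blockMins τ t = (blockMins σ t).erase b := fun t => by
    ext x
    simp only [blockMins, Finset.mem_filter, Finset.mem_erase, hmins]
    tauto
  refine ⟨b, hlt b hb, hbm.2.2.2, fun t => ?_⟩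
  rw [herase]
  split_ifs with hbt
  · rw [Finset.card_erase_add_one]
    simp only [blockMins, Finset.mem_filter, Finset.mem_Icc]
    exact ⟨⟨hbm.2.2.1, hbt⟩, hbmin⟩
  · rw [Finset.erase_eq_of_notMem, add_zero]
    simp only [blockMins, Finset.mem_filter, Finset.mem_Icc]
    omega

lemma CoverLabel.card_blockMins_le {σ τ : NCPart m} {l : ℕ} (h : CoverLabel σ τ l) (t : ℕ) :
    (blockMins σ t).card ≤ (blockMins τ t).card + if l < t then 1 else 0 := by
  obtain ⟨b, hlb, -, hcard⟩ := h.exists_card_blockMins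
  rw [hcard t]
  split_ifs <;> omega

lemma CoverLabel.card_blockMins_eq {σ τ : NCPart m} {l : ℕ} (h : CoverLabel σ τ l) :
    (blockMins σ m).card = (blockMins τ m).card + 1 := by
  obtain ⟨b, -, hbm, hcard⟩ := h.exists_card_blockMins
  rw [hcard m, if_pos hbm]

lemma card_blockMins_le_of_chain {c : ℕ → NCPart m} {ℓ : ℕ → ℕ} {k : ℕ}
    (hcov : ∀ i < k, CoverLabel (c i) (c (i + 1)) (ℓ i)) (t : ℕ) :
    (blockMins (c 0) t).card ≤
      (blockMins (c k) t).card + ∑ i ∈ Finset.range k, if ℓ i < t then 1 else 0 := by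
  induction k with
  | zero => simp
  | succ k ih =>
    have := ih fun i hi => hcov i (by omega)
    have := (hcov k (by omega)).card_blockMins_le t
    rw [Finset.sum_range_succ]
    omega

lemma card_blockMins_eq_of_chain {c : ℕ → NCPart m} {ℓ : ℕ → ℕ} {k : ℕ}
    (hcov : ∀ i < k, CoverLabel (c i) (c (i + 1)) (ℓ i)) :
    (blockMins (c 0) m).card = (blockMins (c k) m).card + k := by
  induction k with
  | zero => rfl
  | succ k ih =>
    rw [ih fun i hi => hcov i (by omega), (hcov k (by omega)).card_blockMins_eq]
    ring

/-- Stanley's argument: at most one block meeting `[1, t]` disappears at each step, and only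
at a step labelled below `t`; `0̂` has `t` such blocks and `1̂` one. -/
lemma isParkingFunction_of_chain {n : ℕ} {c : ℕ → NCPart (n + 1)} {ℓ : ℕ → ℕ}
    (h0 : c 0 = ncBot (n + 1)) (hn : c n = ncTop (n + 1))
    (hcov : ∀ i < n, CoverLabel (c i) (c (i + 1)) (ℓ i)) :
    IsParkingFunction n (fun i : Fin n => ℓ i) := by
  refine ⟨fun i => (hcov i i.2).one_le, fun i => ?_⟩
  have := card_blockMins_le_of_chain hcov (i + 1 + 1)
  rw [h0, hn, card_blockMins_ncBot, card_blockMins_ncTop (by omega) (by omega)] at this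
  simp only [Nat.lt_add_one_iff] at this
  rw [Finset.card_filter, Fin.sum_univ_eq_sum_range (fun k => if ℓ k ≤ i + 1 then 1 else 0)]
  omega

end BlockMins

section Chains

variable {m : ℕ} {P : ℕ → Prop}

def LabelChain (P : ℕ → Prop) (k : ℕ) (σ τ : NCPart m) : Prop :=
  ∃ (c : ℕ → NCPart m) (ℓ : ℕ → ℕ), c 0 = σ ∧ c k = τ ∧
    ∀ i < k, CoverLabel (c i) (c (i + 1)) (ℓ i) ∧ P (ℓ i)

lemma LabelChain.refl (σ : NCPart m) : LabelChain P 0 σ σ :=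
  ⟨fun _ => σ, fun _ => 0, rfl, rfl, fun _ hi => absurd hi (Nat.not_lt_zero _)⟩

lemma LabelChain.single {σ τ : NCPart m} {l : ℕ} (h : CoverLabel σ τ l) (hl : P l) :
    LabelChain P 1 σ τ :=
  ⟨fun i => if i = 0 then σ else τ, fun _ => l, rfl, rfl, fun i hi => by
    obtain rfl : i = 0 := by omega
    exact ⟨h, hl⟩⟩

lemma exists_chain_of_labelChain_append {j k : ℕ} {σ τ υ : NCPart m}
    (h₁ : LabelChain P j σ τ) (h₂ : LabelChain P k τ υ) :
    ∃ (c : ℕ → NCPart m) (ℓ : ℕ → ℕ), c 0 = σ ∧ c (j + k) = υ ∧ c j = τ ∧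
      ∀ i < j + k, CoverLabel (c i) (c (i + 1)) (ℓ i) ∧ P (ℓ i) := by
  obtain ⟨c₁, ℓ₁, h₁0, h₁j, hc₁⟩ := h₁
  obtain ⟨c₂, ℓ₂, h₂0, h₂k, hc₂⟩ := h₂
  refine ⟨fun i => if i < j then c₁ i else c₂ (i - j),
    fun i => if i < j then ℓ₁ i else ℓ₂ (i - j), ?_, by simp [h₂k], by simp [h₂0], ?_⟩
  · by_cases hj : 0 < j
    · simp [hj, h₁0]
    · obtain rfl : j = 0 := by omega
      simp [h₂0, ← h₁j, h₁0]
  · intro i hi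
    by_cases hij : i + 1 < j
    · simpa [hij, show i < j by omega] using hc₁ i (by omega)
    by_cases hij' : i < j
    · obtain rfl : j = i + 1 := by omega
      simpa [h₂0, ← h₁j] using hc₁ i (by omega)
    · simpa [hij, hij', show i + 1 - j = i - j + 1 by omega] using hc₂ (i - j) (by omega)

lemma LabelChain.trans {j k : ℕ} {σ τ υ : NCPart m} (h₁ : LabelChain P j σ τ)
    (h₂ : LabelChain P k τ υ) : LabelChain P (j + k) σ υ :=
  let ⟨c, ℓ, h0, hend, _, hcov⟩ := exists_chain_of_labelChain_append h₁ h₂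
  ⟨c, ℓ, h0, hend, hcov⟩

lemma LabelChain.card_blockMins {k : ℕ} {σ τ : NCPart m} (h : LabelChain P k σ τ) :
    (blockMins σ m).card = (blockMins τ m).card + k := by
  obtain ⟨c, ℓ, rfl, rfl, hcov⟩ := h
  exact card_blockMins_eq_of_chain fun i hi => (hcov i hi).1

lemma exists_labelChain_from_ncBot (H : NCPart m → Prop)
    (step : ∀ π, H π → π ≠ ncBot m → ∃ σ l, H σ ∧ CoverLabel σ π l ∧ P l)
    (π : NCPart m) (hπ : H π) : ∃ k, LabelChain P k (ncBot m) π := by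
  by_cases hbot : π = ncBot m
  · exact ⟨0, hbot ▸ LabelChain.refl _⟩
  obtain ⟨σ, l, hσ, hcov, hl⟩ := step π hπ hbot
  have := card_blockMins_le σ m
  have := hcov.card_blockMins_eq
  obtain ⟨k, hk⟩ := exists_labelChain_from_ncBot H step σ hσ
  exact ⟨k + 1, hk.trans (.single hcov hl)⟩
termination_by m - (blockMins π m).card

lemma exists_labelChain_to_ncTop (H : NCPart m → Prop)
    (step : ∀ π, H π → π ≠ ncTop m → ∃ τ l, H τ ∧ CoverLabel π τ l ∧ P l)
    (π : NCPart m) (hπ : H π) : ∃ k, LabelChain P k π (ncTop m) := by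
  by_cases htop : π = ncTop m
  · exact ⟨0, htop ▸ LabelChain.refl _⟩
  obtain ⟨τ, l, hτ, hcov, hl⟩ := step π hπ htop
  have := hcov.card_blockMins_eq
  obtain ⟨k, hk⟩ := exists_labelChain_to_ncTop H step τ hτ
  exact ⟨1 + k, (LabelChain.single hcov hl).trans hk⟩
termination_by (blockMins π m).card

end Chains

namespace NCPart

variable {m : ℕ}

/-- `y` split off its block; the result is noncrossing since singletons cross nothing. -/
def isolate (π : NCPart m) (y : ℕ) : NCPart m :=
  ⟨⟨fun a b => π.1.r a b ∧ (a = y ↔ b = y),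
      ⟨fun a => ⟨π.1.refl' a, Iff.rfl⟩, fun h => ⟨π.1.symm' h.1, h.2.symm⟩,
        fun h h' => ⟨π.1.trans' h.1 h'.1, h.2.trans h'.2⟩⟩⟩,
    fun _ _ h hne => π.bounds_of_rel h.1 hne,
    fun _ _ _ _ hab hbc hcd hac hbd => ⟨π.rel_of_crossing hab hbc hcd hac.1 hbd.1,
      ⟨fun ha => absurd (ha.trans (hac.2.1 ha).symm) (by omega),
        fun hb => absurd (hb.trans (hbd.2.1 hb).symm) (by omega)⟩⟩⟩

lemma isolate_rel (π : NCPart m) (y a b : ℕ) :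
    (π.isolate y).1.r a b ↔ π.1.r a b ∧ (a = y ↔ b = y) :=
  Iff.rfl

lemma exists_coverLabel_isolate (π : NCPart m) {y z : ℕ} (hyz : π.1.r y z) (hzy : z < y) :
    ∃ l, CoverLabel (π.isolate y) π l ∧ π.1.r y l ∧ l < y := by
  set σ := π.isolate y
  have hU : ∀ x, x ∈ {b | σ.1.r z b} ∪ {b | σ.1.r y b} ↔ π.1.r y x := by
    intro x
    simp only [Set.mem_union, Set.mem_ofPred_eq, σ, isolate_rel]
    by_cases hx : x = y
    · subst hx
      simp
    · simpa [hx, hzy.ne] using ⟨π.1.trans' hyz, π.1.trans' (π.1.symm' hyz)⟩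
  have hτ : ∀ a b, π.1.r a b ↔ σ.1.r a b ∨
      (a ∈ {b | σ.1.r z b} ∪ {b | σ.1.r y b} ∧ b ∈ {b | σ.1.r z b} ∪ {b | σ.1.r y b}) := by
    intro a b
    rw [hU, hU, isolate_rel]
    refine ⟨fun hab => ?_, ?_⟩
    · by_cases h : a = y ↔ b = y
      · exact Or.inl ⟨hab, h⟩
      · rcases (by tauto : a = y ∨ b = y) with rfl | rfl
        · exact Or.inr ⟨π.1.refl' a, hab⟩
        · exact Or.inr ⟨π.1.symm' hab, π.1.refl' b⟩
    · rintro (hab | ⟨ha, hb⟩)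
      · exact hab.1
      · exact π.1.trans' (π.1.symm' ha) hb
  have hzσ : σ.1.r z z := σ.1.refl' z
  obtain ⟨l, hcov, hl₁, hl₂⟩ := exists_coverLabel (τ := π) ⟨z, rfl⟩ ⟨y, rfl⟩
    (fun he => hzy.ne ((show z ∈ {b | σ.1.r y b} by rw [← he]; exact hzσ).2.1 rfl)) hτ
    ⟨z, hzσ, fun w hw => hw.2.1 rfl ▸ hzy⟩
  exact ⟨l, hcov, π.1.trans' hyz hl₁.1, hl₂ y (σ.1.refl' y)⟩

def InBlocks (π : NCPart m) (u v x : ℕ) : Prop :=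
  π.1.r u x ∨ π.1.r v x

lemma InBlocks.of_rel {π : NCPart m} {u v x y : ℕ} (hx : π.InBlocks u v x) (hxy : π.1.r x y) :
    π.InBlocks u v y :=
  hx.imp (π.1.trans' · hxy) (π.1.trans' · hxy)

def BlocksSeparated (π : NCPart m) (u v : ℕ) : Prop :=
  ∀ x y, u < x → x < v → ¬π.InBlocks u v x → π.1.r x y → u < y ∧ y < v

section Merge

variable {π : NCPart m} {u v : ℕ}

lemma lt_and_lt_of_inBlocks_between (hsep : π.BlocksSeparated u v) {c x c' : ℕ}
    (hcc' : π.1.r c c') (hc : ¬π.InBlocks u v c) (hx : π.InBlocks u v x) (hcx : c < x)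
    (hxc' : x < c') : c < u ∧ v < c' := by
  have hc' : ¬π.InBlocks u v c' := fun h => hc (h.of_rel (π.1.symm' hcc'))
  have hcu : c ≠ u := fun h => hc (Or.inl (h ▸ π.1.refl' c))
  have hcv : c ≠ v := fun h => hc (Or.inr (h ▸ π.1.refl' c))
  have hc'u : c' ≠ u := fun h => hc' (Or.inl (h ▸ π.1.refl' c'))
  have hc'v : c' ≠ v := fun h => hc' (Or.inr (h ▸ π.1.refl' c'))
  rcases hx with hux | hvx
  · have hlt : c < u := by
      by_contra! h
      exact hc (Or.inl (π.rel_of_crossing (by omega) hcx hxc' hux hcc'))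
    refine ⟨hlt, ?_⟩
    by_contra! h
    rcases lt_or_gt_of_ne hc'u with h' | h'
    · exact hc (InBlocks.of_rel (Or.inl hux)
        (π.1.symm' (π.rel_of_crossing hcx hxc' h' hcc' (π.1.symm' hux))))
    · exact absurd (hsep c' c h' (by omega) hc' (π.1.symm' hcc')).1 (by omega)
  · have hlt : v < c' := by
      by_contra! h
      exact hc (InBlocks.of_rel (Or.inr hvx)
        (π.1.symm' (π.rel_of_crossing hcx hxc' (by omega) hcc' (π.1.symm' hvx))))
    refine ⟨?_, hlt⟩
    by_contra! h
    rcases lt_or_gt_of_ne hcv with h' | h'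
    · exact absurd (hsep c c' (by omega) h' hc hcc').2 (by omega)
    · exact hc (Or.inr (π.rel_of_crossing h' hcx hxc' hvx hcc'))

lemma lt_and_lt_of_inBlocks (huv : u < v) {c c' z : ℕ} (hcc' : π.1.r c c')
    (hc : ¬π.InBlocks u v c) (hcu : c < u) (hvc' : v < c') (hz : π.InBlocks u v z) :
    c < z ∧ z < c' := by
  have key : ∀ w, π.InBlocks u v w → c < w → w < c' → π.1.r w z → c < z ∧ z < c' := by
    intro w hw hcw hwc' hwz
    have hz' := hw.of_rel hwz
    refine ⟨?_, ?_⟩ <;> by_contra! h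
    · rcases h.lt_or_eq with h | rfl
      · exact hc (hz'.of_rel (π.rel_of_crossing h hcw hwc' (π.1.symm' hwz) hcc'))
      · exact hc hz'
    · rcases h.lt_or_eq with h | rfl
      · exact hc (hw.of_rel (π.1.symm' (π.rel_of_crossing hcw hwc' h hcc' hwz)))
      · exact hc (hz'.of_rel (π.1.symm' hcc'))
  rcases hz with hz | hz
  · exact key u (Or.inl (π.1.refl' u)) hcu (by omega) hz
  · exact key v (Or.inr (π.1.refl' v)) (by omega) hvc' hz

lemma InBlocks.bounds (hu : 1 ≤ u) (huv : u < v) (hv : v ≤ m) {x : ℕ}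
    (hx : π.InBlocks u v x) : 1 ≤ x ∧ x ≤ m := by
  rcases hx with hx | hx
  · by_cases hxu : u = x
    · omega
    · exact (π.bounds_of_rel hx hxu).2.2
  · by_cases hxv : v = x
    · omega
    · exact (π.bounds_of_rel hx hxv).2.2

variable (π u v) in
def mergeRel (a b : ℕ) : Prop :=
  π.1.r a b ∨ (π.InBlocks u v a ∧ π.InBlocks u v b)

lemma mergeRel_equivalence : Equivalence (π.mergeRel u v) where
  refl a := Or.inl (π.1.refl' a)
  symm := by
    rintro a b (h | ⟨ha, hb⟩)
    exacts [Or.inl (π.1.symm' h), Or.inr ⟨hb, ha⟩]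
  trans := by
    rintro a b c (h | ⟨ha, hb⟩) (h' | ⟨hb', hc⟩)
    · exact Or.inl (π.1.trans' h h')
    · exact Or.inr ⟨hb'.of_rel (π.1.symm' h), hc⟩
    · exact Or.inr ⟨ha, hb.of_rel h'⟩
    · exact Or.inr ⟨ha, hc⟩

/-- A block crossing the merged block would surround both `u` and `v` while missing a point of
the merged block outside its span. -/
lemma mergeRel_of_crossing (huv : u < v) (hsep : π.BlocksSeparated u v) {a b c d : ℕ}
    (hab : a < b) (hbc : b < c) (hcd : c < d) (hac : π.mergeRel u v a c)
    (hbd : π.mergeRel u v b d) : π.mergeRel u v a b := by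
  by_cases ha : π.InBlocks u v a
  · by_cases hb : π.InBlocks u v b
    · exact Or.inr ⟨ha, hb⟩
    have hbd' : π.1.r b d := hbd.resolve_right fun h => hb h.1
    rcases hac with hac | ⟨-, hc⟩
    · exact Or.inl (π.rel_of_crossing hab hbc hcd hac hbd')
    · obtain ⟨hbu, hvd⟩ := lt_and_lt_of_inBlocks_between hsep hbd' hb hc hbc hcd
      have := lt_and_lt_of_inBlocks huv hbd' hb hbu hvd ha
      omega
  · have hac' : π.1.r a c := hac.resolve_right fun h => ha h.1
    rcases hbd with hbd | ⟨hb, hd⟩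
    · exact Or.inl (π.rel_of_crossing hab hbc hcd hac' hbd)
    · obtain ⟨hau, hvc⟩ := lt_and_lt_of_inBlocks_between hsep hac' ha hb hab hbc
      have := lt_and_lt_of_inBlocks huv hac' ha hau hvc hd
      omega

variable (π) in
def merge (hu : 1 ≤ u) (huv : u < v) (hv : v ≤ m) (hsep : π.BlocksSeparated u v) :
    NCPart m :=
  ⟨⟨π.mergeRel u v, mergeRel_equivalence⟩,
    fun _ _ h hne => h.elim (π.bounds_of_rel · hne) fun ⟨ha, hb⟩ =>
      ⟨(ha.bounds hu huv hv).1, (ha.bounds hu huv hv).2, (hb.bounds hu huv hv).1,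
        (hb.bounds hu huv hv).2⟩,
    fun _ _ _ _ => mergeRel_of_crossing huv hsep⟩

lemma exists_coverLabel_merge (hu : 1 ≤ u) (huv : u < v) (hv : v ≤ m)
    (hsep : π.BlocksSeparated u v) (hnr : ¬π.1.r u v) (hlow : ∀ y, π.1.r v y → u < y) :
    ∃ l, CoverLabel π (π.merge hu huv hv hsep) l ∧ π.1.r u l ∧ l < v := by
  obtain ⟨l, hcov, hl₁, hl₂⟩ := exists_coverLabel (τ := π.merge hu huv hv hsep)
    (B₁ := {b | π.1.r u b}) (B₂ := {b | π.1.r v b}) ⟨u, rfl⟩ ⟨v, rfl⟩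
    (fun he => hnr (show v ∈ {b | π.1.r u b} by rw [he]; exact π.1.refl' v))
    (fun _ _ => Iff.rfl) ⟨u, π.1.refl' u, hlow⟩
  exact ⟨l, hcov, hl₁, hl₂ v (π.1.refl' v)⟩

end Merge

lemma blocksSeparated_one (π : NCPart m) : π.BlocksSeparated 1 m := by
  intro x y h1x hxm hx hxy
  by_cases hxy' : x = y
  · exact hxy' ▸ ⟨h1x, hxm⟩
  obtain ⟨-, -, hy₁, hym⟩ := π.bounds_of_rel hxy hxy'
  refine ⟨hy₁.lt_of_ne ?_, hym.lt_of_ne ?_⟩ <;> rintro rfl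
  · exact hx (Or.inl (π.1.symm' hxy))
  · exact hx (Or.inr (π.1.symm' hxy))

lemma exists_coverLabel_join_last {π : NCPart m} (hm : 2 ≤ m)
    (hsing : ∀ x, π.1.r m x → x = m) : ∃ τ l, CoverLabel π τ l ∧ π.1.r 1 l ∧ τ.1.r m 1 := by
  obtain ⟨l, hcov, h1l, -⟩ := π.exists_coverLabel_merge le_rfl (by omega) le_rfl
    π.blocksSeparated_one (fun h => by have := hsing 1 (π.1.symm' h); omega)
    (fun y hy => by have := hsing y hy; omega)
  exact ⟨_, l, hcov, h1l, Or.inr ⟨Or.inr (π.1.refl' _), Or.inl (π.1.refl' 1)⟩⟩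

/-- Merge the block of `1` with that of the least element `v` outside it: `v - 1` and `v` are
adjacent, so nothing separates the two blocks. -/
lemma exists_coverLabel_add_one_lt {π : NCPart m} (hπ : π ≠ ncTop m) {w : ℕ}
    (hw : π.1.r m w) (hwm : w ≠ m) : ∃ τ l, CoverLabel π τ l ∧ l + 1 < m := by
  obtain ⟨v, ⟨hv₁, hvm, hv⟩, hlt⟩ :
      ∃ v, (1 ≤ v ∧ v ≤ m ∧ ¬π.1.r 1 v) ∧ ∀ x, 1 ≤ x → x < v → π.1.r 1 x := by
    classical
    have hex := exists_not_rel_one_of_ne_ncTop hπ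
    refine ⟨Nat.find hex, Nat.find_spec hex, fun x hx hxv => by_contra fun h => ?_⟩
    have := (Nat.find_spec hex).2.1
    exact Nat.find_min hex hxv ⟨hx, by omega, h⟩
  have hv1 : v ≠ 1 := by
    rintro rfl
    exact hv (π.1.refl' 1)
  have hvm' : v ≠ m := by
    rintro rfl
    have := π.bounds_of_rel hw hwm.symm
    exact hv (π.1.trans' (hlt w (by omega) (by omega)) (π.1.symm' hw))
  obtain ⟨l, hcov, -, hlv⟩ := π.exists_coverLabel_merge (u := v - 1) (v := v) (by omega)
    (by omega) hvm (fun x _ h₁ h₂ => absurd h₂ (by omega))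
    (fun h => hv (π.1.trans' (hlt _ (by omega) (by omega)) h)) fun y hy => by
      by_contra! hyv
      have := π.bounds_of_rel hy (by omega)
      exact hv (π.1.trans' (hlt y (by omega) (by omega)) (π.1.symm' hy))
  exact ⟨_, l, hcov, by omega⟩

end NCPart

section Conditions

variable {n : ℕ}

/-- Condition (i) of the theorem. -/
def LastPairIsBlock (π : NCPart (n + 1)) : Prop :=
  π.1.r n (n + 1) ∧ ∀ x, π.1.r n x → x = n ∨ x = n + 1

/-- Condition (ii) of the theorem. -/
def LastSingletonOneRelN (π : NCPart (n + 1)) : Prop :=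
  (∀ x, π.1.r (n + 1) x → x = n + 1) ∧ π.1.r 1 n

lemma CoverLabel.eq_of_pair_block {m k l : ℕ} {σ τ : NCPart m} (h : CoverLabel σ τ l)
    (hσ : ¬σ.1.r k (k + 1)) (hτ : τ.1.r k (k + 1))
    (hblock : ∀ x, τ.1.r k x → x = k ∨ x = k + 1) : l = k := by
  obtain ⟨B₁, B₂, -, h₂, -, hτiff, -, hl, hlt, -⟩ := h
  have hk : k ∈ B₁ ∪ B₂ := (((hτiff _ _).1 hτ).resolve_left hσ).1
  have hsub : ∀ x ∈ B₁ ∪ B₂, x = k ∨ x = k + 1 := fun x hx =>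
    hblock x ((hτiff k x).2 (Or.inr ⟨hk, hx⟩))
  obtain ⟨y, hy⟩ := h₂.nonempty
  have := hlt y hy
  rcases hsub l (Or.inl hl) with h | h <;> rcases hsub y (Or.inr hy) with h' | h' <;> omega

/-- By noncrossing, the block that `{n+1}` joins must contain `n`. -/
lemma CoverLabel.eq_of_last_singleton_join {σ τ : NCPart (n + 1)} {l x : ℕ}
    (h : CoverLabel σ τ l) (hsing : ∀ y, σ.1.r (n + 1) y → y = n + 1)
    (hx : τ.1.r (n + 1) x) (hxn : x ≠ n + 1) (h1n : σ.1.r 1 n) : l = n := by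
  obtain ⟨B₁, B₂, h₁, h₂, hne, hτ, ⟨a, ha, hamin⟩, hl, hlt, hmax⟩ := h
  have hsingB : ∀ B, IsBlock σ B → n + 1 ∈ B → ∀ y ∈ B, y = n + 1 := fun B hB hn y hy =>
    hsing y ((hB.mem_iff hn y).1 hy)
  have hn₁ : n + 1 ∈ B₁ ∪ B₂ :=
    (((hτ _ _).1 hx).resolve_left fun h' => hxn (hsing x h')).1
  have hn₁B₂ : n + 1 ∈ B₂ := by
    refine hn₁.resolve_left fun hn₁B₁ => ?_
    obtain ⟨b, hb⟩ := h₂.nonempty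
    have hab : a ≠ b := fun e => hne (h₁.eq_of_mem h₂ ha (e ▸ hb))
    have := hsingB B₁ h₁ hn₁B₁ a ha
    have := hamin b (Or.inr hb)
    have := (τ.bounds_of_rel ((hτ a b).2 (Or.inr ⟨Or.inl ha, Or.inr hb⟩)) hab).2.2.2
    omega
  have hτa : τ.1.r a (n + 1) := (hτ _ _).2 (Or.inr ⟨Or.inl ha, Or.inr hn₁B₂⟩)
  have ha_ne : a ≠ n + 1 := fun e => hne (h₁.eq_of_mem h₂ ha (e ▸ hn₁B₂))
  obtain ⟨ha₁, ha_le, -⟩ := τ.bounds_of_rel hτa ha_ne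
  have hτn : τ.1.r n (n + 1) :=
    τ.rel_succ_of_rel_one ((hτ 1 n).2 (Or.inl h1n)) hτa ha₁ (by omega)
  have hnB₁ : n ∈ B₁ := by
    have hσn : ¬σ.1.r n (n + 1) := fun h' => by have := hsing n (σ.1.symm' h'); omega
    refine (((hτ _ _).1 hτn).resolve_left hσn).1.resolve_right fun h' => ?_
    have := hsingB B₂ h₂ hn₁B₂ n h'
    omega
  have := hmax n hnB₁ fun y hy => by rw [hsingB B₂ h₂ hn₁B₂ y hy]; omega
  have := hlt (n + 1) hn₁B₂
  omega

lemma not_lastPairIsBlock_of_inPosetPF {π : NCPart (n + 1)} (h : InPosetPF n n π) :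
    ¬LastPairIsBlock π := by
  obtain ⟨c, ℓ, ⟨hc0, -, hcov, -, hℓ, -⟩, i, hi, rfl⟩ := h
  rintro ⟨hrel, hblock⟩
  obtain ⟨j, -, hji, hj, hj₁⟩ := exists_not_and_succ_of_le
    (P := fun j => (c j).1.r n (n + 1))
    (show ¬(c 0).1.r n (n + 1) by rw [hc0]; exact fun h => by have : n = n + 1 := h; omega)
    hrel (Nat.zero_le i)
  have hle := NCPart.le_iff.1
    (monotoneOn_of_coverLabel hcov (by simp; omega) (by simpa using hi) hji)
  exact hℓ ⟨j, by omega⟩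
    ((hcov j (by omega)).eq_of_pair_block hj hj₁ fun x hx => hblock x (hle _ _ hx))

lemma not_lastSingletonOneRelN_of_inPosetPF (hn : 1 ≤ n) {π : NCPart (n + 1)}
    (h : InPosetPF n n π) : ¬LastSingletonOneRelN π := by
  obtain ⟨c, ℓ, ⟨-, hcn, hcov, -, hℓ, -⟩, i, hi, rfl⟩ := h
  rintro ⟨hsing, h1n⟩
  obtain ⟨j, hij, hjn, hj, x, hx, hj₁⟩ := exists_not_and_succ_of_le
    (P := fun j => ∃ x, x ≠ n + 1 ∧ (c j).1.r (n + 1) x)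
    (fun ⟨x, hx, hr⟩ => hx (hsing x hr))
    ⟨1, by omega, by rw [hcn]; exact Or.inr (by omega)⟩ hi
  have hle := NCPart.le_iff.1
    (monotoneOn_of_coverLabel hcov (by simpa using hi) (by simp; omega) hij)
  exact hℓ ⟨j, hjn⟩ ((hcov j hjn).eq_of_last_singleton_join
    (fun y hy => by_contra fun hne => hj ⟨y, hne, hy⟩) hj₁ hx (hle _ _ h1n))

lemma exists_coverLabel_below {π : NCPart (n + 1)} (hπ : π ≠ ncBot (n + 1))
    (hI : ¬LastPairIsBlock π) : ∃ σ l, ¬LastPairIsBlock σ ∧ CoverLabel σ π l ∧ l ≠ n := by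
  by_cases hn : π.1.r n (n + 1)
  · obtain ⟨x, hnx, hxn, hxn₁⟩ : ∃ x, π.1.r n x ∧ x ≠ n ∧ x ≠ n + 1 := by
      by_contra! h
      exact hI ⟨hn, fun x hx => (em (x = n)).imp_right (h x hx)⟩
    have := π.bounds_of_rel hnx hxn.symm
    obtain ⟨l, hcov, -, hl⟩ := π.exists_coverLabel_isolate hnx (by omega)
    exact ⟨π.isolate n, l, fun h => by have := h.1.2.1 rfl; omega, hcov, hl.ne⟩
  · obtain ⟨z, y, hzy, hyz⟩ := NCPart.exists_lt_rel_of_ne_ncBot hπ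
    obtain ⟨l, hcov, hyl, hly⟩ := π.exists_coverLabel_isolate hyz hzy
    refine ⟨π.isolate y, l, fun h => hn (NCPart.le_iff.1 hcov.le _ _ h.1), hcov, ?_⟩
    rintro rfl
    have := π.bounds_of_rel hyl hly.ne'
    obtain rfl : y = l + 1 := by omega
    exact hn (π.1.symm' hyl)

lemma exists_coverLabel_above (hn : 1 ≤ n) {π : NCPart (n + 1)} (hπ : π ≠ ncTop (n + 1))
    (hII : ¬LastSingletonOneRelN π) :
    ∃ τ l, ¬LastSingletonOneRelN τ ∧ CoverLabel π τ l ∧ l ≠ n := by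
  by_cases hsing : ∀ x, π.1.r (n + 1) x → x = n + 1
  · obtain ⟨τ, l, hcov, h1l, hτ⟩ := NCPart.exists_coverLabel_join_last (by omega) hsing
    refine ⟨τ, l, fun h => ?_, hcov, fun hl => hII ⟨hsing, hl ▸ h1l⟩⟩
    have := h.1 1 hτ
    omega
  · push Not at hsing
    obtain ⟨w, hw, hwn⟩ := hsing
    obtain ⟨τ, l, hcov, hl⟩ := NCPart.exists_coverLabel_add_one_lt hπ hw hwn
    exact ⟨τ, l, fun h => hwn (h.1 w (NCPart.le_iff.1 hcov.le _ _ hw)), hcov, by omega⟩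

lemma inPosetPF_of_labelChain {j k : ℕ} {π : NCPart (n + 1)}
    (h₁ : LabelChain (· ≠ n) j (ncBot (n + 1)) π) (h₂ : LabelChain (· ≠ n) k π (ncTop (n + 1))) :
    InPosetPF n n π := by
  have hlen : j + k = n := by
    have hj := h₁.card_blockMins
    have hk := h₂.card_blockMins
    rw [card_blockMins_ncBot] at hj
    rw [card_blockMins_ncTop (by omega) le_rfl] at hk
    omega
  obtain ⟨c, ℓ, h0, hend, hπ, hcov⟩ := exists_chain_of_labelChain_append h₁ h₂
  rw [hlen] at hend hcov
  have hcov' := fun i hi => (hcov i hi).1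
  exact ⟨c, ℓ, ⟨h0, hend, hcov', isParkingFunction_of_chain h0 hend hcov',
    fun i => (hcov i i.2).2, fun _ h₁ h₂ => absurd h₁ h₂.not_gt⟩, j, by omega, hπ⟩

end Conditions

/-- A noncrossing partition `π ∈ NC_{n+1}` lies on some maximal chain of `NC_{n+1}` whose
Stanley label sequence omits the value `n` (i.e. `π ∈ Poset(PF_{n,n})`) if and only if
neither (i) `{n, n+1}` is a block of `π`, nor (ii) `{n+1}` is a singleton block of `π`
and `1` and `n` lie in the same block of `π`. -/
theorem mem_posetPF_iff (n : ℕ) (hn : 2 ≤ n) (π : NCPart (n + 1)) :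
    InPosetPF n n π ↔
      (¬(π.1.r n (n + 1) ∧ ∀ x, π.1.r n x → x = n ∨ x = n + 1) ∧
        ¬((∀ x, π.1.r (n + 1) x → x = n + 1) ∧ π.1.r 1 n)) := by
  refine ⟨fun h => ⟨not_lastPairIsBlock_of_inPosetPF h,
    not_lastSingletonOneRelN_of_inPosetPF (by omega) h⟩, fun ⟨hI, hII⟩ => ?_⟩
  obtain ⟨j, hdown⟩ := exists_labelChain_from_ncBot (P := (· ≠ n)) (¬LastPairIsBlock ·)
    (fun _ hσ hne => exists_coverLabel_below hne hσ) π hI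
  obtain ⟨k, hup⟩ := exists_labelChain_to_ncTop (P := (· ≠ n)) (¬LastSingletonOneRelN ·)
    (fun _ hτ hne => exists_coverLabel_above (by omega) hne hτ) π hII
  exact inPosetPF_of_labelChain hdown hup
end

section
/- For every integer n ≥ 2, the number of noncrossing partitions π ∈ NC_{n+1} such that neither {n, n+1} is a block of π, nor ({n+1} is a singleton block of π and 1 and n lie in the same block of π), equals C_{n+1} − 2·C_{n-1}, where C_m is the m-th Catalan number. (This is the number of elements of Poset(PF_{n,n}).) -/
namespace NCAux

attribute [local instance] Classical.propDecidable

variable {m : ℕ}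

lemma rel_refl (π : NCPart m) (a : ℕ) : π.1.r a a := π.1.iseqv.refl a

lemma rel_symm (π : NCPart m) {a b : ℕ} (h : π.1.r a b) : π.1.r b a := π.1.iseqv.symm h

lemma rel_trans (π : NCPart m) {a b c : ℕ} (h : π.1.r a b) (h' : π.1.r b c) : π.1.r a c :=
  π.1.iseqv.trans h h'

lemma rel_bound (π : NCPart m) {a b : ℕ} (h : π.1.r a b) (hne : a ≠ b) :
    1 ≤ a ∧ a ≤ m ∧ 1 ≤ b ∧ b ≤ m := π.2.1 a b h hne

lemma noncross (π : NCPart m) {a b c d : ℕ} (hab : a < b) (hbc : b < c) (hcd : c < d)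
    (hac : π.1.r a c) (hbd : π.1.r b d) : π.1.r a b := π.2.2 a b c d hab hbc hcd hac hbd

/-- Restriction of a noncrossing partition to `[1,j]` (other blocks become singletons). -/
def restrict (π : NCPart m) (j : ℕ) : NCPart j := by
  refine ⟨⟨fun a b => a = b ∨ (π.1.r a b ∧ a ≤ j ∧ b ≤ j), ?_, ?_, ?_⟩, ?_, ?_⟩
  · exact fun a => Or.inl rfl
  · rintro a b (rfl | ⟨h, h1, h2⟩)
    · exact Or.inl rfl
    · exact Or.inr ⟨rel_symm π h, h2, h1⟩
  · rintro a b c (rfl | ⟨h, h1, h2⟩) H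
    · exact H
    · rcases H with rfl | ⟨h', h1', h2'⟩
      · exact Or.inr ⟨h, h1, h2⟩
      · exact Or.inr ⟨rel_trans π h h', h1, h2'⟩
  · rintro a b (rfl | ⟨h, h1, h2⟩) hne
    · exact absurd rfl hne
    · have := rel_bound π h hne
      omega
  · rintro a b c d hab hbc hcd (rfl | ⟨hac, ha, hc⟩) (rfl | ⟨hbd, hb, hd⟩)
    · omega
    · omega
    · omega
    · exact Or.inr ⟨noncross π hab hbc hcd hac hbd, by omega, hb⟩

/-- Restriction of a noncrossing partition to `(j, j+k]`, shifted down to `[1,k]`. -/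
def restrictShift (π : NCPart m) (j k : ℕ) : NCPart k := by
  refine ⟨⟨fun a b => a = b ∨ (π.1.r (a + j) (b + j) ∧ 1 ≤ a ∧ a ≤ k ∧ 1 ≤ b ∧ b ≤ k),
    ?_, ?_, ?_⟩, ?_, ?_⟩
  · exact fun a => Or.inl rfl
  · rintro a b (rfl | ⟨h, h1, h2, h3, h4⟩)
    · exact Or.inl rfl
    · exact Or.inr ⟨rel_symm π h, h3, h4, h1, h2⟩
  · rintro a b c (rfl | ⟨h, h1, h2, h3, h4⟩) H
    · exact H
    · rcases H with rfl | ⟨h', h1', h2', h3', h4'⟩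
      · exact Or.inr ⟨h, h1, h2, h3, h4⟩
      · exact Or.inr ⟨rel_trans π h h', h1, h2, h3', h4'⟩
  · rintro a b (rfl | ⟨h, h1, h2, h3, h4⟩) hne
    · exact absurd rfl hne
    · omega
  · rintro a b c d hab hbc hcd (rfl | ⟨hac, ha1, ha2, hc1, hc2⟩) (rfl | ⟨hbd, hb1, hb2, hd1, hd2⟩)
    · omega
    · omega
    · omega
    · refine Or.inr ⟨noncross π (by omega) (by omega) (by omega) hac hbd, ha1, ha2, hb1, hb2⟩



section Glue

/-- The relation gluing `σ` on `[1,j]`, `τ` shifted to `(j,m)`, and `m` attached to the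
block of `j` in `σ` (a singleton if `j = 0`). -/
def glueRel (j m : ℕ) {k : ℕ} (σ : NCPart j) (τ : NCPart k) : ℕ → ℕ → Prop := fun a b =>
  σ.1.r a b ∨ (j < a ∧ a < m ∧ j < b ∧ b < m ∧ τ.1.r (a - j) (b - j))
  ∨ (a = m ∧ 1 ≤ b ∧ σ.1.r j b) ∨ (b = m ∧ 1 ≤ a ∧ σ.1.r j a)

variable {j k m : ℕ} {σ : NCPart j} {τ : NCPart k}

lemma glueRel_refl (a : ℕ) : glueRel j m σ τ a a := Or.inl (rel_refl σ a)

lemma glueRel_symm {a b : ℕ} (h : glueRel j m σ τ a b) : glueRel j m σ τ b a := by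
  rcases h with h | ⟨h1, h2, h3, h4, h⟩ | ⟨h1, h2, h⟩ | ⟨h1, h2, h⟩
  · exact Or.inl (rel_symm σ h)
  · exact Or.inr (Or.inl ⟨h3, h4, h1, h2, rel_symm τ h⟩)
  · exact Or.inr (Or.inr (Or.inr ⟨h1, h2, h⟩))
  · exact Or.inr (Or.inr (Or.inl ⟨h1, h2, h⟩))

variable (hm : m = j + k + 1)
include hm

lemma glueRel_bound {a b : ℕ} (h : glueRel j m σ τ a b) (hne : a ≠ b) :
    1 ≤ a ∧ a ≤ m ∧ 1 ≤ b ∧ b ≤ m := by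
  rcases h with h | ⟨h1, h2, h3, h4, h⟩ | ⟨h1, h2, h⟩ | ⟨h1, h2, h⟩
  · have := rel_bound σ h hne; omega
  · omega
  · rcases eq_or_ne j b with rfl | hne'
    · omega
    · have := rel_bound σ h hne'; omega
  · rcases eq_or_ne j a with rfl | hne'
    · omega
    · have := rel_bound σ h hne'; omega

lemma glueRel_trans {a b c : ℕ} (H1 : glueRel j m σ τ a b) (H2 : glueRel j m σ τ b c) :
    glueRel j m σ τ a c := by
  rcases eq_or_ne a b with rfl | hab
  · exact H2
  rcases eq_or_ne b c with rfl | hbc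
  · exact H1
  rcases H1 with h1 | ⟨ha1, ha2, hb1, hb2, h1⟩ | ⟨ham, hb0, h1⟩ | ⟨hbm, ha0, h1⟩
  · -- σ-branch for (a,b); bounds
    have hB := rel_bound σ h1 hab
    rcases H2 with h2 | ⟨hb1', hb2', hc1, hc2, h2⟩ | ⟨hbm, hc0, h2⟩ | ⟨hcm, hb0, h2⟩
    · exact Or.inl (rel_trans σ h1 h2)
    · omega
    · omega
    · exact Or.inr (Or.inr (Or.inr ⟨hcm, by omega, rel_trans σ h2 (rel_symm σ h1)⟩))
  · -- τ-branch for (a,b)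
    rcases H2 with h2 | ⟨hb1', hb2', hc1, hc2, h2⟩ | ⟨hbm, hc0, h2⟩ | ⟨hcm, hb0, h2⟩
    · have hB := rel_bound σ h2 hbc; omega
    · exact Or.inr (Or.inl ⟨ha1, ha2, hc1, hc2, rel_trans τ h1 h2⟩)
    · omega
    · rcases eq_or_ne j b with rfl | hne'
      · omega
      · have := rel_bound σ h2 hne'; omega
  · -- a = m, σ j b
    have hbj : b ≤ j := by
      rcases eq_or_ne j b with rfl | hne'
      · omega
      · have := rel_bound σ h1 hne'; omega
    rcases H2 with h2 | ⟨hb1', hb2', hc1, hc2, h2⟩ | ⟨hbm, hc0, h2⟩ | ⟨hcm, hb0, h2⟩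
    · have hB := rel_bound σ h2 hbc
      exact Or.inr (Or.inr (Or.inl ⟨ham, by omega, rel_trans σ h1 h2⟩))
    · omega
    · omega
    · rw [ham, hcm]; exact Or.inl (rel_refl σ m)
  · -- b = m, σ j a
    rcases H2 with h2 | ⟨hb1', hb2', hc1, hc2, h2⟩ | ⟨hbm', hc0, h2⟩ | ⟨hcm, hb0, h2⟩
    · have := rel_bound σ h2 hbc; omega
    · omega
    · -- m = m, σ j c : both a and c in block of j
      rcases eq_or_ne a c with rfl | hac
      · exact Or.inl (rel_refl σ a)
      · exact Or.inl (rel_trans σ (rel_symm σ h1) h2)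
    · omega

lemma glueRel_noncross {a b c d : ℕ} (hab : a < b) (hbc : b < c) (hcd : c < d)
    (hac : glueRel j m σ τ a c) (hbd : glueRel j m σ τ b d) : glueRel j m σ τ a b := by
  have hBbd := glueRel_bound hm hbd (by omega)
  rcases hac with h1 | ⟨ha1, ha2, hc1, hc2, h1⟩ | ⟨ham, hc0, h1⟩ | ⟨hcm, ha0, h1⟩
  · -- σ a c
    have hB := rel_bound σ h1 (by omega)
    rcases hbd with h2 | ⟨hb1', hb2', hd1, hd2, h2⟩ | ⟨hbm, hd0, h2⟩ | ⟨hdm, hb0, h2⟩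
    · exact Or.inl (noncross σ hab hbc hcd h1 h2)
    · omega
    · omega
    · -- d = m, σ j b : b in the block of j
      rcases eq_or_ne c j with rfl | hcj
      · exact Or.inl (rel_trans σ h1 h2)
      · have hcj' : c < j := by omega
        exact Or.inl (noncross σ hab hbc hcj' h1 (rel_symm σ h2))
  · -- τ-branch for (a,c)
    rcases hbd with h2 | ⟨hb1', hb2', hd1, hd2, h2⟩ | ⟨hbm, hd0, h2⟩ | ⟨hdm, hb0, h2⟩
    · have hB := rel_bound σ h2 (by omega); omega
    · refine Or.inr (Or.inl ⟨ha1, ha2, hb1', by omega,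
        noncross τ (by omega) (by omega) (by omega) h1 h2⟩)
    · omega
    · rcases eq_or_ne j b with rfl | hne'
      · omega
      · have := rel_bound σ h2 hne'; omega
  · omega
  · omega

end Glue

def glue (j k m : ℕ) (hm : m = j + k + 1) (σ : NCPart j) (τ : NCPart k) : NCPart m :=
  ⟨⟨glueRel j m σ τ, glueRel_refl, glueRel_symm, glueRel_trans hm⟩,
    fun _ _ h hne => glueRel_bound hm h hne,
    fun _ _ _ _ hab hbc hcd hac hbd => glueRel_noncross hm hab hbc hcd hac hbd⟩

section Decomp

variable {m : ℕ}

/-- The largest element of `[1,m)` in the block of `m`, or `0` if `m`'s block meets no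
smaller element. -/
noncomputable def prevOf (π : NCPart m) : ℕ :=
  Nat.findGreatest (fun x => x < m ∧ π.1.r x m) m

lemma prevOf_def (π : NCPart m) :
    prevOf π = Nat.findGreatest (fun x => x < m ∧ π.1.r x m) m := rfl

lemma prevOf_lt (π : NCPart m) (hm : 0 < m) : prevOf π < m := by
  by_cases h : ∃ x, x < m ∧ π.1.r x m
  · obtain ⟨x, hx⟩ := h
    rw [prevOf_def]
    exact (Nat.findGreatest_spec (P := fun x => x < m ∧ π.1.r x m) (le_of_lt hx.1) hx).1
  · have : prevOf π = 0 := Nat.findGreatest_eq_zero_iff.2 (by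
      intro x _ hxm hP; exact h ⟨x, hP⟩)
    omega

lemma prevOf_spec (π : NCPart m) (h : 1 ≤ prevOf π) : π.1.r (prevOf π) m := by
  have h0 : prevOf π ≠ 0 := by omega
  rw [prevOf_def, Ne, Nat.findGreatest_eq_zero_iff] at h0
  push_neg at h0
  obtain ⟨x, hx0, hxm, hP⟩ := h0
  rw [prevOf_def]
  exact (Nat.findGreatest_spec (P := fun x => x < m ∧ π.1.r x m) hxm hP).2

lemma prevOf_max (π : NCPart m) {x : ℕ} (h : π.1.r x m) (hx : x < m) : x ≤ prevOf π := by
  rw [prevOf_def]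
  exact Nat.le_findGreatest (P := fun x => x < m ∧ π.1.r x m) (le_of_lt hx) ⟨hx, h⟩

lemma prevOf_boundary (π : NCPart m) {x y : ℕ} (hx : x ≤ prevOf π) (hxy : π.1.r x y)
    (h1 : prevOf π < y) (h2 : y < m) : False := by
  set j := prevOf π with hj
  have hxney : x ≠ y := by omega
  have hB := rel_bound π hxy hxney
  have hj1 : 1 ≤ j := by omega
  have hjm : π.1.r j m := prevOf_spec π hj1
  have hym : π.1.r y m := by
    rcases eq_or_ne x j with rfl | hne
    · exact rel_trans π (rel_symm π hxy) hjm
    · have hxj : x < j := by omega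
      have hxjr : π.1.r x j := noncross π hxj (by omega) (by omega) hxy hjm
      exact rel_trans π (rel_trans π (rel_symm π hxy) hxjr) hjm
  exact absurd (prevOf_max π hym h2) (by omega)

/-- Reconstruction: every noncrossing partition is the glue of its two restrictions. -/
theorem glue_decomp (π : NCPart m) (k : ℕ) (hk : m = prevOf π + k + 1) :
    glue (prevOf π) k m hk (restrict π (prevOf π)) (restrictShift π (prevOf π) k) = π := by
  set j := prevOf π with hj
  apply Subtype.ext
  apply Setoid.ext
  intro a b
  show glueRel j m _ _ a b ↔ π.1.r a b
  constructor
  · rintro (h | ⟨ha1, ha2, hb1, hb2, h⟩ | ⟨ham, hb0, h⟩ | ⟨hbm, ha0, h⟩)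
    · rcases h with rfl | ⟨h, _, _⟩
      · exact rel_refl π a
      · exact h
    · rcases h with heq | ⟨h, _, _, _, _⟩
      · have : a = b := by omega
        rw [this]
      · have e1 : a - j + j = a := by omega
        have e2 : b - j + j = b := by omega
        rw [e1, e2] at h; exact h
    · -- a = m, b in block of j
      rcases h with heq | ⟨h, _, hbj⟩
      · -- b = j
        have hj1 : 1 ≤ j := by omega
        rw [ham, ← heq]
        exact rel_symm π (prevOf_spec π hj1)
      · have hj1 : 1 ≤ j := by
          rcases eq_or_ne j b with rfl | hne
          · omega
          · have := rel_bound π h hne; omega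
        have hjm : π.1.r j m := prevOf_spec π hj1
        rw [ham]
        exact rel_trans π (rel_symm π hjm) h
    · rcases h with heq | ⟨h, _, haj⟩
      · have hj1 : 1 ≤ j := by omega
        rw [hbm, ← heq]
        exact prevOf_spec π hj1
      · have hj1 : 1 ≤ j := by
          rcases eq_or_ne j a with rfl | hne
          · omega
          · have := rel_bound π h hne; omega
        have hjm : π.1.r j m := prevOf_spec π hj1
        rw [hbm]
        exact rel_trans π (rel_symm π h) hjm
  · intro h
    rcases eq_or_ne a b with rfl | hne
    · exact Or.inl (Or.inl rfl)
    have hB := rel_bound π h hne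
    have hjltm : j < m := by omega
    rcases eq_or_ne b m with rfl | hbm
    · -- b = m
      have haj : a ≤ j := prevOf_max π h (by omega)
      refine Or.inr (Or.inr (Or.inr ⟨rfl, by omega, ?_⟩))
      rcases eq_or_ne j a with rfl | hne'
      · exact Or.inl rfl
      · have hj1 : 1 ≤ j := by omega
        exact Or.inr ⟨rel_trans π (prevOf_spec π hj1) (rel_symm π h), le_refl j, haj⟩
    rcases eq_or_ne a m with rfl | ham
    · -- a = m
      have hbj : b ≤ j := prevOf_max π (rel_symm π h) (by omega)
      refine Or.inr (Or.inr (Or.inl ⟨rfl, by omega, ?_⟩))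
      rcases eq_or_ne j b with rfl | hne'
      · exact Or.inl rfl
      · have hj1 : 1 ≤ j := by omega
        exact Or.inr ⟨rel_trans π (prevOf_spec π hj1) h, le_refl j, hbj⟩
    -- both < m
    rcases le_or_gt a j with haj | haj <;> rcases le_or_gt b j with hbj | hbj
    · exact Or.inl (Or.inr ⟨h, haj, hbj⟩)
    · exact absurd (prevOf_boundary π haj h hbj (by omega)) (fun x => x)
    · exact absurd (prevOf_boundary π hbj (rel_symm π h) haj (by omega)) (fun x => x)
    · refine Or.inr (Or.inl ⟨haj, by omega, hbj, by omega, Or.inr ?_⟩)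
      have e1 : a - j + j = a := by omega
      have e2 : b - j + j = b := by omega
      rw [e1, e2]
      exact ⟨h, by omega, by omega, by omega, by omega⟩

variable {j k : ℕ} {σ : NCPart j} {τ : NCPart k} (hm : m = j + k + 1)
include hm

lemma restrict_glue : restrict (glue j k m hm σ τ) j = σ := by
  apply Subtype.ext; apply Setoid.ext; intro a b
  show a = b ∨ (glueRel j m σ τ a b ∧ a ≤ j ∧ b ≤ j) ↔ σ.1.r a b
  constructor
  · rintro (rfl | ⟨h, haj, hbj⟩)
    · exact rel_refl σ a
    rcases h with h | ⟨h1, _⟩ | ⟨ham, _⟩ | ⟨hbm, _⟩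
    · exact h
    · omega
    · omega
    · omega
  · intro h
    rcases eq_or_ne a b with rfl | hne
    · exact Or.inl rfl
    · have := rel_bound σ h hne
      exact Or.inr ⟨Or.inl h, by omega, by omega⟩

lemma restrictShift_glue : restrictShift (glue j k m hm σ τ) j k = τ := by
  apply Subtype.ext; apply Setoid.ext; intro a b
  show a = b ∨ (glueRel j m σ τ (a + j) (b + j) ∧ 1 ≤ a ∧ a ≤ k ∧ 1 ≤ b ∧ b ≤ k) ↔ τ.1.r a b
  constructor
  · rintro (rfl | ⟨h, h1, h2, h3, h4⟩)
    · exact rel_refl τ a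
    rcases h with h | ⟨_, _, _, _, h⟩ | ⟨ham, _⟩ | ⟨hbm, _⟩
    · rcases eq_or_ne (a + j) (b + j) with heq | hne
      · have : a = b := by omega
        rw [this]
      · have := rel_bound σ h hne; omega
    · have e1 : a + j - j = a := by omega
      have e2 : b + j - j = b := by omega
      rw [e1, e2] at h; exact h
    · omega
    · omega
  · intro h
    rcases eq_or_ne a b with rfl | hne
    · exact Or.inl rfl
    have hB := rel_bound τ h hne
    refine Or.inr ⟨Or.inr (Or.inl ⟨by omega, by omega, by omega, by omega, ?_⟩),
      by omega, by omega, by omega, by omega⟩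
    have e1 : a + j - j = a := by omega
    have e2 : b + j - j = b := by omega
    rw [e1, e2]; exact h

lemma prevOf_glue : prevOf (glue j k m hm σ τ) = j := by
  have hkey : ∀ x, x < m → (glue j k m hm σ τ).1.r x m → (1 ≤ x ∧ σ.1.r j x) := by
    intro x hxm h
    rcases h with h | ⟨_, _, _, h4, _⟩ | ⟨hxm', _⟩ | ⟨_, hx1, h⟩
    · have := rel_bound σ h (by omega); omega
    · omega
    · omega
    · exact ⟨hx1, h⟩
  rcases Nat.eq_zero_or_pos j with rfl | hj
  · rw [prevOf_def, Nat.findGreatest_eq_zero_iff]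
    intro x hx0 hxm hP
    obtain ⟨hx1, h⟩ := hkey x hP.1 hP.2
    rcases eq_or_ne (0:ℕ) x with rfl | hne
    · omega
    · have := rel_bound σ h hne; omega
  · have hPj : j < m ∧ (glue j k m hm σ τ).1.r j m :=
      ⟨by omega, Or.inr (Or.inr (Or.inr ⟨rfl, by omega, rel_refl σ j⟩))⟩
    rw [prevOf_def]
    set G := Nat.findGreatest (fun x => x < m ∧ (glue j k m hm σ τ).1.r x m) m with hG
    have hle : j ≤ G := Nat.le_findGreatest (by omega) hPj
    have hspec : G < m ∧ (glue j k m hm σ τ).1.r G m :=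
      Nat.findGreatest_spec (P := fun x => x < m ∧ (glue j k m hm σ τ).1.r x m)
        (show j ≤ m by omega) hPj
    obtain ⟨hx1, h⟩ := hkey G hspec.1 hspec.2
    rcases eq_or_ne j G with heq | hne
    · omega
    · have := rel_bound σ h hne
      omega

end Decomp
section Card

lemma rel_trivial_of_big {m : ℕ} (π : NCPart m) {a b : ℕ} (h : m < a ∨ m < b) :
    π.1.r a b ↔ a = b := by
  constructor
  · intro hr
    by_contra hne
    have := rel_bound π hr hne
    omega
  · rintro rfl; exact rel_refl π a

instance ncFinite (m : ℕ) : Finite (NCPart m) := by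
  apply Finite.of_injective
    (fun π : NCPart m => (fun p : Fin (m + 1) × Fin (m + 1) => π.1.r p.1 p.2 : Set _))
  intro π ρ h
  apply Subtype.ext
  apply Setoid.ext
  intro a b
  by_cases hab : a ≤ m ∧ b ≤ m
  · have := Set.ext_iff.1 h (⟨a, by omega⟩, ⟨b, by omega⟩)
    exact this
  · rw [show (π.1.r a b ↔ ρ.1.r a b) = _ from rfl]
    rw [rel_trivial_of_big π (by omega), rel_trivial_of_big ρ (by omega)]

/-- The fiber of `prevOf` over `i` is in bijection with `NCPart i × NCPart (n - i)`. -/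
noncomputable def fiberEquiv (n i : ℕ) (hi : i ≤ n) :
    {π : NCPart (n + 1) // prevOf π = i} ≃ NCPart i × NCPart (n - i) where
  toFun π := (restrict π.1 i, restrictShift π.1 i (n - i))
  invFun x := ⟨glue i (n - i) (n + 1) (by omega) x.1 x.2, prevOf_glue (by omega)⟩
  left_inv := by
    rintro ⟨π, rfl⟩
    apply Subtype.ext
    exact glue_decomp π (n - prevOf π) (by
      have := prevOf_lt π (by omega); omega)
  right_inv := by
    rintro ⟨σ, τ⟩
    simp only
    rw [restrict_glue, restrictShift_glue]
end Card
section Count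

theorem card_nc : ∀ m : ℕ, Nat.card (NCPart m) = catalan m := by
  intro m
  induction m using Nat.strong_induction_on with
  | _ m ih =>
    obtain _ | n := m
    · -- m = 0
      have hu : ∀ π : NCPart 0, π = ncBot 0 := by
        intro π
        apply Subtype.ext
        apply Setoid.ext
        intro a b
        show π.1.r a b ↔ a = b
        constructor
        · intro h
          by_contra hne
          have := rel_bound π h hne; omega
        · rintro rfl; exact rel_refl π a
      haveI : Unique (NCPart 0) := ⟨⟨ncBot 0⟩, hu⟩
      simp [Nat.card_unique, catalan_zero]
    · -- m = n + 1
      classical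
      haveI : Fintype (NCPart (n + 1)) := Fintype.ofFinite _
      rw [Nat.card_eq_fintype_card, catalan_succ]
      have key : ∀ b ∈ Finset.range (n + 1),
          (Finset.univ.filter (fun π : NCPart (n + 1) => prevOf π = b)).card
            = catalan b * catalan (n - b) := by
        intro b hb
        rw [Finset.mem_range] at hb
        have h1 := Nat.card_congr (fiberEquiv n b (by omega))
        rw [Nat.card_prod, ih b (by omega), ih (n - b) (by omega)] at h1
        rw [← Fintype.card_subtype, ← Nat.card_eq_fintype_card, h1]
      have hsum : Finset.univ.card =
          ∑ b ∈ Finset.range (n + 1),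
            (Finset.univ.filter (fun π : NCPart (n + 1) => prevOf π = b)).card :=
        Finset.card_eq_sum_card_fiberwise
          (fun π _ => Finset.mem_range.2 (prevOf_lt π (by omega)))
      rw [← Finset.card_univ] at *
      rw [hsum, Finset.sum_congr rfl key]
      rw [Fin.sum_univ_eq_sum_range (fun i => catalan i * catalan (n - i)) (n + 1)]

end Count
section AB

variable {n : ℕ}

/-- Extension of a partition of `[1,n-1]` by the block `{n, n+1}`. -/
def extA (hn : 2 ≤ n) (σ : NCPart (n - 1)) : NCPart (n + 1) := by
  refine ⟨⟨fun a b => σ.1.r a b ∨ ((a = n ∨ a = n + 1) ∧ (b = n ∨ b = n + 1)), ?_, ?_, ?_⟩,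
    ?_, ?_⟩
  · exact fun a => Or.inl (rel_refl σ a)
  · rintro a b (h | ⟨h1, h2⟩)
    · exact Or.inl (rel_symm σ h)
    · exact Or.inr ⟨h2, h1⟩
  · rintro a b c (h | ⟨h1, h2⟩) (h' | ⟨h1', h2'⟩)
    · exact Or.inl (rel_trans σ h h')
    · rcases eq_or_ne a b with rfl | hne
      · exact Or.inr ⟨h1', h2'⟩
      · have := rel_bound σ h hne; omega
    · rcases eq_or_ne b c with rfl | hne
      · exact Or.inr ⟨h1, h2⟩
      · have := rel_bound σ h' hne; omega
    · exact Or.inr ⟨h1, h2'⟩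
  · rintro a b (h | ⟨h1, h2⟩) hne
    · have := rel_bound σ h hne; omega
    · omega
  · rintro a b c d hab hbc hcd (h1 | ⟨hp1, hp2⟩) (h2 | ⟨hq1, hq2⟩)
    · exact Or.inl (noncross σ hab hbc hcd h1 h2)
    · omega
    · omega
    · omega

lemma extA_mem (hn : 2 ≤ n) (σ : NCPart (n - 1)) :
    (extA hn σ).1.r n (n + 1) ∧ ∀ x, (extA hn σ).1.r n x → x = n ∨ x = n + 1 := by
  constructor
  · exact Or.inr ⟨Or.inl rfl, Or.inr rfl⟩
  · rintro x (h | ⟨h1, h2⟩)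
    · rcases eq_or_ne n x with rfl | hne
      · exact Or.inl rfl
      · have := rel_bound σ h hne; omega
    · exact h2

/-- Partitions with block `{n, n+1}` are in bijection with `NCPart (n-1)`. -/
noncomputable def AEquiv (hn : 2 ≤ n) :
    {π : NCPart (n + 1) //
      π.1.r n (n + 1) ∧ ∀ x, π.1.r n x → x = n ∨ x = n + 1} ≃ NCPart (n - 1) where
  toFun π := restrict π.1 (n - 1)
  invFun σ := ⟨extA hn σ, extA_mem hn σ⟩
  left_inv := by
    rintro ⟨π, h1, h2⟩
    apply Subtype.ext
    apply Subtype.ext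
    apply Setoid.ext
    intro a b
    show (a = b ∨ (π.1.r a b ∧ a ≤ n - 1 ∧ b ≤ n - 1)) ∨ _ ↔ π.1.r a b
    constructor
    · rintro ((rfl | ⟨h, _, _⟩) | ⟨hp1, hp2⟩)
      · exact rel_refl π a
      · exact h
      · rcases hp1 with rfl | rfl <;> rcases hp2 with rfl | rfl
        · exact rel_refl π _
        · exact h1
        · exact rel_symm π h1
        · exact rel_refl π _
    · intro h
      rcases eq_or_ne a b with rfl | hne
      · exact Or.inl (Or.inl rfl)
      have hB := rel_bound π h hne
      rcases eq_or_ne a n with rfl | han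
      · exact Or.inr ⟨Or.inl rfl, h2 b h⟩
      rcases eq_or_ne a (n + 1) with rfl | han'
      · refine Or.inr ⟨Or.inr rfl, h2 b (rel_trans π h1 h)⟩
      rcases eq_or_ne b n with rfl | hbn
      · have := h2 a (rel_symm π h); omega
      rcases eq_or_ne b (n + 1) with rfl | hbn'
      · have := h2 a (rel_trans π h1 (rel_symm π h)); omega
      exact Or.inl (Or.inr ⟨h, by omega, by omega⟩)
  right_inv := by
    intro σ
    apply Subtype.ext
    apply Setoid.ext
    intro a b
    show a = b ∨ ((σ.1.r a b ∨ _) ∧ a ≤ n - 1 ∧ b ≤ n - 1) ↔ σ.1.r a b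
    constructor
    · rintro (rfl | ⟨h | ⟨hp1, hp2⟩, ha, hb⟩)
      · exact rel_refl σ a
      · exact h
      · omega
    · intro h
      rcases eq_or_ne a b with rfl | hne
      · exact Or.inl rfl
      · have := rel_bound σ h hne
        exact Or.inr ⟨Or.inl h, by omega, by omega⟩

set_option maxHeartbeats 1000000 in
/-- Extension of a partition of `[1,n-1]` by adding `n` to the block of `1` and making
`n+1` a singleton. -/
def extB (hn : 2 ≤ n) (σ : NCPart (n - 1)) : NCPart (n + 1) := by
  refine ⟨⟨fun a b => σ.1.r a b ∨ (a = n + 1 ∧ b = n + 1) ∨ (a = n ∧ b = n)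
    ∨ (a = n ∧ b ≤ n - 1 ∧ σ.1.r 1 b) ∨ (b = n ∧ a ≤ n - 1 ∧ σ.1.r 1 a), ?_, ?_, ?_⟩, ?_, ?_⟩
  · exact fun a => Or.inl (rel_refl σ a)
  · rintro a b (h | ⟨h1, h2⟩ | ⟨h1, h2⟩ | ⟨h1, h2, h3⟩ | ⟨h1, h2, h3⟩)
    · exact Or.inl (rel_symm σ h)
    · exact Or.inr (Or.inl ⟨h2, h1⟩)
    · exact Or.inr (Or.inr (Or.inl ⟨h2, h1⟩))
    · exact Or.inr (Or.inr (Or.inr (Or.inr ⟨h1, h2, h3⟩)))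
    · exact Or.inr (Or.inr (Or.inr (Or.inl ⟨h1, h2, h3⟩)))
  · intro a b c H1 H2
    rcases eq_or_ne a b with rfl | hab
    · exact H2
    rcases eq_or_ne b c with rfl | hbc
    · exact H1
    rcases H1 with h | ⟨h1, h2⟩ | ⟨h1, h2⟩ | ⟨h1, h2, h3⟩ | ⟨h1, h2, h3⟩
    · have hB := rel_bound σ h hab
      rcases H2 with h' | ⟨h1', h2'⟩ | ⟨h1', h2'⟩ | ⟨h1', h2', h3'⟩ | ⟨h1', h2', h3'⟩
      · exact Or.inl (rel_trans σ h h')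
      · omega
      · omega
      · omega
      · exact Or.inr (Or.inr (Or.inr (Or.inr
          ⟨h1', by omega, rel_trans σ h3' (rel_symm σ h)⟩)))
    · omega
    · omega
    · -- a = n, σ 1 b
      rcases H2 with h' | ⟨h1', h2'⟩ | ⟨h1', h2'⟩ | ⟨h1', h2', h3'⟩ | ⟨h1', h2', h3'⟩
      · have hB := rel_bound σ h' hbc
        exact Or.inr (Or.inr (Or.inr (Or.inl ⟨h1, by omega, rel_trans σ h3 h'⟩)))
      · omega
      · omega
      · omega
      · exact Or.inr (Or.inr (Or.inl ⟨h1, h1'⟩))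
    · -- b = n, σ 1 a
      rcases H2 with h' | ⟨h1', h2'⟩ | ⟨h1', h2'⟩ | ⟨h1', h2', h3'⟩ | ⟨h1', h2', h3'⟩
      · rcases eq_or_ne b c with rfl | hne
        · omega
        · have := rel_bound σ h' hne; omega
      · omega
      · exact Or.inr (Or.inr (Or.inr (Or.inr ⟨h2', h2, h3⟩)))
      · rcases eq_or_ne a c with rfl | hac
        · exact Or.inl (rel_refl σ a)
        · exact Or.inl (rel_trans σ (rel_symm σ h3) h3')
      · omega
  · rintro a b (h | ⟨h1, h2⟩ | ⟨h1, h2⟩ | ⟨h1, h2, h3⟩ | ⟨h1, h2, h3⟩) hne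
    · have := rel_bound σ h hne; omega
    · omega
    · omega
    · rcases eq_or_ne (1:ℕ) b with rfl | hne'
      · omega
      · have := rel_bound σ h3 hne'; omega
    · rcases eq_or_ne (1:ℕ) a with rfl | hne'
      · omega
      · have := rel_bound σ h3 hne'; omega
  · rintro a b c d hab hbc hcd (h1 | ⟨hp1, hp2⟩ | ⟨hp1, hp2⟩ | ⟨hp1, hp2, hp3⟩ |
      ⟨hp1, hp2, hp3⟩) H2
    · -- σ a c
      have hB := rel_bound σ h1 (by omega)
      rcases H2 with h2 | ⟨hq1, hq2⟩ | ⟨hq1, hq2⟩ | ⟨hq1, hq2, hq3⟩ | ⟨hq1, hq2, hq3⟩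
      · exact Or.inl (noncross σ hab hbc hcd h1 h2)
      · omega
      · omega
      · omega
      · -- d = n, σ 1 b
        rcases eq_or_ne a 1 with rfl | ha1
        · exact Or.inl hq3
        · have h1a : σ.1.r 1 a :=
            noncross σ (by omega) (by omega) (by omega) hq3 h1
          exact Or.inl (rel_trans σ (rel_symm σ h1a) hq3)
    · omega
    · omega
    · omega
    · -- c = n, σ 1 a; then d = n + 1, but n + 1 is a singleton
      have hBbd : 1 ≤ b ∧ b ≤ n + 1 ∧ 1 ≤ d ∧ d ≤ n + 1 := by
        rcases H2 with h2 | ⟨hq1, hq2⟩ | ⟨hq1, hq2⟩ | ⟨hq1, hq2, hq3⟩ | ⟨hq1, hq2, hq3⟩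
        · have := rel_bound σ h2 (by omega); omega
        · omega
        · omega
        · rcases eq_or_ne (1:ℕ) d with rfl | hne'
          · omega
          · have := rel_bound σ hq3 hne'; omega
        · rcases eq_or_ne (1:ℕ) b with rfl | hne'
          · omega
          · have := rel_bound σ hq3 hne'; omega
      have hd : d = n + 1 := by omega
      rcases H2 with h2 | ⟨hq1, hq2⟩ | ⟨hq1, hq2⟩ | ⟨hq1, hq2, hq3⟩ | ⟨hq1, hq2, hq3⟩
      · have := rel_bound σ h2 (by omega); omega
      · omega
      · omega
      · omega
      · omega

lemma extB_mem (hn : 2 ≤ n) (σ : NCPart (n - 1)) :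
    (∀ x, (extB hn σ).1.r (n + 1) x → x = n + 1) ∧ (extB hn σ).1.r 1 n := by
  constructor
  · rintro x (h | ⟨h1, h2⟩ | ⟨h1, h2⟩ | ⟨h1, h2, h3⟩ | ⟨h1, h2, h3⟩)
    · rcases eq_or_ne (n + 1) x with rfl | hne
      · rfl
      · have := rel_bound σ h hne; omega
    · exact h2
    · omega
    · omega
    · omega
  · exact Or.inr (Or.inr (Or.inr (Or.inr ⟨rfl, by omega, rel_refl σ 1⟩)))

/-- Partitions with `n+1` a singleton and `1 ~ n` are in bijection with `NCPart (n-1)`. -/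
noncomputable def BEquiv (hn : 2 ≤ n) :
    {π : NCPart (n + 1) //
      (∀ x, π.1.r (n + 1) x → x = n + 1) ∧ π.1.r 1 n} ≃ NCPart (n - 1) where
  toFun π := restrict π.1 (n - 1)
  invFun σ := ⟨extB hn σ, extB_mem hn σ⟩
  left_inv := by
    rintro ⟨π, h1, h2⟩
    apply Subtype.ext
    apply Subtype.ext
    apply Setoid.ext
    intro a b
    show (a = b ∨ (π.1.r a b ∧ a ≤ n - 1 ∧ b ≤ n - 1)) ∨ _ ↔ π.1.r a b
    constructor
    · rintro ((rfl | ⟨h, _, _⟩) | ⟨rfl, rfl⟩ | ⟨rfl, rfl⟩ | ⟨rfl, hb, h⟩ | ⟨rfl, ha, h⟩)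
      · exact rel_refl π a
      · exact h
      · exact rel_refl π _
      · exact rel_refl π _
      · rcases h with rfl | ⟨h, _, _⟩
        · exact rel_symm π h2
        · exact rel_trans π (rel_symm π h2) h
      · rcases h with rfl | ⟨h, _, _⟩
        · exact h2
        · exact rel_trans π (rel_symm π h) h2
    · intro h
      rcases eq_or_ne a b with rfl | hne
      · exact Or.inl (Or.inl rfl)
      have hB := rel_bound π h hne
      rcases eq_or_ne a (n + 1) with rfl | han'
      · have := h1 b h; omega
      rcases eq_or_ne b (n + 1) with rfl | hbn'
      · have := h1 a (rel_symm π h); omega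
      rcases eq_or_ne a n with rfl | han
      · refine Or.inr (Or.inr (Or.inr (Or.inl ⟨rfl, by omega, ?_⟩)))
        have hb1 : π.1.r 1 b := rel_trans π h2 h
        rcases eq_or_ne (1:ℕ) b with rfl | hne'
        · exact Or.inl rfl
        · exact Or.inr ⟨hb1, by omega, by omega⟩
      rcases eq_or_ne b n with rfl | hbn
      · refine Or.inr (Or.inr (Or.inr (Or.inr ⟨rfl, by omega, ?_⟩)))
        have ha1 : π.1.r 1 a := rel_trans π h2 (rel_symm π h)
        rcases eq_or_ne (1:ℕ) a with rfl | hne'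
        · exact Or.inl rfl
        · exact Or.inr ⟨ha1, by omega, by omega⟩
      exact Or.inl (Or.inr ⟨h, by omega, by omega⟩)
  right_inv := by
    intro σ
    apply Subtype.ext
    apply Setoid.ext
    intro a b
    show a = b ∨ (_ ∧ a ≤ n - 1 ∧ b ≤ n - 1) ↔ σ.1.r a b
    constructor
    · rintro (rfl | ⟨h | ⟨hp1, hp2⟩ | ⟨hp1, hp2⟩ | ⟨hp1, hp2, hp3⟩ | ⟨hp1, hp2, hp3⟩, ha, hb⟩)
      · exact rel_refl σ a
      · exact h
      · omega
      · omega
      · omega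
      · omega
    · intro h
      rcases eq_or_ne a b with rfl | hne
      · exact Or.inl rfl
      · have := rel_bound σ h hne
        exact Or.inr ⟨Or.inl h, by omega, by omega⟩

end AB
end NCAux

/-- The number of noncrossing partitions `π ∈ NC_{n+1}` such that neither `{n, n+1}` is a
block of `π`, nor (`{n+1}` is a singleton block of `π` and `1` and `n` lie in the same
block of `π`), equals `C_{n+1} − 2·C_{n-1}`; this is the number of elements of
`Poset(PF_{n,n})`. -/
theorem card_posetPF (n : ℕ) (hn : 2 ≤ n) :
    Nat.card {π : NCPart (n + 1) //
        ¬(π.1.r n (n + 1) ∧ ∀ x, π.1.r n x → x = n ∨ x = n + 1) ∧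
        ¬((∀ x, π.1.r (n + 1) x → x = n + 1) ∧ π.1.r 1 n)} =
      catalan (n + 1) - 2 * catalan (n - 1) := by
  classical
  haveI : Fintype (NCPart (n + 1)) := Fintype.ofFinite _
  have hdisj : Disjoint
      (fun π : NCPart (n + 1) => π.1.r n (n + 1) ∧ ∀ x, π.1.r n x → x = n ∨ x = n + 1)
      (fun π : NCPart (n + 1) => (∀ x, π.1.r (n + 1) x → x = n + 1) ∧ π.1.r 1 n) := by
    intro R h1 h2 π hπ
    have hp := h1 π hπ
    have hq := h2 π hπ
    have := hq.1 n (NCAux.rel_symm π hp.1)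
    omega
  have hcongr : Nat.card {π : NCPart (n + 1) //
        ¬(π.1.r n (n + 1) ∧ ∀ x, π.1.r n x → x = n ∨ x = n + 1) ∧
        ¬((∀ x, π.1.r (n + 1) x → x = n + 1) ∧ π.1.r 1 n)} =
      Fintype.card {π : NCPart (n + 1) //
        ¬((π.1.r n (n + 1) ∧ ∀ x, π.1.r n x → x = n ∨ x = n + 1) ∨
          ((∀ x, π.1.r (n + 1) x → x = n + 1) ∧ π.1.r 1 n))} := by
    rw [Nat.card_eq_fintype_card]
    exact Fintype.card_congr (Equiv.subtypeEquivRight (fun π => by tauto))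
  rw [hcongr, Fintype.card_subtype_compl,
    Fintype.card_subtype_or_disjoint _ _ hdisj]
  have hA : Fintype.card {π : NCPart (n + 1) //
      π.1.r n (n + 1) ∧ ∀ x, π.1.r n x → x = n ∨ x = n + 1} = catalan (n - 1) := by
    rw [← Nat.card_eq_fintype_card, Nat.card_congr (NCAux.AEquiv hn), NCAux.card_nc]
  have hB : Fintype.card {π : NCPart (n + 1) //
      (∀ x, π.1.r (n + 1) x → x = n + 1) ∧ π.1.r 1 n} = catalan (n - 1) := by
    rw [← Nat.card_eq_fintype_card, Nat.card_congr (NCAux.BEquiv hn), NCAux.card_nc]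
  have htot : Fintype.card (NCPart (n + 1)) = catalan (n + 1) := by
    rw [← Nat.card_eq_fintype_card, NCAux.card_nc]
  rw [hA, hB, htot]
  omega
end

section
/- Let n ≥ 2 and set L_1 = {π ∈ NC_{n+1} : {n, n+1} is a block of π} and L_2 = {π ∈ NC_{n+1} : {n+1} is a singleton block of π and 1 and n lie in the same block of π}, each with the partial order induced from NC_{n+1}. Then L_1 and L_2 are disjoint, the map sending π ∈ NC_{n-1} to π ∪ {{n, n+1}} is an order isomorphism from NC_{n-1} onto L_1, and the map sending π ∈ NC_{n-1} to the partition obtained from π by inserting n into the block containing 1 and adding the singleton block {n+1} is an order isomorphism from NC_{n-1} onto L_2. -/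
namespace NCAux

/-- `≤` on `NCPart` unfolded. -/
lemma ncle {m : ℕ} {σ τ : NCPart m} : σ ≤ τ ↔ ∀ a b, σ.1.r a b → τ.1.r a b :=
  ⟨fun h a b hab => h hab, fun h _ _ hab => h _ _ hab⟩

lemma ncext {m : ℕ} {σ τ : NCPart m} (h : ∀ a b, σ.1.r a b ↔ τ.1.r a b) : σ = τ :=
  Subtype.ext (Setoid.ext h)

/-- Extension of a partition of `[1,n-1]` by the block `{n, n+1}`. -/
def ext1 (n : ℕ) (hn : 2 ≤ n) (π : NCPart (n - 1)) : NCPart (n + 1) :=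
  ⟨⟨fun a b => π.1.r a b ∨ ((a = n ∨ a = n + 1) ∧ (b = n ∨ b = n + 1)),
    ⟨fun a => Or.inl (π.1.iseqv.refl a),
     fun {a b} h => h.elim (fun h => Or.inl (π.1.iseqv.symm h)) (fun h => Or.inr ⟨h.2, h.1⟩),
     fun {a b c} h1 h2 => by
       rcases h1 with h1 | h1
       · rcases h2 with h2 | h2
         · exact Or.inl (π.1.iseqv.trans h1 h2)
         · rcases eq_or_ne a b with rfl | hne
           · exact Or.inr h2
           · exfalso; have := π.2.1 a b h1 hne; omega
       · rcases h2 with h2 | h2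
         · rcases eq_or_ne b c with rfl | hne
           · exact Or.inr h1
           · exfalso; have := π.2.1 b c h2 hne; omega
         · exact Or.inr ⟨h1.1, h2.2⟩⟩⟩,
   fun a b h hne => by
     rcases h with h | h
     · have := π.2.1 a b h hne; omega
     · omega,
   fun a b c d hab hbc hcd hac hbd => by
     rcases hac with hac | hac
     · rcases hbd with hbd | hbd
       · exact Or.inl (π.2.2 a b c d hab hbc hcd hac hbd)
       · rcases eq_or_ne a c with rfl | hne
         · exfalso; omega
         · exfalso; have := π.2.1 a c hac hne; omega
     · rcases hbd with hbd | hbd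
       · rcases eq_or_ne b d with rfl | hne
         · exfalso; omega
         · exfalso; have := π.2.1 b d hbd hne; omega
       · exfalso; omega⟩

/-- Restriction of a partition of `[1,n+1]` to `[1,n-1]`. -/
def res (n : ℕ) (hn : 2 ≤ n) (π : NCPart (n + 1)) : NCPart (n - 1) :=
  ⟨⟨fun a b => π.1.r a b ∧ (a = b ∨ (a ≤ n - 1 ∧ b ≤ n - 1)),
    ⟨fun a => ⟨π.1.iseqv.refl a, Or.inl rfl⟩,
     fun {a b} h => ⟨π.1.iseqv.symm h.1, by have := h.2; omega⟩,
     fun {a b c} h1 h2 => ⟨π.1.iseqv.trans h1.1 h2.1, by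
       have := h1.2; have := h2.2; omega⟩⟩⟩,
   fun a b h hne => by have := π.2.1 a b h.1 hne; have := h.2; omega,
   fun a b c d hab hbc hcd hac hbd =>
     ⟨π.2.2 a b c d hab hbc hcd hac.1 hbd.1, by have := hac.2; omega⟩⟩

/-- The map sending `x = n` to `1` and fixing everything else. -/
def gmap (n x : ℕ) : ℕ := if x = n then 1 else x

/-- Extension of a partition of `[1,n-1]`: insert `n` into the block of `1`,
`n+1` a singleton. -/
def ext2 (n : ℕ) (hn : 2 ≤ n) (π : NCPart (n - 1)) : NCPart (n + 1) :=
  ⟨⟨fun a b => π.1.r (gmap n a) (gmap n b),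
    ⟨fun a => π.1.iseqv.refl _,
     fun h => π.1.iseqv.symm h,
     fun h1 h2 => π.1.iseqv.trans h1 h2⟩⟩,
   fun a b h hne => by
     by_cases ha : a = n
     · by_cases hb : b = n
       · exact absurd (ha.trans hb.symm) hne
       · simp only [gmap, if_pos ha, if_neg hb] at h
         rcases eq_or_ne b 1 with rfl | hb1
         · omega
         · have := π.2.1 1 b h (Ne.symm hb1); omega
     · by_cases hb : b = n
       · simp only [gmap, if_neg ha, if_pos hb] at h
         rcases eq_or_ne a 1 with rfl | ha1
         · omega
         · have := π.2.1 a 1 h ha1; omega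
       · simp only [gmap, if_neg ha, if_neg hb] at h
         have := π.2.1 a b h hne; omega,
   fun a b c d hab hbc hcd hac hbd => by
     by_cases hdn : d = n
     · have ha : a ≠ n := by omega
       have hb : b ≠ n := by omega
       have hc : c ≠ n := by omega
       simp only [gmap, if_neg ha, if_neg hb, if_neg hc, if_pos hdn] at hac hbd ⊢
       have h1b : π.1.r 1 b := π.1.iseqv.symm hbd
       rcases eq_or_ne a 1 with rfl | ha1
       · exact h1b
       · have hbnd := π.2.1 a c hac (by omega)
         have h1a : π.1.r 1 a := π.2.2 1 a b c (by omega) hab hbc h1b hac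
         exact π.1.iseqv.trans (π.1.iseqv.symm h1a) h1b
     · by_cases hcn : c = n
       · have hb : b ≠ n := by omega
         simp only [gmap, if_neg hb, if_neg hdn] at hbd
         exfalso; have := π.2.1 b d hbd (by omega); omega
       · by_cases hbn : b = n
         · simp only [gmap, if_pos hbn, if_neg hdn] at hbd
           exfalso; have := π.2.1 1 d hbd (by omega); omega
         · by_cases han : a = n
           · simp only [gmap, if_pos han, if_neg hcn] at hac
             exfalso; have := π.2.1 1 c hac (by omega); omega
           · simp only [gmap, if_neg han, if_neg hbn, if_neg hcn, if_neg hdn] at hac hbd ⊢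
             exact π.2.2 a b c d hab hbc hcd hac hbd⟩

end NCAux
namespace NCAux

lemma res_ext1 (n : ℕ) (hn : 2 ≤ n) (π : NCPart (n - 1)) :
    res n hn (ext1 n hn π) = π := by
  apply ncext; intro a b
  show ((π.1.r a b ∨ _) ∧ _) ↔ _
  constructor
  · rintro ⟨h1 | h1, h2⟩
    · exact h1
    · rcases h2 with rfl | h2
      · exact π.1.iseqv.refl a
      · exfalso; omega
  · intro h
    refine ⟨Or.inl h, ?_⟩
    rcases eq_or_ne a b with rfl | hne
    · exact Or.inl rfl
    · have := π.2.1 a b h hne; omega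

lemma ext1_res (n : ℕ) (hn : 2 ≤ n) (π : NCPart (n + 1))
    (h1 : π.1.r n (n + 1)) (h2 : ∀ x, π.1.r n x → x = n ∨ x = n + 1) :
    ext1 n hn (res n hn π) = π := by
  apply ncext; intro a b
  show ((π.1.r a b ∧ _) ∨ _) ↔ _
  constructor
  · rintro (h | ⟨ha, hb⟩)
    · exact h.1
    · have hna : π.1.r n a := by
        rcases ha with ha | ha
        · rw [ha]
        · rw [ha]; exact h1
      have hnb : π.1.r n b := by
        rcases hb with hb | hb
        · rw [hb]
        · rw [hb]; exact h1
      exact π.1.iseqv.trans (π.1.iseqv.symm hna) hnb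
  · intro h
    rcases eq_or_ne a b with rfl | hne
    · exact Or.inl ⟨h, Or.inl rfl⟩
    · have hbnd := π.2.1 a b h hne
      by_cases ha : a = n ∨ a = n + 1
      · refine Or.inr ⟨ha, ?_⟩
        have hna : π.1.r n b := by
          rcases ha with ha | ha
          · rw [ha] at h; exact h
          · rw [ha] at h; exact π.1.iseqv.trans h1 h
        exact h2 b hna
      · by_cases hb : b = n ∨ b = n + 1
        · exfalso
          have hnb : π.1.r n a := by
            rcases hb with hb | hb
            · rw [hb] at h; exact π.1.iseqv.symm h
            · rw [hb] at h; exact π.1.iseqv.trans h1 (π.1.iseqv.symm h)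
          rcases h2 a hnb with rfl | rfl <;> simp at ha
        · exact Or.inl ⟨h, Or.inr (by omega)⟩

lemma gmap_rel (n : ℕ) (hn : 2 ≤ n) (π : NCPart (n + 1)) (h1n : π.1.r 1 n) (x : ℕ) :
    π.1.r x (gmap n x) := by
  by_cases hx : x = n
  · subst hx; simp only [gmap, if_pos rfl]; exact π.1.iseqv.symm h1n
  · simp only [gmap, if_neg hx]; exact π.1.iseqv.refl x

lemma res_ext2 (n : ℕ) (hn : 2 ≤ n) (π : NCPart (n - 1)) :
    res n hn (ext2 n hn π) = π := by
  apply ncext; intro a b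
  show (π.1.r (gmap n a) (gmap n b) ∧ _) ↔ _
  constructor
  · rintro ⟨h1, h2⟩
    rcases h2 with rfl | h2
    · exact π.1.iseqv.refl a
    · have ha : a ≠ n := by omega
      have hb : b ≠ n := by omega
      simpa only [gmap, if_neg ha, if_neg hb] using h1
  · intro h
    rcases eq_or_ne a b with rfl | hne
    · exact ⟨π.1.iseqv.refl _, Or.inl rfl⟩
    · have hbnd := π.2.1 a b h hne
      have ha : a ≠ n := by omega
      have hb : b ≠ n := by omega
      exact ⟨by simpa only [gmap, if_neg ha, if_neg hb] using h, Or.inr (by omega)⟩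

lemma ext2_res (n : ℕ) (hn : 2 ≤ n) (π : NCPart (n + 1))
    (hs : ∀ x, π.1.r (n + 1) x → x = n + 1) (h1n : π.1.r 1 n) :
    ext2 n hn (res n hn π) = π := by
  apply ncext; intro a b
  show (π.1.r (gmap n a) (gmap n b) ∧ _) ↔ _
  constructor
  · rintro ⟨h1, _⟩
    exact π.1.iseqv.trans (gmap_rel n hn π h1n a)
      (π.1.iseqv.trans h1 (π.1.iseqv.symm (gmap_rel n hn π h1n b)))
  · intro h
    refine ⟨π.1.iseqv.trans (π.1.iseqv.symm (gmap_rel n hn π h1n a))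
      (π.1.iseqv.trans h (gmap_rel n hn π h1n b)), ?_⟩
    rcases eq_or_ne a b with rfl | hne
    · exact Or.inl rfl
    · have hbnd := π.2.1 a b h hne
      have ha1 : a ≠ n + 1 := by
        intro hc; subst hc; exact hne (hs b h).symm
      have hb1 : b ≠ n + 1 := by
        intro hc; subst hc; exact hne (hs a (π.1.iseqv.symm h))
      refine Or.inr ⟨?_, ?_⟩ <;> unfold gmap <;> split <;> omega

lemma mem1 (n : ℕ) (hn : 2 ≤ n) (π : NCPart (n - 1)) :
    (ext1 n hn π).1.r n (n + 1) ∧ ∀ x, (ext1 n hn π).1.r n x → x = n ∨ x = n + 1 := by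
  constructor
  · exact Or.inr ⟨Or.inl rfl, Or.inr rfl⟩
  · rintro x (h | h)
    · rcases eq_or_ne n x with rfl | hne
      · exact Or.inl rfl
      · exfalso; have := π.2.1 n x h hne; omega
    · exact h.2

lemma mem2 (n : ℕ) (hn : 2 ≤ n) (π : NCPart (n - 1)) :
    (∀ x, (ext2 n hn π).1.r (n + 1) x → x = n + 1) ∧ (ext2 n hn π).1.r 1 n := by
  constructor
  · intro x h
    have hne : (n : ℕ) + 1 ≠ n := by omega
    have h' : π.1.r (gmap n (n + 1)) (gmap n x) := h
    rw [show gmap n (n + 1) = n + 1 by simp [gmap]] at h'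
    rcases eq_or_ne (n + 1) (gmap n x) with he | he
    · unfold gmap at he; split at he <;> omega
    · exfalso; have := π.2.1 (n + 1) (gmap n x) h' he; omega
  · show π.1.r (gmap n 1) (gmap n n)
    have h1 : (1 : ℕ) ≠ n := by omega
    simp only [gmap, if_neg h1, if_pos rfl]
    exact π.1.iseqv.refl 1

end NCAux
/-- Let `L₁ = {π ∈ NC_{n+1} : {n, n+1} is a block of π}` and
`L₂ = {π ∈ NC_{n+1} : {n+1} is a singleton block of π and 1 ∼ n in π}`, with the order
induced from `NC_{n+1}`.  Then `L₁` and `L₂` are disjoint, the map sending `π ∈ NC_{n-1}`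
to `π ∪ {{n, n+1}}` is an order isomorphism onto `L₁`, and the map sending `π ∈ NC_{n-1}`
to the partition obtained by inserting `n` into the block containing `1` and adding the
singleton block `{n+1}` is an order isomorphism onto `L₂`. -/
theorem L1_L2_disjoint_and_isomorphic_to_NC (n : ℕ) (hn : 2 ≤ n)
    (L1 L2 : Set (NCPart (n + 1)))
    (hL1 : L1 = {π | π.1.r n (n + 1) ∧ ∀ x, π.1.r n x → x = n ∨ x = n + 1})
    (hL2 : L2 = {π | (∀ x, π.1.r (n + 1) x → x = n + 1) ∧ π.1.r 1 n}) :
    L1 ∩ L2 = ∅ ∧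
    (∃ e : NCPart (n - 1) ≃o ↥L1, ∀ (π : NCPart (n - 1)) (a b : ℕ),
        ((e π : NCPart (n + 1)).1.r a b ↔
          (π.1.r a b ∨ ((a = n ∨ a = n + 1) ∧ (b = n ∨ b = n + 1))))) ∧
    (∃ e : NCPart (n - 1) ≃o ↥L2, ∀ (π : NCPart (n - 1)) (a b : ℕ),
        ((e π : NCPart (n + 1)).1.r a b ↔
          (π.1.r a b ∨ (a = n ∧ π.1.r 1 b) ∨ (b = n ∧ π.1.r 1 a) ∨ (a = n ∧ b = n)))) := by
  subst hL1; subst hL2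
  refine ⟨?_, ?_, ?_⟩
  · apply Set.eq_empty_iff_forall_notMem.mpr
    rintro π ⟨h1, h2⟩
    have := h2.1 n (π.1.iseqv.symm h1.1)
    omega
  · refine ⟨⟨⟨fun π => ⟨NCAux.ext1 n hn π, NCAux.mem1 n hn π⟩,
        fun σ => NCAux.res n hn σ.1,
        fun π => NCAux.res_ext1 n hn π,
        fun σ => Subtype.ext (NCAux.ext1_res n hn σ.1 σ.2.1 σ.2.2)⟩, ?_⟩,
      fun π a b => Iff.rfl⟩
    intro π ρ
    show NCAux.ext1 n hn π ≤ NCAux.ext1 n hn ρ ↔ π ≤ ρ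
    constructor
    · intro hle
      rw [NCAux.ncle]
      intro a b h
      rcases eq_or_ne a b with rfl | hne
      · exact ρ.1.iseqv.refl a
      · have hbnd := π.2.1 a b h hne
        rcases NCAux.ncle.mp hle a b (Or.inl h) with h' | h'
        · exact h'
        · exfalso; omega
    · intro hle
      rw [NCAux.ncle]
      rintro a b (h | h)
      · exact Or.inl (NCAux.ncle.mp hle a b h)
      · exact Or.inr h
  · refine ⟨⟨⟨fun π => ⟨NCAux.ext2 n hn π, NCAux.mem2 n hn π⟩,
        fun σ => NCAux.res n hn σ.1,
        fun π => NCAux.res_ext2 n hn π,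
        fun σ => Subtype.ext (NCAux.ext2_res n hn σ.1 σ.2.1 σ.2.2)⟩, ?_⟩,
      ?_⟩
    · intro π ρ
      show NCAux.ext2 n hn π ≤ NCAux.ext2 n hn ρ ↔ π ≤ ρ
      constructor
      · intro hle
        rw [NCAux.ncle]
        intro a b h
        rcases eq_or_ne a b with rfl | hne
        · exact ρ.1.iseqv.refl a
        · have hbnd := π.2.1 a b h hne
          have ha : a ≠ n := by omega
          have hb : b ≠ n := by omega
          have h2 : (NCAux.ext2 n hn π).1.r a b := by
            show π.1.r (NCAux.gmap n a) (NCAux.gmap n b)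
            simpa only [NCAux.gmap, if_neg ha, if_neg hb] using h
          have h3 : ρ.1.r (NCAux.gmap n a) (NCAux.gmap n b) :=
            NCAux.ncle.mp hle a b h2
          simpa only [NCAux.gmap, if_neg ha, if_neg hb] using h3
      · intro hle
        rw [NCAux.ncle]
        intro a b h
        exact NCAux.ncle.mp hle _ _ h
    · intro π a b
      have key : ∀ x y : ℕ, π.1.r x y →
          x = y ∨ (1 ≤ x ∧ x ≤ n - 1 ∧ 1 ≤ y ∧ y ≤ n - 1) := by
        intro x y h
        rcases eq_or_ne x y with h' | h'
        · exact Or.inl h'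
        · exact Or.inr (π.2.1 x y h h')
      show π.1.r (NCAux.gmap n a) (NCAux.gmap n b) ↔ _
      by_cases ha : a = n
      · by_cases hb : b = n
        · simp only [NCAux.gmap, if_pos ha, if_pos hb]
          exact ⟨fun _ => Or.inr (Or.inr (Or.inr ⟨ha, hb⟩)), fun _ => π.1.iseqv.refl 1⟩
        · simp only [NCAux.gmap, if_pos ha, if_neg hb]
          constructor
          · intro h; exact Or.inr (Or.inl ⟨ha, h⟩)
          · rintro (h | ⟨_, h⟩ | ⟨hb', _⟩ | ⟨_, hb'⟩)
            · rw [ha] at h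
              rcases key n b h with h' | h'
              · exact absurd h'.symm hb
              · exfalso; omega
            · exact h
            · exact absurd hb' hb
            · exact absurd hb' hb
      · by_cases hb : b = n
        · simp only [NCAux.gmap, if_neg ha, if_pos hb]
          constructor
          · intro h; exact Or.inr (Or.inr (Or.inl ⟨hb, π.1.iseqv.symm h⟩))
          · rintro (h | ⟨ha', _⟩ | ⟨_, h⟩ | ⟨ha', _⟩)
            · rw [hb] at h
              rcases key a n h with h' | h'
              · exact absurd h' ha
              · exfalso; omega
            · exact absurd ha' ha
            · exact π.1.iseqv.symm h
            · exact absurd ha' ha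
        · simp only [NCAux.gmap, if_neg ha, if_neg hb]
          constructor
          · exact Or.inl
          · rintro (h | ⟨ha', _⟩ | ⟨hb', _⟩ | ⟨ha', _⟩)
            · exact h
            · exact absurd ha' ha
            · exact absurd hb' hb
            · exact absurd ha' ha
end

section
/- For all integers n > k ≥ 2, the poset Poset(PF_{n,k}) is order-isomorphic to the direct product of Poset(PF_{n-1,k}) with a two-element chain. -/
/-!
In a maximal chain of `NC_{n+1}` whose label sequence lies in `PF_{n,k}` with `k < n`, the value
`n` occurs among the labels, and a step with label `n` can only merge the singleton `{n + 1}` into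
the block of `n`. So `n + 1` is a singleton below that step and lies in the block of `n` above it.
Deleting `n + 1` from every partition collapses that step and leaves a chain of `NC_n` whose labels
(the old multiset minus one copy of `n`) lie in `PF_{n-1,k}`. Conversely, a chain for `PF_{n-1,k}`
lifts by keeping `n + 1` a singleton up to any chosen step, attaching it to `n` there (label `n`),
and keeping it attached afterwards. Hence `σ ↦ (σ ∖ {n + 1}, [n ~ n + 1 in σ])` is an order
isomorphism `Poset(PF_{n,k}) ≃ Poset(PF_{n-1,k}) × 2`.
-/

namespace NCPart

variable {m : ℕ}

lemma ext {π ρ : NCPart m} (h : ∀ a b, π.1.r a b ↔ ρ.1.r a b) : π = ρ :=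
  Subtype.ext (Setoid.ext h)

lemma rel_refl (π : NCPart m) (a : ℕ) : π.1.r a a := π.1.iseqv.refl a

lemma rel_symm (π : NCPart m) {a b : ℕ} (h : π.1.r a b) : π.1.r b a := π.1.iseqv.symm h

lemma rel_trans (π : NCPart m) {a b c : ℕ} (h : π.1.r a b) (h' : π.1.r b c) : π.1.r a c :=
  π.1.iseqv.trans h h'

lemma le_of_rel (π : NCPart m) {a b : ℕ} (h : π.1.r a b) (hab : a ≠ b) : b ≤ m :=
  (π.2.1 a b h hab).2.2.2

lemma isolated_of_lt (π : NCPart m) (c : ℕ) (hc : m < c) (x : ℕ) (h : π.1.r c x) : x = c := by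
  by_contra hx
  have := π.le_of_rel (π.rel_symm h) hx
  omega

lemma rel_iff_eq_of_isolated (π : NCPart m) {M : ℕ} (hiso : ∀ c, M < c → ∀ x, π.1.r c x → x = c)
    {a b : ℕ} (h : M < a ∨ M < b) : π.1.r a b ↔ a = b := by
  refine ⟨fun hab => ?_, fun hab => hab ▸ π.rel_refl a⟩
  rcases h with h | h
  · exact (hiso a h b hab).symm
  · exact hiso b h a (π.rel_symm hab)

lemma ncBot_rel {a b : ℕ} : (ncBot m).1.r a b ↔ a = b := Iff.rfl

lemma ncTop_rel {a b : ℕ} :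
    (ncTop m).1.r a b ↔ a = b ∨ (1 ≤ a ∧ a ≤ m ∧ 1 ≤ b ∧ b ≤ m) := Iff.rfl

def comap {m' : ℕ} (π : NCPart m) (g : ℕ → ℕ) (hg : Monotone g)
    (hbound : ∀ a b, π.1.r (g a) (g b) → a ≠ b → 1 ≤ a ∧ a ≤ m' ∧ 1 ≤ b ∧ b ≤ m') :
    NCPart m' := by
  refine ⟨π.1.comap g, hbound, fun a b c d hab hbc hcd hac hbd => ?_⟩
  change π.1.r (g a) (g c) at hac
  change π.1.r (g b) (g d) at hbd
  change π.1.r (g a) (g b)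
  rcases (hg hab.le).lt_or_eq with h₁ | h₁
  · rcases (hg hbc.le).lt_or_eq with h₂ | h₂
    · rcases (hg hcd.le).lt_or_eq with h₃ | h₃
      · exact π.2.2 _ _ _ _ h₁ h₂ h₃ hac hbd
      · exact π.rel_trans hac (π.rel_symm (h₃ ▸ hbd))
    · exact h₂ ▸ hac
  · exact h₁ ▸ π.rel_refl _

def eraseLast (π : NCPart (m + 1)) : NCPart m :=
  π.comap (fun x => if x ≤ m then x else x + 1)
    (fun a b hab => by dsimp only; split_ifs <;> omega)
    (fun a b h hab => by
      have hne : (if a ≤ m then a else a + 1) ≠ (if b ≤ m then b else b + 1) := by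
        split_ifs <;> omega
      have := π.2.1 _ _ h hne
      split_ifs at this <;> omega)

def extendSingleton (π : NCPart m) : NCPart (m + 1) :=
  ⟨π.1, fun a b h hab => by have := π.2.1 a b h hab; omega, π.2.2⟩

def extendJoin (π : NCPart (m + 1)) : NCPart (m + 2) :=
  π.comap (fun x => if x = m + 2 then m + 1 else x)
    (fun a b hab => by dsimp only; split_ifs <;> omega)
    (fun a b h hab => by
      by_cases hne : (if a = m + 2 then m + 1 else a) = (if b = m + 2 then m + 1 else b)
      · split_ifs at hne <;> omega
      · have := π.2.1 _ _ h hne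
        split_ifs at this <;> omega)

lemma eraseLast_rel (π : NCPart (m + 1)) (a b : ℕ) :
    (eraseLast π).1.r a b ↔ π.1.r (if a ≤ m then a else a + 1) (if b ≤ m then b else b + 1) :=
  Iff.rfl

lemma extendSingleton_rel (π : NCPart m) (a b : ℕ) :
    (extendSingleton π).1.r a b ↔ π.1.r a b := Iff.rfl

lemma extendJoin_rel (π : NCPart (m + 1)) (a b : ℕ) :
    (extendJoin π).1.r a b ↔
      π.1.r (if a = m + 2 then m + 1 else a) (if b = m + 2 then m + 1 else b) := Iff.rfl

lemma extendJoin_rel_iff (π : NCPart (m + 1)) (a b : ℕ) :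
    (extendJoin π).1.r a b ↔
      π.1.r a b ∨ ((π.1.r (m + 1) a ∨ a = m + 2) ∧ (π.1.r (m + 1) b ∨ b = m + 2)) := by
  have hiso : ∀ x, π.1.r (m + 2) x ↔ m + 2 = x := fun x =>
    π.rel_iff_eq_of_isolated π.isolated_of_lt (by omega)
  rw [extendJoin_rel]
  split_ifs with ha hb hb
  · simp [ha, hb]
  · simp [ha, hiso, hb, Ne.symm hb]
  · simp [hb, Setoid.comm' π.1 (x := a), hiso, ha, Ne.symm ha]
  · constructor
    · exact Or.inl
    · rintro (h | ⟨ha' | ha', hb' | hb'⟩)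
      all_goals first | exact h | omega | exact π.rel_trans (π.rel_symm ha') hb'

lemma eraseLast_ncBot : eraseLast (ncBot (m + 1)) = ncBot m :=
  ext fun a b => by rw [eraseLast_rel, ncBot_rel, ncBot_rel]; split_ifs <;> omega

lemma eraseLast_ncTop : eraseLast (ncTop (m + 1)) = ncTop m :=
  ext fun a b => by rw [eraseLast_rel, ncTop_rel, ncTop_rel]; split_ifs <;> omega

lemma extendSingleton_ncBot : extendSingleton (ncBot m) = ncBot (m + 1) := rfl

lemma extendJoin_ncTop : extendJoin (ncTop (m + 1)) = ncTop (m + 2) :=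
  ext fun a b => by rw [extendJoin_rel, ncTop_rel, ncTop_rel]; split_ifs <;> omega

lemma not_rel_extendSingleton (π : NCPart (m + 1)) :
    ¬ (extendSingleton π).1.r (m + 1) (m + 2) := by
  rw [extendSingleton_rel, π.rel_iff_eq_of_isolated π.isolated_of_lt (by omega)]
  omega

lemma rel_extendJoin (π : NCPart (m + 1)) : (extendJoin π).1.r (m + 1) (m + 2) := by
  rw [extendJoin_rel, if_neg (by omega), if_pos rfl]

lemma rel_comp_iff (π : NCPart m) {M : ℕ} (hiso : ∀ c, M < c → ∀ x, π.1.r c x → x = c)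
    {f : ℕ → ℕ} (hfix : ∀ a ≤ M, π.1.r (f a) a) (hout : ∀ a, M < a → M < f a)
    (hinj : ∀ a b, f a = f b → M < a → a = b) (a b : ℕ) :
    π.1.r (f a) (f b) ↔ π.1.r a b := by
  by_cases h : a ≤ M ∧ b ≤ M
  · exact ⟨fun hr => π.rel_trans (π.rel_symm (hfix a h.1)) (π.rel_trans hr (hfix b h.2)),
      fun hr => π.rel_trans (hfix a h.1) (π.rel_trans hr (π.rel_symm (hfix b h.2)))⟩
  · have hab : M < a ∨ M < b := by omega
    rw [π.rel_iff_eq_of_isolated hiso (hab.imp (hout a) (hout b)),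
      π.rel_iff_eq_of_isolated hiso hab]
    refine ⟨fun e => hab.elim (hinj a b e) fun hb => (hinj b a e.symm hb).symm, congrArg f⟩

lemma eraseLast_extendSingleton (π : NCPart m) : eraseLast (extendSingleton π) = π :=
  ext <| π.rel_comp_iff π.isolated_of_lt (f := fun x => if x ≤ m then x else x + 1)
    (fun a ha => by rw [if_pos ha]) (fun a ha => by rw [if_neg (by omega)]; omega)
    (fun a b e ha => by split_ifs at e <;> omega)

lemma eraseLast_extendJoin (π : NCPart (m + 1)) : eraseLast (extendJoin π) = π :=
  ext <| π.rel_comp_iff π.isolated_of_lt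
    (f := fun x => if (if x ≤ m + 1 then x else x + 1) = m + 2 then m + 1
      else if x ≤ m + 1 then x else x + 1)
    (fun a ha => by simp only [if_pos ha, if_neg (show a ≠ m + 2 by omega)]; exact π.rel_refl a)
    (fun a ha => by split_ifs <;> omega) (fun a b e ha => by split_ifs at e <;> omega)

lemma extendSingleton_eraseLast (π : NCPart (m + 1)) (h : ∀ x, π.1.r (m + 1) x → x = m + 1) :
    extendSingleton (eraseLast π) = π :=
  ext <| π.rel_comp_iff (M := m)
    (fun c hc => if hcm : c = m + 1 then hcm ▸ h else π.isolated_of_lt c (by omega))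
    (f := fun x => if x ≤ m then x else x + 1)
    (fun a ha => by rw [if_pos ha]) (fun a ha => by rw [if_neg (by omega)]; omega)
    (fun a b e ha => by split_ifs at e <;> omega)

lemma extendJoin_eraseLast (π : NCPart (m + 2)) (h : π.1.r (m + 1) (m + 2)) :
    extendJoin (eraseLast π) = π :=
  ext <| π.rel_comp_iff π.isolated_of_lt
    (f := fun x => if (if x = m + 2 then m + 1 else x) ≤ m + 1 then
      (if x = m + 2 then m + 1 else x) else (if x = m + 2 then m + 1 else x) + 1)
    (fun a ha => by
      by_cases ha' : a = m + 2
      · simp only [if_pos ha', le_refl, if_true]; exact ha' ▸ h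
      · simp only [if_neg ha', if_pos (show a ≤ m + 1 by omega)]; exact π.rel_refl a)
    (fun a ha => by split_ifs <;> omega) (fun a b e ha => by split_ifs at e <;> omega)

open Classical in
noncomputable def lastFlag (π : NCPart (m + 2)) : Fin 2 :=
  if π.1.r (m + 1) (m + 2) then 1 else 0

def extend (b : Fin 2) (π : NCPart (m + 1)) : NCPart (m + 2) :=
  if b = 0 then extendSingleton π else extendJoin π

lemma eraseLast_extend (b : Fin 2) (π : NCPart (m + 1)) : eraseLast (extend b π) = π := by
  unfold extend
  split_ifs
  · exact eraseLast_extendSingleton π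
  · exact eraseLast_extendJoin π

lemma lastFlag_extend (b : Fin 2) (π : NCPart (m + 1)) : lastFlag (extend b π) = b := by
  unfold lastFlag extend
  fin_cases b
  · simp [not_rel_extendSingleton]
  · simp [rel_extendJoin]

lemma extend_lastFlag_eraseLast {π : NCPart (m + 2)}
    (h : π.1.r (m + 1) (m + 2) ∨ ∀ x, π.1.r (m + 2) x → x = m + 2) :
    extend (lastFlag π) (eraseLast π) = π := by
  unfold lastFlag extend
  by_cases hπ : π.1.r (m + 1) (m + 2)
  · simp [hπ, extendJoin_eraseLast π hπ]
  · simp [hπ, extendSingleton_eraseLast π (h.resolve_left hπ)]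

lemma lastFlag_le_lastFlag {σ τ : NCPart (m + 2)}
    (h : σ.1.r (m + 1) (m + 2) → τ.1.r (m + 1) (m + 2)) : lastFlag σ ≤ lastFlag τ := by
  unfold lastFlag
  split_ifs <;> simp_all

/-- Pointwise form of `CoverLabel σ τ l`, with `v` any element of the second merged block. -/
def MergesAt (σ τ : NCPart m) (l v : ℕ) : Prop :=
  (∀ a b, τ.1.r a b ↔ σ.1.r a b ∨ ((σ.1.r l a ∨ σ.1.r v a) ∧ (σ.1.r l b ∨ σ.1.r v b))) ∧
    (∀ y, σ.1.r v y → l < y) ∧ ∀ x, σ.1.r l x → (∀ y, σ.1.r v y → x < y) → x ≤ l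

lemma coverLabel_iff {σ τ : NCPart m} {l : ℕ} : CoverLabel σ τ l ↔ ∃ v, MergesAt σ τ l v := by
  constructor
  · rintro ⟨B₁, B₂, ⟨a₁, rfl⟩, ⟨v, rfl⟩, -, hmerge, -, hl, hlt, hmax⟩
    have hB₁ : ∀ x, σ.1.r a₁ x ↔ σ.1.r l x := fun x =>
      ⟨fun h => σ.rel_trans (σ.rel_symm hl) h, fun h => σ.rel_trans hl h⟩
    refine ⟨v, fun a b => ?_, hlt, fun x hx => hmax x ((hB₁ x).2 hx)⟩
    simp only [hmerge, Set.mem_union, Set.mem_ofPred_eq, hB₁]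
  · rintro ⟨v, hmerge, hlt, hmax⟩
    refine ⟨{b | σ.1.r l b}, {b | σ.1.r v b}, ⟨l, rfl⟩, ⟨v, rfl⟩, fun h => ?_, fun a b => ?_,
      ⟨sInf {b | σ.1.r l b}, Nat.sInf_mem ⟨l, σ.rel_refl l⟩, ?_⟩, σ.rel_refl l, hlt, hmax⟩
    · have : l ∈ {b | σ.1.r v b} := h ▸ σ.rel_refl l
      exact lt_irrefl l (hlt l this)
    · simp only [hmerge, Set.mem_union, Set.mem_ofPred_eq]
    · rintro x (hx | hx)
      · exact Nat.sInf_le hx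
      · exact (Nat.sInf_le (σ.rel_refl l)).trans (hlt x hx).le

namespace MergesAt

variable {σ τ : NCPart m} {l v : ℕ}

lemma rel_of_rel (h : MergesAt σ τ l v) {a b : ℕ} (hab : σ.1.r a b) : τ.1.r a b :=
  (h.1 a b).2 (Or.inl hab)

lemma lt (h : MergesAt σ τ l v) : l < v := h.2.1 v (σ.rel_refl v)

lemma rel (h : MergesAt σ τ l v) : τ.1.r l v :=
  (h.1 l v).2 (Or.inr ⟨Or.inl (σ.rel_refl l), Or.inr (σ.rel_refl v)⟩)

lemma le (h : MergesAt σ τ l v) : v ≤ m := τ.le_of_rel h.rel h.lt.ne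

lemma of_rel (h : MergesAt σ τ l v) {v' : ℕ} (hv : σ.1.r v v') : MergesAt σ τ l v' := by
  have e : ∀ x, σ.1.r v x ↔ σ.1.r v' x := fun x =>
    ⟨σ.rel_trans (σ.rel_symm hv), σ.rel_trans hv⟩
  exact ⟨fun a b => by simp only [h.1 a b, e], fun y hy => h.2.1 y ((e y).2 hy),
    fun x hx hxy => h.2.2 x hx fun y hy => hxy y ((e y).1 hy)⟩

lemma extendJoin {σ τ : NCPart (m + 1)} (h : MergesAt σ τ l v) :
    MergesAt (extendJoin σ) (extendJoin τ) l v := by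
  have hv := h.le
  have hlv := h.lt
  have hv' : v ≠ m + 2 := by omega
  have hl' : l ≠ m + 2 := by omega
  refine ⟨fun a b => ?_, fun y hy => ?_, fun x hx hxy => ?_⟩
  · simp only [extendJoin_rel, if_neg hl', if_neg hv']
    exact h.1 _ _
  · rw [extendJoin_rel, if_neg hv'] at hy
    have := h.2.1 _ hy
    split_ifs at this <;> omega
  · rw [extendJoin_rel, if_neg hl'] at hx
    have hx2 : x ≠ m + 2 := by
      have := hxy v (by rw [extendJoin_rel, if_neg hv'])
      omega
    rw [if_neg hx2] at hx
    refine h.2.2 x hx fun y hy => hxy y ?_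
    have hy' : y ≠ m + 2 := fun hy' =>
      hv' (σ.isolated_of_lt (m + 2) (by omega) v (σ.rel_symm (hy' ▸ hy)))
    rwa [extendJoin_rel, if_neg hv', if_neg hy']

lemma eraseLast {σ τ : NCPart (m + 1)} (h : MergesAt σ τ l v) (hv : v ≤ m) :
    MergesAt (eraseLast σ) (eraseLast τ) l v := by
  have hlv := h.lt
  refine ⟨fun a b => ?_, fun y hy => ?_, fun x hx hxy => ?_⟩
  · simp only [eraseLast_rel, if_pos hv, if_pos (show l ≤ m by omega)]
    exact h.1 _ _
  · rw [eraseLast_rel, if_pos hv] at hy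
    have := h.2.1 _ hy
    split_ifs at this <;> omega
  · rw [eraseLast_rel, if_pos (show l ≤ m by omega)] at hx
    have hxm : x ≤ m := by
      by_contra hxm
      rw [if_neg hxm] at hx
      have := σ.isolated_of_lt (x + 1) (by omega) l (σ.rel_symm hx)
      omega
    rw [if_pos hxm] at hx
    refine h.2.2 x hx fun y hy => ?_
    by_cases hym : y ≤ m
    · exact hxy y (by rwa [eraseLast_rel, if_pos hv, if_pos hym])
    · omega

end MergesAt

lemma mergesAt_extendSingleton_extendJoin (π : NCPart (m + 1)) :
    MergesAt (extendSingleton π) (extendJoin π) (m + 1) (m + 2) := by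
  have hiso : ∀ x, π.1.r (m + 2) x ↔ x = m + 2 := fun x =>
    (π.rel_iff_eq_of_isolated π.isolated_of_lt (by omega)).trans eq_comm
  refine ⟨fun a b => ?_, fun y hy => ?_, fun x hx _ => ?_⟩
  · simp only [extendJoin_rel_iff, extendSingleton_rel, hiso]
  · rw [extendSingleton_rel, hiso] at hy
    omega
  · by_contra hxm
    have := π.le_of_rel hx (by omega)
    omega

end NCPart

namespace CoverLabel

open NCPart

variable {m : ℕ} {l : ℕ}

lemma rel_of_rel {σ τ : NCPart m} (h : CoverLabel σ τ l) {a b : ℕ} (hab : σ.1.r a b) :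
    τ.1.r a b :=
  let ⟨_, hv⟩ := coverLabel_iff.1 h
  hv.rel_of_rel hab

lemma extendSingleton {σ τ : NCPart m} (h : CoverLabel σ τ l) :
    CoverLabel (extendSingleton σ) (extendSingleton τ) l := h

lemma extendJoin {σ τ : NCPart (m + 1)} (h : CoverLabel σ τ l) :
    CoverLabel (extendJoin σ) (extendJoin τ) l :=
  let ⟨v, hv⟩ := coverLabel_iff.1 h
  coverLabel_iff.2 ⟨v, hv.extendJoin⟩

/-- Erasing `m + 1` keeps a cover unless the cover is the one attaching `m + 1`. -/
lemma eraseLast {σ τ : NCPart (m + 1)} (h : CoverLabel σ τ l)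
    (hlast : σ.1.r m (m + 1) ∨ ∀ x, τ.1.r (m + 1) x → x = m + 1) :
    CoverLabel (eraseLast σ) (eraseLast τ) l := by
  obtain ⟨v, hv⟩ := coverLabel_iff.1 h
  refine coverLabel_iff.2 ?_
  by_cases hvm : v ≤ m
  · exact ⟨v, hv.eraseLast hvm⟩
  have hv1 : v = m + 1 := by have := hv.le; omega
  subst hv1
  rcases hlast with hlast | hlast
  · exact ⟨m, (hv.of_rel (σ.rel_symm hlast)).eraseLast le_rfl⟩
  · have := hlast l (τ.rel_symm hv.rel)
    have := hv.lt
    omega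

lemma mergesAt_last {σ τ : NCPart (m + 1)} (h : CoverLabel σ τ m) : MergesAt σ τ m (m + 1) := by
  obtain ⟨v, hv⟩ := coverLabel_iff.1 h
  have hv1 : v = m + 1 := by have := hv.le; have := hv.lt; omega
  exact hv1 ▸ hv

lemma isolated_last {σ τ : NCPart (m + 1)} (h : CoverLabel σ τ m) (x : ℕ)
    (hx : σ.1.r (m + 1) x) : x = m + 1 := by
  have := h.mergesAt_last.2.1 x hx
  by_contra hxm
  have := σ.le_of_rel hx (Ne.symm hxm)
  omega

lemma rel_last {σ τ : NCPart (m + 1)} (h : CoverLabel σ τ m) : τ.1.r m (m + 1) :=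
  h.mergesAt_last.rel

lemma eraseLast_eq {σ τ : NCPart (m + 1)} (h : CoverLabel σ τ m) :
    NCPart.eraseLast σ = NCPart.eraseLast τ := by
  refine NCPart.ext fun a b => ?_
  have hne : ∀ x, (if x ≤ m then x else x + 1) ≠ m + 1 := fun x => by split_ifs <;> omega
  rw [eraseLast_rel, eraseLast_rel, h.mergesAt_last.1]
  refine ⟨Or.inl, ?_⟩
  rintro (hab | ⟨ha | ha, hb | hb⟩)
  · exact hab
  · exact σ.rel_trans (σ.rel_symm ha) hb
  all_goals first
    | exact absurd (h.isolated_last _ ha) (hne a)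
    | exact absurd (h.isolated_last _ hb) (hne b)

end CoverLabel

lemma coverLabel_extendSingleton_extendJoin {m : ℕ} (π : NCPart (m + 1)) :
    CoverLabel (NCPart.extendSingleton π) (NCPart.extendJoin π) (m + 1) :=
  NCPart.coverLabel_iff.2 ⟨m + 2, NCPart.mergesAt_extendSingleton_extendJoin π⟩

/-- `IsPFnk` depends only on the multiset of values. -/
def IsPFnkMultiset (n k : ℕ) (s : Multiset ℕ) : Prop :=
  (∀ x ∈ s, 1 ≤ x) ∧ (∀ i < n, i + 1 ≤ s.countP (· ≤ i + 1)) ∧ k ∉ s ∧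
    ∀ j, k < j → j ≤ n → j ∈ s

lemma isPFnk_iff {n k : ℕ} (f : Fin n → ℕ) :
    IsPFnk n k f ↔ IsPFnkMultiset n k (Finset.univ.val.map f) := by
  unfold IsPFnk IsParkingFunction IsPFnkMultiset
  rw [and_assoc]
  refine and_congr ?_ (and_congr ?_ (and_congr ?_ ?_))
  · simp
  · simp only [Fin.forall_iff, Multiset.countP_map]
    rfl
  · simp
  · simp

lemma map_univ_eq_map_range (n : ℕ) (ℓ : ℕ → ℕ) :
    Finset.univ.val.map (fun i : Fin n => ℓ i) = (Multiset.range n).map ℓ := by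
  rw [Fin.univ_val_map, Multiset.range, Multiset.map_coe]
  congr 1
  exact List.ext_getElem (by simp) (by simp)

def insertAt (q x : ℕ) (ℓ : ℕ → ℕ) (i : ℕ) : ℕ :=
  if i < q then ℓ i else if i = q then x else ℓ (i - 1)

def succAbove (t j : ℕ) : ℕ := if j < t then j else j + 1

lemma insertAt_comp_succAbove (t : ℕ) (ℓ : ℕ → ℕ) : insertAt t (ℓ t) (ℓ ∘ succAbove t) = ℓ := by
  funext i
  simp only [insertAt, succAbove, Function.comp]
  split_ifs <;> first | rfl | (congr 1; omega)

lemma map_range_insertAt {q N : ℕ} (hq : q ≤ N) (x : ℕ) (ℓ : ℕ → ℕ) :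
    (Multiset.range (N + 1)).map (insertAt q x ℓ) = x ::ₘ (Multiset.range N).map ℓ := by
  induction N, hq using Nat.le_induction with
  | base =>
    rw [Multiset.range_succ, Multiset.map_cons, insertAt, if_neg (lt_irrefl q), if_pos rfl]
    congr 1
    exact Multiset.map_congr rfl fun i hi => if_pos (Multiset.mem_range.1 hi)
  | succ N hqN ih =>
    rw [Multiset.range_succ, Multiset.map_cons, ih, Multiset.cons_swap, Multiset.range_succ,
      Multiset.map_cons, insertAt, if_neg (by omega), if_neg (by omega), Nat.add_sub_cancel]

lemma isPFnkMultiset_cons_iff {p k : ℕ} {s : Multiset ℕ} (hkp : k ≤ p) (hs : s.card = p) :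
    IsPFnkMultiset (p + 1) k ((p + 1) ::ₘ s) ↔ IsPFnkMultiset p k s := by
  constructor
  · rintro ⟨hpos, hpark, hk, hsurj⟩
    refine ⟨fun x hx => hpos x (Multiset.mem_cons_of_mem hx), fun i hi => ?_,
      fun h => hk (Multiset.mem_cons_of_mem h), fun j hkj hjp => ?_⟩
    · have := hpark i (by omega)
      rwa [Multiset.countP_cons, if_neg (by omega), add_zero] at this
    · rcases Multiset.mem_cons.1 (hsurj j hkj (by omega)) with h | h
      · omega
      · exact h
  · rintro ⟨hpos, hpark, hk, hsurj⟩
    have hle : ∀ x ∈ s, x ≤ p := by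
      rcases Nat.eq_zero_or_pos p with rfl | hp
      · simp [Multiset.card_eq_zero.1 hs]
      · have h := hpark (p - 1) (by omega)
        rw [Nat.sub_add_cancel hp] at h
        exact Multiset.countP_eq_card.1 (le_antisymm (Multiset.countP_le_card _ _) (hs ▸ h))
    refine ⟨Multiset.forall_mem_cons.2 ⟨by omega, hpos⟩, fun i hi => ?_,
      fun h => (Multiset.mem_cons.1 h).elim (by omega) hk, fun j hkj hjp => ?_⟩
    · rw [Multiset.countP_cons]
      by_cases hip : i < p
      · have := hpark i hip
        split_ifs <;> omega
      · rw [Multiset.countP_eq_card.2 fun x hx => (hle x hx).trans (by omega), hs]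
        split_ifs <;> omega
    · by_cases hj : j = p + 1
      · exact hj ▸ Multiset.mem_cons_self _ _
      · exact Multiset.mem_cons_of_mem (hsurj j hkj (by omega))

lemma isPFnk_insertAt_iff {p k q : ℕ} (hkp : k ≤ p) (hq : q ≤ p) (ℓ : ℕ → ℕ) :
    IsPFnk (p + 1) k (fun i : Fin (p + 1) => insertAt q (p + 1) ℓ i) ↔
      IsPFnk p k (fun i : Fin p => ℓ i) := by
  rw [isPFnk_iff, isPFnk_iff, map_univ_eq_map_range, map_univ_eq_map_range,
    map_range_insertAt hq, isPFnkMultiset_cons_iff hkp (by simp)]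

section Chains

open NCPart

lemma rel_mono_of_covers {M N : ℕ} {c : ℕ → NCPart M} {ℓ : ℕ → ℕ}
    (hc : ∀ i < N, CoverLabel (c i) (c (i + 1)) (ℓ i)) {i j : ℕ} (hij : i ≤ j) (hjN : j ≤ N)
    {a b : ℕ} (hab : (c i).1.r a b) : (c j).1.r a b := by
  induction j, hij using Nat.le_induction with
  | base => exact hab
  | succ j _ ih => exact (hc j (by omega)).rel_of_rel (ih (by omega))

namespace IsPFChain

variable {p k t : ℕ}

section Erase

variable {c : ℕ → NCPart (p + 2)} {ℓ : ℕ → ℕ}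

lemma exists_label_eq (hc : IsPFChain (p + 1) k c ℓ) (hkp : k ≤ p) : ∃ t ≤ p, ℓ t = p + 1 := by
  obtain ⟨-, -, -, -, -, hsurj⟩ := hc
  obtain ⟨i, hi⟩ := hsurj (p + 1) (by omega) le_rfl
  exact ⟨i, by omega, hi⟩

lemma coverLabel_merge (hc : IsPFChain (p + 1) k c ℓ) (ht : t ≤ p) (hℓ : ℓ t = p + 1) :
    CoverLabel (c t) (c (t + 1)) (p + 1) :=
  hℓ ▸ hc.2.2.1 t (by omega)

lemma isolated_of_le (hc : IsPFChain (p + 1) k c ℓ) (ht : t ≤ p) (hℓ : ℓ t = p + 1) {i : ℕ}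
    (hi : i ≤ t) (x : ℕ) (hx : (c i).1.r (p + 2) x) : x = p + 2 :=
  (hc.coverLabel_merge ht hℓ).isolated_last x (rel_mono_of_covers hc.2.2.1 hi (by omega) hx)

lemma rel_of_lt (hc : IsPFChain (p + 1) k c ℓ) (ht : t ≤ p) (hℓ : ℓ t = p + 1) {i : ℕ}
    (hti : t < i) (hi : i ≤ p + 1) : (c i).1.r (p + 1) (p + 2) :=
  rel_mono_of_covers hc.2.2.1 hti hi (hc.coverLabel_merge ht hℓ).rel_last

/-- Erasing `p + 2` along the chain collapses the merge step `t` and keeps every other step. -/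
lemma exists_eraseLast (hc : IsPFChain (p + 1) k c ℓ) (hkp : k ≤ p) (ht : t ≤ p)
    (hℓ : ℓ t = p + 1) : ∃ c' ℓ', IsPFChain p k c' ℓ' ∧
      ∀ i ≤ p + 1, eraseLast (c i) = c' (if i ≤ t then i else i - 1) := by
  have hmerge := (hc.coverLabel_merge ht hℓ).eraseLast_eq
  have ⟨hbot, htop, hcov, hpf⟩ := hc
  refine ⟨fun j => eraseLast (c (succAbove t j)), ℓ ∘ succAbove t, ⟨?_, ?_, fun j hj => ?_, ?_⟩,
    fun i hi => ?_⟩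
  · rcases Nat.eq_zero_or_pos t with rfl | ht0
    · simp only [succAbove, lt_irrefl, if_false, zero_add, ← hmerge, hbot, eraseLast_ncBot]
    · simp only [succAbove, if_pos ht0, hbot, eraseLast_ncBot]
  · simp only [succAbove, if_neg (show ¬ p < t by omega), htop, eraseLast_ncTop]
  · simp only [Function.comp_apply, succAbove]
    by_cases h1 : j + 1 < t
    · rw [if_pos (by omega), if_pos h1]
      exact (hcov j (by omega)).eraseLast (Or.inr (hc.isolated_of_le ht hℓ h1.le))
    by_cases h2 : j + 1 = t
    · subst h2
      rw [if_pos (by omega), if_neg h1, ← hmerge]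
      exact (hcov j (by omega)).eraseLast (Or.inr (hc.isolated_of_le ht hℓ le_rfl))
    · rw [if_neg (by omega), if_neg h1]
      exact (hcov (j + 1) (by omega)).eraseLast (Or.inl (hc.rel_of_lt ht hℓ (by omega) (by omega)))
  · have hins := insertAt_comp_succAbove t ℓ
    rw [hℓ] at hins
    rw [← hins] at hpf
    exact (isPFnk_insertAt_iff hkp ht _).1 hpf
  · simp only [succAbove]
    split_ifs with h1 h2 h2
    · rfl
    · rw [show i = t by omega, hmerge]
    · omega
    · rw [Nat.sub_add_cancel (by omega)]

end Erase

section Insert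

variable {c : ℕ → NCPart (p + 1)} {ℓ : ℕ → ℕ} {q : ℕ}

lemma exists_insert (hc : IsPFChain p k c ℓ) (hkp : k ≤ p) (hq : q ≤ p) :
    ∃ c' ℓ', IsPFChain (p + 1) k c' ℓ' ∧ (∀ i ≤ q, c' i = extendSingleton (c i)) ∧
      ∀ i, q ≤ i → c' (i + 1) = extendJoin (c i) := by
  obtain ⟨hbot, htop, hcov, hpf⟩ := hc
  refine ⟨fun i => if i ≤ q then extendSingleton (c i) else extendJoin (c (i - 1)),
    insertAt q (p + 1) ℓ, ⟨?_, ?_, fun i hi => ?_, (isPFnk_insertAt_iff hkp hq ℓ).2 hpf⟩,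
    fun i hi => if_pos hi, fun i hi => ?_⟩
  · simp only [if_pos (Nat.zero_le q), hbot, extendSingleton_ncBot]
  · simp only [if_neg (show ¬ p + 1 ≤ q by omega), Nat.add_sub_cancel, htop, extendJoin_ncTop]
  · simp only [insertAt]
    rcases lt_trichotomy i q with h | rfl | h
    · rw [if_pos h.le, if_pos h, if_pos (show i + 1 ≤ q by omega)]
      exact (hcov i (by omega)).extendSingleton
    · rw [if_pos le_rfl, if_neg (by omega), if_neg (lt_irrefl _), if_pos rfl, Nat.add_sub_cancel]
      exact coverLabel_extendSingleton_extendJoin (c i)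
    · rw [if_neg (by omega), if_neg (by omega), if_neg (by omega), if_neg (by omega),
        Nat.add_sub_cancel]
      have := (hcov (i - 1) (by omega)).extendJoin
      rwa [Nat.sub_add_cancel (by omega)] at this
  · simp only [if_neg (show ¬ i + 1 ≤ q by omega), Nat.add_sub_cancel]

end Insert

end IsPFChain

variable {p k : ℕ}

lemma InPosetPF.eraseLast (hkp : k ≤ p) {π : NCPart (p + 2)} (h : InPosetPF (p + 1) k π) :
    InPosetPF p k (eraseLast π) := by
  obtain ⟨c, ℓ, hc, i, hi, rfl⟩ := h
  obtain ⟨t, ht, hℓ⟩ := hc.exists_label_eq hkp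
  obtain ⟨c', ℓ', hc', heq⟩ := hc.exists_eraseLast hkp ht hℓ
  exact ⟨c', ℓ', hc', _, by split_ifs <;> omega, (heq i hi).symm⟩

lemma InPosetPF.rel_or_isolated (hkp : k ≤ p) {π : NCPart (p + 2)} (h : InPosetPF (p + 1) k π) :
    π.1.r (p + 1) (p + 2) ∨ ∀ x, π.1.r (p + 2) x → x = p + 2 := by
  obtain ⟨c, ℓ, hc, i, hi, rfl⟩ := h
  obtain ⟨t, ht, hℓ⟩ := hc.exists_label_eq hkp
  rcases le_or_gt i t with hit | hit
  · exact Or.inr (hc.isolated_of_le ht hℓ hit)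
  · exact Or.inl (hc.rel_of_lt ht hℓ hit hi)

lemma PFCover.rel_of_rel {n : ℕ} {σ τ : NCPart (n + 1)} (h : PFCover n k σ τ) {a b : ℕ}
    (hab : σ.1.r a b) : τ.1.r a b := by
  obtain ⟨c, ℓ, hc, i, hi, rfl, rfl⟩ := h
  exact (hc.2.2.1 i hi).rel_of_rel hab

lemma PFCover.eraseLast (hkp : k ≤ p) {σ τ : NCPart (p + 2)} (h : PFCover (p + 1) k σ τ) :
    Relation.ReflGen (PFCover p k) (eraseLast σ) (eraseLast τ) := by
  obtain ⟨c, ℓ, hc, i, hi, rfl, rfl⟩ := h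
  obtain ⟨t, ht, hℓ⟩ := hc.exists_label_eq hkp
  by_cases hit : i = t
  · subst hit
    exact (hc.coverLabel_merge ht hℓ).eraseLast_eq ▸ .refl
  obtain ⟨c', ℓ', hc', heq⟩ := hc.exists_eraseLast hkp ht hℓ
  refine .single ⟨c', ℓ', hc', if i ≤ t then i else i - 1, by split_ifs <;> omega,
    (heq i hi.le).symm, ?_⟩
  rw [heq (i + 1) (by omega)]
  congr 1
  split_ifs <;> omega

lemma InPosetPF.extendSingleton (hkp : k ≤ p) {π : NCPart (p + 1)} (h : InPosetPF p k π) :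
    InPosetPF (p + 1) k (extendSingleton π) := by
  obtain ⟨c, ℓ, hc, i, hi, rfl⟩ := h
  obtain ⟨c', ℓ', hc', hsing, -⟩ := hc.exists_insert hkp le_rfl
  exact ⟨c', ℓ', hc', i, by omega, hsing i hi⟩

lemma InPosetPF.extendJoin (hkp : k ≤ p) {π : NCPart (p + 1)} (h : InPosetPF p k π) :
    InPosetPF (p + 1) k (extendJoin π) := by
  obtain ⟨c, ℓ, hc, i, hi, rfl⟩ := h
  obtain ⟨c', ℓ', hc', -, hjoin⟩ := hc.exists_insert hkp (Nat.zero_le p)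
  exact ⟨c', ℓ', hc', i + 1, by omega, hjoin i (Nat.zero_le i)⟩

lemma PFCover.extendSingleton (hkp : k ≤ p) {σ τ : NCPart (p + 1)} (h : PFCover p k σ τ) :
    PFCover (p + 1) k (extendSingleton σ) (extendSingleton τ) := by
  obtain ⟨c, ℓ, hc, i, hi, rfl, rfl⟩ := h
  obtain ⟨c', ℓ', hc', hsing, -⟩ := hc.exists_insert hkp le_rfl
  exact ⟨c', ℓ', hc', i, by omega, hsing i hi.le, hsing (i + 1) hi⟩

lemma PFCover.extendJoin (hkp : k ≤ p) {σ τ : NCPart (p + 1)} (h : PFCover p k σ τ) :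
    PFCover (p + 1) k (extendJoin σ) (extendJoin τ) := by
  obtain ⟨c, ℓ, hc, i, hi, rfl, rfl⟩ := h
  obtain ⟨c', ℓ', hc', -, hjoin⟩ := hc.exists_insert hkp (Nat.zero_le p)
  exact ⟨c', ℓ', hc', i + 1, by omega, hjoin i (Nat.zero_le _), hjoin (i + 1) (Nat.zero_le _)⟩

lemma pfCover_extendSingleton_extendJoin (hkp : k ≤ p) {π : NCPart (p + 1)}
    (h : InPosetPF p k π) : PFCover (p + 1) k (extendSingleton π) (extendJoin π) := by
  obtain ⟨c, ℓ, hc, i, hi, rfl⟩ := h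
  obtain ⟨c', ℓ', hc', hsing, hjoin⟩ := hc.exists_insert hkp hi
  exact ⟨c', ℓ', hc', i, by omega, hsing i le_rfl, hjoin i le_rfl⟩

lemma InPosetPF.extend (hkp : k ≤ p) {π : NCPart (p + 1)} (h : InPosetPF p k π) (b : Fin 2) :
    InPosetPF (p + 1) k (extend b π) := by
  unfold NCPart.extend
  split_ifs
  · exact h.extendSingleton hkp
  · exact h.extendJoin hkp

lemma rel_of_reflTransGen_pfCover {n : ℕ} {σ τ : NCPart (n + 1)}
    (h : Relation.ReflTransGen (PFCover n k) σ τ) {a b : ℕ} (hab : σ.1.r a b) : τ.1.r a b := by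
  induction h with
  | refl => exact hab
  | tail _ hcov ih => exact hcov.rel_of_rel ih

lemma reflTransGen_pfCover_eraseLast (hkp : k ≤ p) {σ τ : NCPart (p + 2)}
    (h : Relation.ReflTransGen (PFCover (p + 1) k) σ τ) :
    Relation.ReflTransGen (PFCover p k) (eraseLast σ) (eraseLast τ) :=
  Relation.ReflTransGen.lift' eraseLast (fun _ _ h => (h.eraseLast hkp).to_reflTransGen) _ _ h

lemma reflTransGen_pfCover_extend (hkp : k ≤ p) {π π' : NCPart (p + 1)}
    (h : Relation.ReflTransGen (PFCover p k) π π') (hπ' : InPosetPF p k π') {b b' : Fin 2}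
    (hb : b ≤ b') : Relation.ReflTransGen (PFCover (p + 1) k) (extend b π) (extend b' π') := by
  have h₀ : Relation.ReflTransGen (PFCover (p + 1) k) (extendSingleton π) (extendSingleton π') :=
    Relation.ReflTransGen.lift _ (fun _ _ h => h.extendSingleton hkp) _ _ h
  have h₁ : Relation.ReflTransGen (PFCover (p + 1) k) (extendJoin π) (extendJoin π') :=
    Relation.ReflTransGen.lift _ (fun _ _ h => h.extendJoin hkp) _ _ h
  fin_cases b <;> fin_cases b'
  · simpa [NCPart.extend] using h₀
  · simpa [NCPart.extend] using h₀.tail (pfCover_extendSingleton_extendJoin hkp hπ')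
  · exact absurd hb (by decide)
  · simpa [NCPart.extend] using h₁

noncomputable def PFPoset.orderIsoProdFinTwo (hkp : k ≤ p) :
    PFPoset (p + 1) k ≃o PFPoset p k × Fin 2 where
  toFun σ := (⟨eraseLast σ.1, σ.2.eraseLast hkp⟩, lastFlag σ.1)
  invFun x := ⟨extend x.2 x.1.1, x.1.2.extend hkp x.2⟩
  left_inv σ := Subtype.ext (extend_lastFlag_eraseLast (σ.2.rel_or_isolated hkp))
  right_inv x := Prod.ext (Subtype.ext (eraseLast_extend _ _)) (lastFlag_extend _ _)
  map_rel_iff' {σ τ} := by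
    change Relation.ReflTransGen (PFCover p k) (eraseLast σ.1) (eraseLast τ.1) ∧
      lastFlag σ.1 ≤ lastFlag τ.1 ↔ Relation.ReflTransGen (PFCover (p + 1) k) σ.1 τ.1
    refine ⟨fun ⟨h, hb⟩ => ?_, fun h =>
      ⟨reflTransGen_pfCover_eraseLast hkp h, lastFlag_le_lastFlag (rel_of_reflTransGen_pfCover h)⟩⟩
    rw [← extend_lastFlag_eraseLast (σ.2.rel_or_isolated hkp),
      ← extend_lastFlag_eraseLast (τ.2.rel_or_isolated hkp)]
    exact reflTransGen_pfCover_extend hkp h (τ.2.eraseLast hkp) hb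

end Chains

theorem posetPF_iso_prod_twoChain_general (n k : ℕ) (hkn : k < n) :
    Nonempty (PFPoset n k ≃o (PFPoset (n - 1) k × Fin 2)) := by
  obtain ⟨p, rfl⟩ : ∃ p, n = p + 1 := ⟨n - 1, by omega⟩
  exact ⟨PFPoset.orderIsoProdFinTwo (by omega)⟩

/-- For all integers `n > k ≥ 2`, the poset `Poset(PF_{n,k})` is order-isomorphic to the
direct product of `Poset(PF_{n-1,k})` with a two-element chain. -/
theorem posetPF_iso_prod_twoChain (n k : ℕ) (h2 : 2 ≤ k) (hkn : k < n) :
    Nonempty (PFPoset n k ≃o (PFPoset (n - 1) k × Fin 2)) :=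
  posetPF_iso_prod_twoChain_general n k hkn
end
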